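/- arXiv:2508.13988 — 6 statements merged into one kernel-verified Lean document; each statement's English description precedes it below -/
import Mathlib

section
/- Every element of a d-complete poset is covered by at most two elements. -/
variable {P : Type*} [PartialOrder P]

/-- A subset `S` of a poset is convex if it contains every element lying
between two of its elements. -/
def IsConvexSet (S : Set P) : Prop :=
  ∀ a ∈ S, ∀ b ∈ S, ∀ x, a ≤ x → x ≤ b → x ∈ S

/-- `S` has the structure of (an order ideal of) `d_k(1)` with side elements `w`, `z`:
`w` and `z` are incomparable, every other element of `S` lies below both or above
both of them, the elements below them (the tail) form a chain of `k - 2` elements,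
and the elements above them (the neck) form a chain. -/
def DkStruct (k : ℕ) (S : Set P) (w z : P) : Prop :=
  3 ≤ k ∧ w ∈ S ∧ z ∈ S ∧ ¬ w ≤ z ∧ ¬ z ≤ w ∧
  (∀ x ∈ S, x = w ∨ x = z ∨ (x ≤ w ∧ x ≤ z) ∨ (w ≤ x ∧ z ≤ x)) ∧
  IsChain (· ≤ ·) {x ∈ S | x ≤ w ∧ x ≤ z} ∧
  IsChain (· ≤ ·) {x ∈ S | w ≤ x ∧ z ≤ x} ∧
  {x ∈ S | x ≤ w ∧ x ≤ z}.ncard = k - 2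

/-- The interval `[a, b]` is a `d_k`-interval (isomorphic to `d_k(1)`)
with side elements `w` and `z`. -/
def IsDkIntervalWith (k : ℕ) (a b w z : P) : Prop :=
  a ≤ b ∧ DkStruct k (Set.Icc a b) w z ∧
    {x ∈ Set.Icc a b | w ≤ x ∧ z ≤ x}.ncard = k - 2

/-- The interval `[a, b]` is a `d_k`-interval. -/
def IsDkInterval (k : ℕ) (a b : P) : Prop := ∃ w z, IsDkIntervalWith k a b w z

/-- The interval `[a, b]` is a `d`-interval. -/
def IsDInterval (a b : P) : Prop := ∃ k, IsDkInterval k a b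

/-- The interval `[a, b]` is a `d`-interval with side elements `w` and `z`. -/
def IsDIntervalWith (a b w z : P) : Prop := ∃ k, IsDkIntervalWith k a b w z

/-- `p` is a neck element of the `d`-interval `[a, b]`. -/
def IsNeckOf (p a b : P) : Prop :=
  ∃ k w z, IsDkIntervalWith k a b w z ∧ p ∈ Set.Icc a b ∧ w ≤ p ∧ z ≤ p

/-- `p` is a tail element of the `d`-interval `[a, b]`. -/
def IsTailOf (p a b : P) : Prop :=
  ∃ k w z, IsDkIntervalWith k a b w z ∧ p ∈ Set.Icc a b ∧ p ≤ w ∧ p ≤ z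

/-- `S` is a `d_k^-`-convex set: a convex subset isomorphic to `d_k(1)` minus
its maximum (so the neck has `k - 3` elements). -/
def IsDkMinusConvex (k : ℕ) (S : Set P) : Prop :=
  IsConvexSet S ∧ ∃ w z, DkStruct k S w z ∧
    {x ∈ S | w ≤ x ∧ z ≤ x}.ncard = k - 3

/-- Proctor's axioms for a d-complete poset:
(1) every `d_k^-`-convex set can be completed above to a `d_k`-interval;
(2) the maximum of any `d`-interval covers no element outside the interval;
(3) no two `d^-`-convex sets differ only in their minimal elements. -/
def IsDComplete (P : Type*) [PartialOrder P] : Prop :=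
  (∀ (k : ℕ) (S : Set P), IsDkMinusConvex k S →
      ∃ z, z ∉ S ∧ ∃ a, IsDkInterval k a z ∧ Set.Icc a z = insert z S) ∧
  (∀ a b : P, IsDInterval a b → ∀ x, x ⋖ b → x ∈ Set.Icc a b) ∧
  (∀ (k k' : ℕ) (S T : Set P), IsDkMinusConvex k S → IsDkMinusConvex k' T →
      ∀ s ∈ S, ∀ t ∈ T, (∀ x ∈ S, s ≤ x) → (∀ x ∈ T, t ≤ x) →
        S \ {s} = T \ {t} → S = T)


section Aux

variable {P : Type*} [PartialOrder P]

/-- A "diamond": `Set.Icc a z = {z, a, u, v}` with `u`, `v` incomparable sides,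
and `[a, z]` is a `d`-interval. -/
def IsDiamond (a u v z : P) : Prop :=
  ¬ u ≤ v ∧ ¬ v ≤ u ∧ a ≤ u ∧ a ≤ v ∧ u ≤ z ∧ v ≤ z ∧
    Set.Icc a z = insert z {a, u, v} ∧ IsDInterval a z

/-- `u`, `v` are incomparable with a common base `a`. -/
def Dd (u v : P) : Prop :=
  ¬ u ≤ v ∧ ¬ v ≤ u ∧ ∃ a, a ≤ u ∧ a ≤ v ∧ Set.Icc a u = {a, u} ∧ Set.Icc a v = {a, v}

def GoodT (b1 b2 b3 : P) : Prop := Dd b1 b2 ∧ Dd b1 b3 ∧ Dd b2 b3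

lemma d3minus {a u v : P} (huv : ¬ u ≤ v) (hvu : ¬ v ≤ u) (hau : a ≤ u) (hav : a ≤ v)
    (hIu : Set.Icc a u = {a, u}) (hIv : Set.Icc a v = {a, v}) :
    IsDkMinusConvex 3 ({a, u, v} : Set P) := by
  have tail_eq : {x ∈ ({a, u, v} : Set P) | x ≤ u ∧ x ≤ v} = {a} := by
    ext x
    simp only [Set.mem_insert_iff, Set.mem_singleton_iff, Set.mem_setOf_eq, Set.mem_sep_iff]
    constructor
    · rintro ⟨(rfl | rfl | rfl), hx1, hx2⟩
      · rfl
      · exact absurd hx2 huv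
      · exact absurd hx1 hvu
    · rintro rfl; exact ⟨Or.inl rfl, hau, hav⟩
  have neck_eq : {x ∈ ({a, u, v} : Set P) | u ≤ x ∧ v ≤ x} = (∅ : Set P) := by
    ext x
    simp only [Set.mem_insert_iff, Set.mem_singleton_iff, Set.mem_sep_iff,
      Set.mem_empty_iff_false, iff_false]
    rintro ⟨(rfl | rfl | rfl), hx1, hx2⟩
    · exact huv (hx1.trans hav)
    · exact hvu hx2
    · exact huv hx1
  refine ⟨?_, u, v, ⟨le_refl 3, by simp, by simp, huv, hvu, ?_, ?_, ?_, ?_⟩, ?_⟩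
  · -- convexity
    rintro s (rfl | rfl | rfl) t (rfl | rfl | rfl) x hsx hxt
    · exact Or.inl (le_antisymm hxt hsx)
    · have hx : x ∈ Set.Icc s t := ⟨hsx, hxt⟩
      rw [hIu] at hx
      rcases hx with rfl | rfl
      · exact Or.inl rfl
      · exact Or.inr (Or.inl rfl)
    · have hx : x ∈ Set.Icc s t := ⟨hsx, hxt⟩
      rw [hIv] at hx
      rcases hx with rfl | rfl
      · exact Or.inl rfl
      · exact Or.inr (Or.inr rfl)
    · exact absurd ((hsx.trans hxt).trans hav) huv
    · exact Or.inr (Or.inl (le_antisymm hxt hsx))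
    · exact absurd (hsx.trans hxt) huv
    · exact absurd ((hsx.trans hxt).trans hau) hvu
    · exact absurd (hsx.trans hxt) hvu
    · exact Or.inr (Or.inr (le_antisymm hxt hsx))
  · rintro x (rfl | rfl | rfl)
    · exact Or.inr (Or.inr (Or.inl ⟨hau, hav⟩))
    · exact Or.inl rfl
    · exact Or.inr (Or.inl rfl)
  · rw [tail_eq]; exact IsChain.singleton
  · rw [neck_eq]; exact IsChain.empty
  · rw [tail_eq]; simp
  · rw [neck_eq]; simp

lemma exists_diamond {P : Type*} [PartialOrder P] {u v : P} (hP : IsDComplete P)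
    (h : Dd u v) : ∃ a z, IsDiamond a u v z := by
  obtain ⟨huv, hvu, a, hau, hav, hIu, hIv⟩ := h
  obtain ⟨z, hzS, a', hint, hIcc⟩ :=
    hP.1 3 ({a, u, v} : Set P) (d3minus huv hvu hau hav hIu hIv)
  have haz : a' ≤ z := by obtain ⟨w, z', h1, _⟩ := hint; exact h1
  have hu_mem : u ∈ Set.Icc a' z := by rw [hIcc]; simp
  have hv_mem : v ∈ Set.Icc a' z := by rw [hIcc]; simp
  have ha'u : a' ≤ u := hu_mem.1
  have ha'v : a' ≤ v := hv_mem.1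
  have ha'_mem : a' ∈ (insert z ({a, u, v} : Set P)) := by
    rw [← hIcc]; exact Set.mem_Icc.mpr ⟨le_refl a', haz⟩
  simp only [Set.mem_insert_iff, Set.mem_singleton_iff] at ha'_mem
  have ha' : a' = a := by
    rcases ha'_mem with h | h | h | h
    · have h1 : u = a' := le_antisymm (h.symm ▸ hu_mem.2) ha'u
      have h2 : v = a' := le_antisymm (h.symm ▸ hv_mem.2) ha'v
      exact absurd (le_of_eq (h1.trans h2.symm)) huv
    · exact h
    · exact absurd (h ▸ ha'v) huv
    · exact absurd (h ▸ ha'u) hvu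
  subst ha'
  exact ⟨a', z, huv, hvu, hau, hav, hu_mem.2, hv_mem.2, hIcc, 3, hint⟩

lemma false_of_le_top {P : Type*} [PartialOrder P] [Fintype P] (hP : IsDComplete P)
    {a u v z x : P} (d : IsDiamond a u v z)
    (hux : ¬ u ≤ x) (hxu : ¬ x ≤ u) (hxv : ¬ x ≤ v) (hxz : x ≤ z) : False := by
  obtain ⟨huv, hvu, hau, hav, huz, hvz, hIcc, hdint⟩ := d
  have hxz' : x < z := lt_of_le_of_ne hxz (fun h => hux (h ▸ huz))
  obtain ⟨e, hxe, hez⟩ := exists_le_covBy_of_lt hxz'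
  have hmem := hP.2.1 a z hdint e hez
  rw [hIcc] at hmem
  simp only [Set.mem_insert_iff, Set.mem_singleton_iff] at hmem
  rcases hmem with rfl | rfl | rfl | rfl
  · exact hez.lt.false
  · exact hxu (hxe.trans hau)
  · exact hxu hxe
  · exact hxv hxe

lemma IsDiamond.Icc_left {P : Type*} [PartialOrder P] {a u v z : P}
    (d : IsDiamond a u v z) : Set.Icc u z = {u, z} := by
  obtain ⟨huv, hvu, hau, hav, huz, hvz, hIcc, _⟩ := d
  ext e
  simp only [Set.mem_insert_iff, Set.mem_singleton_iff, Set.mem_Icc]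
  constructor
  · rintro ⟨hue, hez⟩
    have he : e ∈ (insert z ({a, u, v} : Set P)) := by
      rw [← hIcc]; exact Set.mem_Icc.mpr ⟨hau.trans hue, hez⟩
    simp only [Set.mem_insert_iff, Set.mem_singleton_iff] at he
    rcases he with rfl | rfl | rfl | rfl
    · exact Or.inr rfl
    · exact absurd (hue.trans hav) huv
    · exact Or.inl rfl
    · exact absurd hue huv
  · rintro (rfl | rfl)
    · exact ⟨le_refl _, huz⟩
    · exact ⟨huz, le_refl _⟩

lemma IsDiamond.swap {P : Type*} [PartialOrder P] {a u v z : P}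
    (d : IsDiamond a u v z) : IsDiamond a v u z := by
  obtain ⟨huv, hvu, hau, hav, huz, hvz, hIcc, hdint⟩ := d
  refine ⟨hvu, huv, hav, hau, hvz, huz, ?_, hdint⟩
  rw [hIcc]; ext x
  simp only [Set.mem_insert_iff, Set.mem_singleton_iff]
  tauto

lemma step_lemma {P : Type*} [PartialOrder P] [Fintype P] (hP : IsDComplete P)
    {b1 b2 b3 : P} (h : GoodT b1 b2 b3) :
    ∃ c1 c2 c3, GoodT c1 c2 c3 ∧ b1 < c1 := by
  obtain ⟨h12, h13, h23⟩ := h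
  obtain ⟨a12, c1, d12⟩ := exists_diamond hP h12
  obtain ⟨a13, c2, d13⟩ := exists_diamond hP h13
  obtain ⟨a23, c3, d23⟩ := exists_diamond hP h23
  have hb1c1 : b1 ≤ c1 := d12.2.2.2.2.1
  have hb2c1 : b2 ≤ c1 := d12.2.2.2.2.2.1
  have hb1c2 : b1 ≤ c2 := d13.2.2.2.2.1
  have hb3c2 : b3 ≤ c2 := d13.2.2.2.2.2.1
  have hb2c3 : b2 ≤ c3 := d23.2.2.2.2.1
  have hb3c3 : b3 ≤ c3 := d23.2.2.2.2.2.1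
  have n12 : ¬ b1 ≤ b2 := h12.1
  have n21 : ¬ b2 ≤ b1 := h12.2.1
  have n13 : ¬ b1 ≤ b3 := h13.1
  have n31 : ¬ b3 ≤ b1 := h13.2.1
  have n23 : ¬ b2 ≤ b3 := h23.1
  have n32 : ¬ b3 ≤ b2 := h23.2.1
  have hc12 : ¬ c1 ≤ c2 := fun hh =>
    false_of_le_top hP d13 n12 n21 n23 (hb2c1.trans hh)
  have hc21 : ¬ c2 ≤ c1 := fun hh =>
    false_of_le_top hP d12 n13 n31 n32 (hb3c2.trans hh)
  have hc13 : ¬ c1 ≤ c3 := fun hh =>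
    false_of_le_top hP d23 n21 n12 n13 (hb1c1.trans hh)
  have hc31 : ¬ c3 ≤ c1 := fun hh =>
    false_of_le_top hP d12 n13 n31 n32 (hb3c3.trans hh)
  have hc23 : ¬ c2 ≤ c3 := fun hh =>
    false_of_le_top hP d23 n21 n12 n13 (hb1c2.trans hh)
  have hc32 : ¬ c3 ≤ c2 := fun hh =>
    false_of_le_top hP d13 n12 n21 n23 (hb2c3.trans hh)
  exact ⟨c1, c2, c3, ⟨⟨hc12, hc21, b1, hb1c1, hb1c2, d12.Icc_left, d13.Icc_left⟩,
    ⟨hc13, hc31, b2, hb2c1, hb2c3, d12.swap.Icc_left, d23.Icc_left⟩,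
    ⟨hc23, hc32, b3, hb3c2, hb3c3, d13.swap.Icc_left, d23.swap.Icc_left⟩⟩,
    lt_of_le_of_ne hb1c1 (fun hh => n21 (hh ▸ hb2c1))⟩

end Aux

/-- Every element of a d-complete poset is covered by at most two elements. -/

theorem covered_by_at_most_two {P : Type*} [PartialOrder P] [Fintype P]
    (hP : IsDComplete P) (p : P) : {q : P | p ⋖ q}.ncard ≤ 2 := by
  by_contra hlt
  push_neg at hlt
  have hfin : ({q : P | p ⋖ q}).Finite := Set.toFinite _
  obtain ⟨q1, hq1, q2, hq2, q3, hq3, h12, h13, h23⟩ := (Set.two_lt_ncard hfin).mp hlt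
  rw [Set.mem_setOf_eq] at hq1 hq2 hq3
  have covIcc : ∀ q : P, p ⋖ q → Set.Icc p q = {p, q} := by
    intro q hq; ext e
    simp only [Set.mem_Icc, Set.mem_insert_iff, Set.mem_singleton_iff]
    constructor
    · rintro ⟨he1, he2⟩; exact hq.eq_or_eq he1 he2
    · rintro (rfl | rfl)
      · exact ⟨le_refl _, hq.le⟩
      · exact ⟨hq.le, le_refl _⟩
  have incomp : ∀ q q' : P, p ⋖ q → p ⋖ q' → q ≠ q' → ¬ q ≤ q' := by
    intro q q' hq hq' hne hle
    rcases hq'.eq_or_eq hq.le hle with h | h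
    · exact hq.lt.ne' h
    · exact hne h
  have good : GoodT q1 q2 q3 :=
    ⟨⟨incomp _ _ hq1 hq2 h12, incomp _ _ hq2 hq1 (Ne.symm h12), p, hq1.le, hq2.le,
        covIcc _ hq1, covIcc _ hq2⟩,
      ⟨incomp _ _ hq1 hq3 h13, incomp _ _ hq3 hq1 (Ne.symm h13), p, hq1.le, hq3.le,
        covIcc _ hq1, covIcc _ hq3⟩,
      ⟨incomp _ _ hq2 hq3 h23, incomp _ _ hq3 hq2 (Ne.symm h23), p, hq2.le, hq3.le,
        covIcc _ hq2, covIcc _ hq3⟩⟩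
  have key : ∀ t : {t : P × P × P // GoodT t.1 t.2.1 t.2.2},
      ∃ t' : {t : P × P × P // GoodT t.1 t.2.1 t.2.2}, t.1.1 < t'.1.1 := by
    rintro ⟨⟨b1, b2, b3⟩, hg⟩
    obtain ⟨c1, c2, c3, hg', hlt'⟩ := step_lemma hP hg
    exact ⟨⟨(c1, c2, c3), hg'⟩, hlt'⟩
  choose g hg using key
  have hmono : StrictMono (fun n => ((g^[n] ⟨(q1, q2, q3), good⟩ :
      {t : P × P × P // GoodT t.1 t.2.1 t.2.2})).1.1) := by
    apply strictMono_nat_of_lt_succ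
    intro n
    have hit : g^[n + 1] (⟨(q1, q2, q3), good⟩ : {t : P × P × P // GoodT t.1 t.2.1 t.2.2}) =
        g (g^[n] ⟨(q1, q2, q3), good⟩) := Function.iterate_succ_apply' g n _
    simp only [hit]
    exact hg _
  have : Infinite P := Infinite.of_injective _ hmono.injective
  exact not_finite P
end

section
/- A d-complete poset cannot contain six elements p₁,p₂,p₃,q₁,q₂,q₃ such that for each i ∈ {1,2,3}, the set {pᵢ, q_{i+1}, q_{i+2}} (indices mod 3) is d₃^- -convex, i.e., convex with pᵢ covered by both q_{i+1} and q_{i+2} and q_{i+1}, q_{i+2} incomparable. -/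
variable {P : Type*} [PartialOrder P]

section Aux

variable {P : Type*} [PartialOrder P]

private lemma aux_convex {b w z : P} (h1 : b ⋖ w) (h2 : b ⋖ z)
    (h3 : ¬ w ≤ z) (h4 : ¬ z ≤ w) : IsConvexSet ({b, w, z} : Set P) := by
  intro a ha c hc x hax hxc
  simp only [Set.mem_insert_iff, Set.mem_singleton_iff] at ha hc ⊢
  rcases ha with rfl | rfl | rfl <;> rcases hc with rfl | rfl | rfl
  · exact Or.inl (le_antisymm hxc hax)
  · rcases h1.eq_or_eq hax hxc with rfl | rfl
    · exact Or.inl rfl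
    · exact Or.inr (Or.inl rfl)
  · rcases h2.eq_or_eq hax hxc with rfl | rfl
    · exact Or.inl rfl
    · exact Or.inr (Or.inr rfl)
  · exact absurd (hax.trans hxc) h1.lt.not_ge
  · exact Or.inr (Or.inl (le_antisymm hxc hax))
  · exact absurd (hax.trans hxc) h3
  · exact absurd (hax.trans hxc) h2.lt.not_ge
  · exact absurd (hax.trans hxc) h4
  · exact Or.inr (Or.inr (le_antisymm hxc hax))

private lemma aux_d3minus {b w z : P} (hconv : IsConvexSet ({b, w, z} : Set P))
    (h1 : b ⋖ w) (h2 : b ⋖ z) (h3 : ¬ w ≤ z) (h4 : ¬ z ≤ w) :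
    IsDkMinusConvex 3 ({b, w, z} : Set P) := by
  have htail : {x ∈ ({b, w, z} : Set P) | x ≤ w ∧ x ≤ z} = {b} := by
    ext x
    simp only [Set.mem_setOf_eq, Set.mem_insert_iff, Set.mem_singleton_iff]
    constructor
    · rintro ⟨rfl | rfl | rfl, hxw, hxz⟩
      · rfl
      · exact absurd hxz h3
      · exact absurd hxw h4
    · rintro rfl
      exact ⟨Or.inl rfl, h1.le, h2.le⟩
  have hneck : {x ∈ ({b, w, z} : Set P) | w ≤ x ∧ z ≤ x} = ∅ := by
    ext x
    simp only [Set.mem_setOf_eq, Set.mem_insert_iff, Set.mem_singleton_iff,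
      Set.mem_empty_iff_false, iff_false, not_and]
    rintro (rfl | rfl | rfl) hw hz
    · exact absurd hw h1.lt.not_ge
    · exact h4 hz
    · exact h3 hw
  refine ⟨hconv, w, z, ⟨le_refl 3, by simp, by simp, h3, h4, ?_, ?_, ?_, ?_⟩, ?_⟩
  · intro x hx
    simp only [Set.mem_insert_iff, Set.mem_singleton_iff] at hx
    rcases hx with rfl | rfl | rfl
    · exact Or.inr (Or.inr (Or.inl ⟨h1.le, h2.le⟩))
    · exact Or.inl rfl
    · exact Or.inr (Or.inl rfl)
  · rw [htail]; exact Set.Subsingleton.isChain (Set.subsingleton_singleton)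
  · rw [hneck]; exact Set.Subsingleton.isChain (Set.subsingleton_empty)
  · rw [htail]; simp
  · rw [hneck]; simp

private lemma aux_complete (hP : IsDComplete P) {b w z : P}
    (hconv : IsConvexSet ({b, w, z} : Set P))
    (h1 : b ⋖ w) (h2 : b ⋖ z) (h3 : ¬ w ≤ z) (h4 : ¬ z ≤ w) :
    ∃ t, w ⋖ t ∧ z ⋖ t ∧ ∀ x, x ⋖ t → x = w ∨ x = z := by
  obtain ⟨t, htS, a, hint, hIcc⟩ := hP.1 3 _ (aux_d3minus hconv h1 h2 h3 h4)
  obtain ⟨w', z', hwz'⟩ := hint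
  have hat : a ≤ t := hwz'.1
  have hbmem : b ∈ Set.Icc a t := by
    rw [hIcc]; exact Set.mem_insert_of_mem _ (by simp)
  have hab : a ≤ b := hbmem.1
  have hbt : b ≤ t := hbmem.2
  have hamem : a ∈ Set.Icc a t := ⟨le_rfl, hat⟩
  rw [hIcc] at hamem
  simp only [Set.mem_insert_iff, Set.mem_singleton_iff] at hamem
  have hab' : a = b := by
    rcases hamem with rfl | rfl | rfl | rfl
    · exact absurd (le_antisymm hbt hab) (fun h => htS (h ▸ (by simp)))
    · rfl
    · exact absurd hab h1.lt.not_ge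
    · exact absurd hab h2.lt.not_ge
  rw [hab'] at hIcc hwz'
  have hwmem : w ∈ Set.Icc b t := by rw [hIcc]; simp
  have hzmem : z ∈ Set.Icc b t := by rw [hIcc]; simp
  have hwne : w ≠ t := by rintro rfl; exact htS (by simp)
  have hzne : z ≠ t := by rintro rfl; exact htS (by simp)
  have hwt : w < t := lt_of_le_of_ne hwmem.2 hwne
  have hzt : z < t := lt_of_le_of_ne hzmem.2 hzne
  have hcw : w ⋖ t := by
    refine ⟨hwt, fun c hc1 hc2 => ?_⟩
    have hcmem : c ∈ Set.Icc b t := ⟨(h1.lt.trans hc1).le, hc2.le⟩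
    rw [hIcc] at hcmem
    simp only [Set.mem_insert_iff, Set.mem_singleton_iff] at hcmem
    rcases hcmem with rfl | rfl | rfl | rfl
    · exact lt_irrefl _ hc2
    · exact lt_asymm h1.lt hc1
    · exact lt_irrefl _ hc1
    · exact h3 hc1.le
  have hcz : z ⋖ t := by
    refine ⟨hzt, fun c hc1 hc2 => ?_⟩
    have hcmem : c ∈ Set.Icc b t := ⟨(h2.lt.trans hc1).le, hc2.le⟩
    rw [hIcc] at hcmem
    simp only [Set.mem_insert_iff, Set.mem_singleton_iff] at hcmem
    rcases hcmem with rfl | rfl | rfl | rfl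
    · exact lt_irrefl _ hc2
    · exact lt_asymm h2.lt hc1
    · exact h4 hc1.le
    · exact lt_irrefl _ hc1
  refine ⟨t, hcw, hcz, fun x hx => ?_⟩
  have hxmem : x ∈ Set.Icc b t := hP.2.1 b t ⟨3, w', z', hwz'⟩ x hx
  rw [hIcc] at hxmem
  simp only [Set.mem_insert_iff, Set.mem_singleton_iff] at hxmem
  rcases hxmem with rfl | rfl | rfl | rfl
  · exact absurd rfl hx.lt.ne
  · exact absurd hwt (hx.2 h1.lt)
  · exact Or.inl rfl
  · exact Or.inr rfl

/-- The hexagon configuration. -/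
private def Hex (p q : Fin 3 → P) : Prop :=
  ∀ i : Fin 3, IsConvexSet {p i, q (i + 1), q (i + 2)} ∧
    p i ⋖ q (i + 1) ∧ p i ⋖ q (i + 2) ∧
    ¬ q (i + 1) ≤ q (i + 2) ∧ ¬ q (i + 2) ≤ q (i + 1)

private lemma fin3_ne1 : ∀ i : Fin 3, i ≠ i + 1 := by decide

private lemma fin3_ne2 : ∀ i : Fin 3, i ≠ i + 2 := by decide

private lemma fin3_ne12 : ∀ i : Fin 3, i + 1 ≠ i + 2 := by decide

private lemma fin3_ne21 : ∀ i : Fin 3, i + 2 ≠ i + 1 := by decide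

private lemma fin3_exists_third : ∀ i j : Fin 3, i ≠ j → ∃ k, k ≠ i ∧ k ≠ j := by decide

private lemma fin3_cases : ∀ i j : Fin 3, i ≠ j → i = j + 1 ∨ i = j + 2 := by decide

private lemma fin3_third : ∀ i j : Fin 3, i ≠ j →
    ∃ k : Fin 3, (i = k + 1 ∧ j = k + 2) ∨ (i = k + 2 ∧ j = k + 1) := by decide

private lemma hex_cov {p q : Fin 3 → P} (H : Hex p q) :
    ∀ i j : Fin 3, i ≠ j → p j ⋖ q i := by
  intro i j hij
  rcases fin3_cases i j hij with rfl | rfl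
  · exact (H j).2.1
  · exact (H j).2.2.1

private lemma hex_nle {p q : Fin 3 → P} (H : Hex p q) :
    ∀ i j : Fin 3, i ≠ j → ¬ q i ≤ q j := by
  intro i j hij
  obtain ⟨k, ⟨rfl, rfl⟩ | ⟨rfl, rfl⟩⟩ := fin3_third i j hij
  · exact (H k).2.2.2.1
  · exact (H k).2.2.2.2

private lemma hex_qne {p q : Fin 3 → P} (H : Hex p q) :
    ∀ i j : Fin 3, i ≠ j → q i ≠ q j := fun i j hij h =>
  hex_nle H i j hij (h ▸ le_refl _)

private lemma hex_step (hP : IsDComplete P) {p q : Fin 3 → P} (H : Hex p q) :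
    ∃ t : Fin 3 → P, Hex q t := by
  choose t h1 h2 h3 using fun i : Fin 3 =>
    aux_complete hP (H i).1 (H i).2.1 (H i).2.2.1 (H i).2.2.2.1 (H i).2.2.2.2
  have hqt : ∀ i j : Fin 3, j ≠ i → q j ⋖ t i := by
    intro i j hji
    rcases fin3_cases j i hji with rfl | rfl
    · exact h1 i
    · exact h2 i
  have htinc : ∀ i j : Fin 3, i ≠ j → ¬ t i ≤ t j := by
    intro i j hij hle
    rcases eq_or_lt_of_le hle with heq | hlt
    · have hqi : q i ⋖ t i := heq ▸ hqt j i hij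
      rcases h3 i (q i) hqi with h | h
      · exact hex_qne H i (i + 1) (fin3_ne1 i) h
      · exact hex_qne H i (i + 2) (fin3_ne2 i) h
    · obtain ⟨k, hki, hkj⟩ := fin3_exists_third i j hij
      exact (hqt j k hkj).2 ((hqt i k hki).lt) hlt
  refine ⟨t, fun i => ?_⟩
  have hc1 : q i ⋖ t (i + 1) := hqt (i + 1) i (fin3_ne1 i)
  have hc2 : q i ⋖ t (i + 2) := hqt (i + 2) i (fin3_ne2 i)
  have hi1 : ¬ t (i + 1) ≤ t (i + 2) := htinc (i + 1) (i + 2) (fin3_ne12 i)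
  have hi2 : ¬ t (i + 2) ≤ t (i + 1) := htinc (i + 2) (i + 1) (fin3_ne21 i)
  exact ⟨aux_convex hc1 hc2 hi1 hi2, hc1, hc2, hi1, hi2⟩

private noncomputable def htP [Fintype P] (x : P) : ℕ := Set.ncard {y : P | y < x}

private lemma htP_lt [Fintype P] {x y : P} (h : x < y) : htP x < htP y := by
  have hsub : {a : P | a < x} ⊆ {a : P | a < y} := fun a ha => lt_trans ha h
  exact Set.ncard_lt_ncard ((Set.ssubset_iff_of_subset hsub).2 ⟨x, h, lt_irrefl x⟩)
    (Set.toFinite _)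

private lemma htP_le_card [Fintype P] (x : P) : htP x ≤ Fintype.card P := by
  have := Set.ncard_le_ncard (Set.subset_univ {y : P | y < x}) Set.finite_univ
  simpa [htP, Set.ncard_univ, Nat.card_eq_fintype_card] using this

end Aux

/-- A d-complete poset contains no six elements `p i`, `q i` (`i ∈ Fin 3`) such
that each set `{p i, q (i+1), q (i+2)}` is convex, with `p i` covered by both
`q (i+1)` and `q (i+2)`, which are incomparable. -/
theorem no_forbidden_hexagon {P : Type*} [PartialOrder P] [Fintype P]
    (hP : IsDComplete P) :
    ¬ ∃ p q : Fin 3 → P, ∀ i : Fin 3,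
        IsConvexSet {p i, q (i + 1), q (i + 2)} ∧
        p i ⋖ q (i + 1) ∧ p i ⋖ q (i + 2) ∧
        ¬ q (i + 1) ≤ q (i + 2) ∧ ¬ q (i + 2) ≤ q (i + 1) := by
  rintro ⟨p, q, H0⟩
  have H : Hex p q := H0
  have key : ∀ n : ℕ, ∃ p q : Fin 3 → P, Hex p q ∧
      n ≤ htP (p 0) + htP (p 1) + htP (p 2) := by
    intro n
    induction n with
    | zero => exact ⟨p, q, H, Nat.zero_le _⟩
    | succ n ih =>
      obtain ⟨p', q', H', hn⟩ := ih
      obtain ⟨t, H''⟩ := hex_step hP H'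
      refine ⟨q', t, H'', ?_⟩
      have h0 := htP_lt (hex_cov H' 0 1 (by decide)).lt
      have h1 := htP_lt (hex_cov H' 1 2 (by decide)).lt
      have h2 := htP_lt (hex_cov H' 2 0 (by decide)).lt
      omega
  obtain ⟨p', q', H', hn⟩ := key (3 * Fintype.card P + 1)
  have b0 := htP_le_card (p' 0)
  have b1 := htP_le_card (p' 1)
  have b2 := htP_le_card (p' 2)
  omega
end

section
/- In a d-complete poset, a neck element of a d-interval does not cover any elements outside the d-interval, and a tail element of a d-interval is not covered by any elements outside the d-interval. -/
variable {P : Type*} [PartialOrder P]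

namespace NeckTailAux

variable {P : Type*} [PartialOrder P]

lemma isChain_singleton' (a : P) : IsChain (· ≤ ·) ({a} : Set P) := by
  intro x hx y hy hne
  rw [Set.mem_singleton_iff] at hx hy
  exact absurd (hx.trans hy.symm) hne

/-- A diamond: `Set.Icc c m = {c, u1, u2, m}` with `u1`, `u2` incomparable. -/
def Dia (c u1 u2 m : P) : Prop :=
  ¬ u1 ≤ u2 ∧ ¬ u2 ≤ u1 ∧ Set.Icc c m = {c, u1, u2, m}

namespace Dia

variable {c u1 u2 m : P}

lemma n12 (h : Dia c u1 u2 m) : ¬ u1 ≤ u2 := h.1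
lemma n21 (h : Dia c u1 u2 m) : ¬ u2 ≤ u1 := h.2.1
lemma icc (h : Dia c u1 u2 m) : Set.Icc c m = {c, u1, u2, m} := h.2.2

lemma mem_iff (h : Dia c u1 u2 m) {x : P} :
    x ∈ Set.Icc c m ↔ x = c ∨ x = u1 ∨ x = u2 ∨ x = m := by
  rw [h.icc]; simp

lemma mem1 (h : Dia c u1 u2 m) : u1 ∈ Set.Icc c m := by rw [h.icc]; simp
lemma mem2 (h : Dia c u1 u2 m) : u2 ∈ Set.Icc c m := by rw [h.icc]; simp

lemma le_c1 (h : Dia c u1 u2 m) : c ≤ u1 := h.mem1.1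
lemma le_c2 (h : Dia c u1 u2 m) : c ≤ u2 := h.mem2.1
lemma le_1m (h : Dia c u1 u2 m) : u1 ≤ m := h.mem1.2
lemma le_2m (h : Dia c u1 u2 m) : u2 ≤ m := h.mem2.2
lemma le_cm (h : Dia c u1 u2 m) : c ≤ m := h.le_c1.trans h.le_1m

lemma symm (h : Dia c u1 u2 m) : Dia c u2 u1 m := by
  refine ⟨h.2.1, h.1, ?_⟩
  rw [h.icc]; ext e; simp; tauto

lemma ne_c1 (h : Dia c u1 u2 m) : c ≠ u1 := by
  rintro rfl; exact h.n12 h.le_c2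

lemma ne_1m (h : Dia c u1 u2 m) : u1 ≠ m := by
  rintro rfl; exact h.n21 h.le_2m

lemma lt_c1 (h : Dia c u1 u2 m) : c < u1 := lt_of_le_of_ne h.le_c1 h.ne_c1
lemma lt_1m (h : Dia c u1 u2 m) : u1 < m := lt_of_le_of_ne h.le_1m h.ne_1m

lemma cov_c1 (h : Dia c u1 u2 m) : c ⋖ u1 := by
  refine ⟨h.lt_c1, ?_⟩
  intro e hce helt
  have he : e ∈ Set.Icc c m := ⟨hce.le, helt.le.trans h.le_1m⟩
  rcases h.mem_iff.1 he with rfl | rfl | rfl | rfl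
  · exact hce.ne rfl
  · exact helt.ne rfl
  · exact h.n21 helt.le
  · exact absurd (helt.trans_le h.le_1m) (lt_irrefl _)

lemma cov_1m (h : Dia c u1 u2 m) : u1 ⋖ m := by
  refine ⟨h.lt_1m, ?_⟩
  intro e he helt
  have hmem : e ∈ Set.Icc c m := ⟨h.le_c1.trans he.le, helt.le⟩
  rcases h.mem_iff.1 hmem with rfl | rfl | rfl | rfl
  · exact absurd (he.trans_le h.le_c1) (lt_irrefl _)
  · exact he.ne rfl
  · exact h.n12 he.le
  · exact helt.ne rfl

lemma tail_eq (h : Dia c u1 u2 m) :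
    {x ∈ Set.Icc c m | x ≤ u1 ∧ x ≤ u2} = {c} := by
  ext e
  simp only [Set.mem_setOf_eq, Set.mem_singleton_iff]
  constructor
  · rintro ⟨he, h1, h2⟩
    rcases h.mem_iff.1 he with rfl | rfl | rfl | rfl
    · rfl
    · exact absurd h2 h.n12
    · exact absurd h1 h.n21
    · exact absurd (h.le_2m.trans h1) h.n21
  · rintro rfl
    exact ⟨⟨le_rfl, h.le_cm⟩, h.le_c1, h.le_c2⟩

lemma neck_eq (h : Dia c u1 u2 m) :
    {x ∈ Set.Icc c m | u1 ≤ x ∧ u2 ≤ x} = {m} := by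
  ext e
  simp only [Set.mem_setOf_eq, Set.mem_singleton_iff]
  constructor
  · rintro ⟨he, h1, h2⟩
    rcases h.mem_iff.1 he with rfl | rfl | rfl | rfl
    · exact absurd (h1.trans h.le_c2) h.n12
    · exact absurd h2 h.n21
    · exact absurd h1 h.n12
    · rfl
  · rintro rfl
    exact ⟨⟨h.le_cm, le_rfl⟩, h.le_1m, h.le_2m⟩

lemma isDk (h : Dia c u1 u2 m) : IsDkIntervalWith 3 c m u1 u2 := by
  refine ⟨h.le_cm, ⟨le_refl 3, h.mem1, h.mem2, h.n12, h.n21, ?_, ?_, ?_, ?_⟩, ?_⟩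
  · intro e he
    rcases h.mem_iff.1 he with rfl | rfl | rfl | rfl
    · exact Or.inr (Or.inr (Or.inl ⟨h.le_c1, h.le_c2⟩))
    · exact Or.inl rfl
    · exact Or.inr (Or.inl rfl)
    · exact Or.inr (Or.inr (Or.inr ⟨h.le_1m, h.le_2m⟩))
  · rw [h.tail_eq]; exact isChain_singleton' c
  · rw [h.neck_eq]; exact isChain_singleton' m
  · rw [h.tail_eq]; simp
  · rw [h.neck_eq]; simp

lemma d2 (hP : IsDComplete P) (h : Dia c u1 u2 m) {e : P} (he : e ⋖ m) :
    e = c ∨ e = u1 ∨ e = u2 := by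
  have hmem := hP.2.1 c m ⟨3, u1, u2, h.isDk⟩ e he
  rcases h.mem_iff.1 hmem with h' | h' | h' | h'
  · exact Or.inl h'
  · exact Or.inr (Or.inl h')
  · exact Or.inr (Or.inr h')
  · exact absurd h' he.ne

end Dia

lemma dkMinus {p u1 u2 : P} (h1 : p ⋖ u1) (h2 : p ⋖ u2) (h12 : ¬ u1 ≤ u2)
    (h21 : ¬ u2 ≤ u1) : IsDkMinusConvex 3 ({p, u1, u2} : Set P) := by
  have htail : {x ∈ ({p, u1, u2} : Set P) | x ≤ u1 ∧ x ≤ u2} = {p} := by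
    ext e
    simp only [Set.mem_setOf_eq, Set.mem_insert_iff, Set.mem_singleton_iff]
    constructor
    · rintro ⟨rfl | rfl | rfl, ha, hb⟩
      · rfl
      · exact absurd hb h12
      · exact absurd ha h21
    · rintro rfl
      exact ⟨Or.inl rfl, h1.le, h2.le⟩
  have hneck : {x ∈ ({p, u1, u2} : Set P) | u1 ≤ x ∧ u2 ≤ x} = (∅ : Set P) := by
    ext e
    simp only [Set.mem_setOf_eq, Set.mem_insert_iff, Set.mem_singleton_iff,
      Set.mem_empty_iff_false, iff_false, not_and]
    rintro (rfl | rfl | rfl) ha hb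
    · exact absurd ha h1.lt.not_ge
    · exact h21 hb
    · exact h12 ha
  refine ⟨?_, u1, u2, ⟨le_refl 3, by simp, by simp, h12, h21, ?_, ?_, ?_, ?_⟩, ?_⟩
  · intro s hs t ht e hse het
    simp only [Set.mem_insert_iff, Set.mem_singleton_iff] at hs ht ⊢
    rcases hs with rfl | rfl | rfl <;> rcases ht with rfl | rfl | rfl
    · exact Or.inl (le_antisymm het hse)
    · rcases h1.eq_or_eq hse het with rfl | rfl
      · exact Or.inl rfl
      · exact Or.inr (Or.inl rfl)
    · rcases h2.eq_or_eq hse het with rfl | rfl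
      · exact Or.inl rfl
      · exact Or.inr (Or.inr rfl)
    · exact absurd (hse.trans het) h1.lt.not_ge
    · exact Or.inr (Or.inl (le_antisymm het hse))
    · exact absurd (hse.trans het) h12
    · exact absurd (hse.trans het) h2.lt.not_ge
    · exact absurd (hse.trans het) h21
    · exact Or.inr (Or.inr (le_antisymm het hse))
  · intro e he
    simp only [Set.mem_insert_iff, Set.mem_singleton_iff] at he
    rcases he with rfl | rfl | rfl
    · exact Or.inr (Or.inr (Or.inl ⟨h1.le, h2.le⟩))
    · exact Or.inl rfl
    · exact Or.inr (Or.inl rfl)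
  · rw [htail]; exact isChain_singleton' p
  · rw [hneck]; intro e he; exact absurd he (Set.notMem_empty e)
  · rw [htail]; simp
  · rw [hneck]; simp

lemma complete (hP : IsDComplete P) {p u1 u2 : P} (h1 : p ⋖ u1) (h2 : p ⋖ u2)
    (h12 : ¬ u1 ≤ u2) (h21 : ¬ u2 ≤ u1) :
    ∃ v, v ∉ ({p, u1, u2} : Set P) ∧ Dia p u1 u2 v := by
  obtain ⟨v, hvS, c, hdk, hicc⟩ := hP.1 3 _ (dkMinus h1 h2 h12 h21)
  obtain ⟨w', z', hdkw⟩ := hdk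
  have hcv : c ≤ v := hdkw.1
  have hpmem : p ∈ Set.Icc c v := by rw [hicc]; simp
  have h1mem : u1 ∈ Set.Icc c v := by rw [hicc]; simp
  have h2mem : u2 ∈ Set.Icc c v := by rw [hicc]; simp
  have hcp : c ≤ p := hpmem.1
  have hcmem : c ∈ Set.Icc c v := ⟨le_rfl, hcv⟩
  rw [hicc] at hcmem
  simp only [Set.mem_insert_iff, Set.mem_singleton_iff] at hcmem
  rcases hcmem with rfl | rfl | rfl | rfl
  · exact absurd ((le_antisymm hpmem.2 hcp) ▸ hvS) (by simp)
  · refine ⟨v, hvS, h12, h21, ?_⟩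
    rw [hicc]; ext e; simp only [Set.mem_insert_iff, Set.mem_singleton_iff]; tauto
  · exact absurd hcp h1.lt.not_ge
  · exact absurd hcp h2.lt.not_ge

lemma d3_contra (hP : IsDComplete P) {x2 x3 m m' : P} (hne : x2 ≠ x3)
    (h2m : x2 ⋖ m) (h2m' : x2 ⋖ m') (h3m : x3 ⋖ m) (h3m' : x3 ⋖ m')
    (hmm : ¬ m ≤ m') (hm'm : ¬ m' ≤ m) : False := by
  have hS := dkMinus h2m h2m' hmm hm'm
  have hT := dkMinus h3m h3m' hmm hm'm
  have hdiff : ({x2, m, m'} : Set P) \ {x2} = ({x3, m, m'} : Set P) \ {x3} := by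
    have e1 : ({x2, m, m'} : Set P) \ {x2} = {m, m'} := by
      ext e
      simp only [Set.mem_diff, Set.mem_insert_iff, Set.mem_singleton_iff]
      constructor
      · rintro ⟨rfl | h, hne2⟩
        · exact absurd rfl hne2
        · exact h
      · intro h
        refine ⟨Or.inr h, ?_⟩
        rintro rfl
        rcases h with rfl | rfl
        · exact h2m.ne rfl
        · exact h2m'.ne rfl
    have e2 : ({x3, m, m'} : Set P) \ {x3} = {m, m'} := by
      ext e
      simp only [Set.mem_diff, Set.mem_insert_iff, Set.mem_singleton_iff]
      constructor
      · rintro ⟨rfl | h, hne2⟩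
        · exact absurd rfl hne2
        · exact h
      · intro h
        refine ⟨Or.inr h, ?_⟩
        rintro rfl
        rcases h with rfl | rfl
        · exact h3m.ne rfl
        · exact h3m'.ne rfl
    rw [e1, e2]
  have hmin2 : ∀ e ∈ ({x2, m, m'} : Set P), x2 ≤ e := by
    intro e he
    simp only [Set.mem_insert_iff, Set.mem_singleton_iff] at he
    rcases he with rfl | rfl | rfl
    · exact le_rfl
    · exact h2m.le
    · exact h2m'.le
  have hmin3 : ∀ e ∈ ({x3, m, m'} : Set P), x3 ≤ e := by
    intro e he
    simp only [Set.mem_insert_iff, Set.mem_singleton_iff] at he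
    rcases he with rfl | rfl | rfl
    · exact le_rfl
    · exact h3m.le
    · exact h3m'.le
  have hST := hP.2.2 3 3 _ _ hS hT x2 (by simp) x3 (by simp) hmin2 hmin3 hdiff
  have hx3 : x3 ∈ ({x2, m, m'} : Set P) := hST ▸ (by simp : x3 ∈ ({x3, m, m'} : Set P))
  simp only [Set.mem_insert_iff, Set.mem_singleton_iff] at hx3
  rcases hx3 with rfl | rfl | rfl
  · exact hne rfl
  · exact h3m.ne rfl
  · exact h3m'.ne rfl

lemma tops_not_le (hP : IsDComplete P) {x1 x2 x3 c12 c13 c23 m12 m13 m23 : P}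
    (i12 : ¬ x1 ≤ x2) (i21 : ¬ x2 ≤ x1) (i13 : ¬ x1 ≤ x3) (i31 : ¬ x3 ≤ x1)
    (i23 : ¬ x2 ≤ x3) (i32 : ¬ x3 ≤ x2)
    (d12 : Dia c12 x1 x2 m12) (d13 : Dia c13 x1 x3 m13) (d23 : Dia c23 x2 x3 m23) :
    ¬ m12 ≤ m13 := by
  intro hle
  have hm : m12 ∈ Set.Icc c13 m13 := ⟨d13.le_c1.trans d12.le_1m, hle⟩
  rcases d13.mem_iff.1 hm with rfl | rfl | rfl | rfl
  · exact i21 (d12.le_2m.trans d13.le_c1)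
  · exact i21 d12.le_2m
  · exact i23 d12.le_2m
  · -- now m13 has been identified with m12
    by_cases hA : m12 ≤ m23
    · have hm2 : m12 ∈ Set.Icc c23 m23 := ⟨d23.le_c1.trans d12.le_2m, hA⟩
      rcases d23.mem_iff.1 hm2 with rfl | rfl | rfl | rfl
      · exact i12 (d12.le_1m.trans d23.le_c1)
      · exact i12 d12.le_1m
      · exact i13 d12.le_1m
      · rcases d23.d2 hP d12.cov_1m with h | h | h
        · exact i12 (h.le.trans d23.le_c1)
        · exact i12 h.le
        · exact i13 h.le
    · by_cases hB : m23 ≤ m12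
      · have hm3 : m23 ∈ Set.Icc c12 m12 := ⟨d12.le_c2.trans d23.le_1m, hB⟩
        rcases d12.mem_iff.1 hm3 with rfl | rfl | rfl | heq
        · exact i31 (d23.le_2m.trans d12.le_c1)
        · exact i31 d23.le_2m
        · exact i32 d23.le_2m
        · exact hA heq.ge
      · exact d3_contra hP (fun h => i23 h.le) d12.symm.cov_1m d23.cov_1m
          d13.symm.cov_1m d23.symm.cov_1m hA hB

lemma config_false [Fintype P] (hP : IsDComplete P) :
    ∀ (n : ℕ) (x1 x2 x3 c12 c13 c23 m12 m13 m23 : P),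
      ¬ x1 ≤ x2 → ¬ x2 ≤ x1 → ¬ x1 ≤ x3 → ¬ x3 ≤ x1 → ¬ x2 ≤ x3 → ¬ x3 ≤ x2 →
      Dia c12 x1 x2 m12 → Dia c13 x1 x3 m13 → Dia c23 x2 x3 m23 →
      {e : P | x1 ≤ e}.ncard ≤ n → False := by
  intro n
  induction n with
  | zero =>
    intro x1 x2 x3 _ _ _ _ _ _ _ _ _ _ _ _ _ hcard
    have hpos : 0 < {e : P | x1 ≤ e}.ncard :=
      (Set.ncard_pos (Set.toFinite _)).2 ⟨x1, le_rfl⟩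
    omega
  | succ n ih =>
    intro x1 x2 x3 c12 c13 c23 m12 m13 m23 i12 i21 i13 i31 i23 i32 d12 d13 d23 hcard
    have M1213 := tops_not_le hP i12 i21 i13 i31 i23 i32 d12 d13 d23
    have M1312 := tops_not_le hP i13 i31 i12 i21 i32 i23 d13 d12 d23.symm
    have M1223 := tops_not_le hP i21 i12 i23 i32 i13 i31 d12.symm d23 d13
    have M2312 := tops_not_le hP i23 i32 i21 i12 i31 i13 d23 d12.symm d13.symm
    have M1323 := tops_not_le hP i31 i13 i32 i23 i12 i21 d13.symm d23.symm d12
    have M2313 := tops_not_le hP i32 i23 i31 i13 i21 i12 d23.symm d13.symm d12.symm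
    obtain ⟨q, hq, dq⟩ := complete hP d12.cov_1m d13.cov_1m M1213 M1312
    obtain ⟨r, hr, dr⟩ := complete hP d12.symm.cov_1m d23.cov_1m M1223 M2312
    obtain ⟨s, hs, ds⟩ := complete hP d13.symm.cov_1m d23.symm.cov_1m M1323 M2313
    have hss : {e : P | m12 ≤ e} ⊂ {e : P | x1 ≤ e} := by
      rw [Set.ssubset_def]
      constructor
      · intro e he
        exact d12.le_1m.trans he
      · intro hsup
        exact d12.cov_1m.lt.not_ge
          (hsup (show x1 ∈ {e : P | x1 ≤ e} from le_rfl))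
    have hlt := Set.ncard_lt_ncard hss (Set.toFinite _)
    exact ih m12 m13 m23 x1 x2 x3 q r s M1213 M1312 M1223 M2312 M1323 M2313
      dq dr ds (by omega)

lemma exists_least [Fintype P] {S : Set P} (hS : IsChain (· ≤ ·) S)
    (hne : S.Nonempty) : ∃ c ∈ S, ∀ e ∈ S, c ≤ e := by
  obtain ⟨c, hc, hmin⟩ : ∃ c ∈ S, ∀ e ∈ S, id e ≤ id c → id c = id e := by
    obtain ⟨c, hc, hm⟩ := (Set.toFinite S).exists_minimal hne
    exact ⟨c, hc, fun e he h => le_antisymm (hm he h) h⟩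
  refine ⟨c, hc, fun e he => ?_⟩
  rcases eq_or_ne e c with rfl | hne'
  · exact le_rfl
  · rcases hS he hc hne' with h | h
    · exact le_of_eq (hmin e he h)
    · exact h

lemma chain_count [Fintype P] :
    ∀ (n : ℕ) (S : Set P), IsChain (· ≤ ·) S → S.ncard = n →
      ∀ j, 1 ≤ j → j ≤ n → ∃ c ∈ S, {e ∈ S | c ≤ e}.ncard = j := by
  intro n
  induction n with
  | zero => intro S _ _ j h1 h0; omega
  | succ n ih =>
    intro S hS hcard j h1 hj
    have hne : S.Nonempty := (Set.ncard_pos (Set.toFinite _)).1 (by omega)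
    obtain ⟨c0, hc0, hleast⟩ := exists_least hS hne
    rcases eq_or_lt_of_le hj with heq | hlt
    · refine ⟨c0, hc0, ?_⟩
      have hSeq : {e ∈ S | c0 ≤ e} = S := by
        ext e
        simp only [Set.mem_setOf_eq]
        exact ⟨fun h => h.1, fun h => ⟨h, hleast e h⟩⟩
      rw [hSeq, hcard, heq]
    · have hcard' : (S \ {c0}).ncard = n := by
        rw [Set.ncard_diff_singleton_of_mem hc0, hcard]
        omega
      obtain ⟨c, hc, hcount⟩ := ih (S \ {c0}) (hS.mono Set.diff_subset) hcard' j h1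
        (by omega)
      refine ⟨c, hc.1, ?_⟩
      have hSeq : {e ∈ S | c ≤ e} = {e ∈ S \ {c0} | c ≤ e} := by
        ext e
        simp only [Set.mem_setOf_eq, Set.mem_diff, Set.mem_singleton_iff]
        constructor
        · rintro ⟨heS, hce⟩
          refine ⟨⟨heS, ?_⟩, hce⟩
          rintro rfl
          exact hc.2 (Set.mem_singleton_iff.mpr (le_antisymm hce (hleast c hc.1)))
        · rintro ⟨⟨heS, _⟩, hce⟩
          exact ⟨heS, hce⟩
      rw [hSeq, hcount]

lemma neck_closed [Fintype P] (hP : IsDComplete P) {k : ℕ} {a b w z x : P}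
    (h : IsDkIntervalWith k a b w z) (hx : x ∈ Set.Icc a b) (hwx : w ≤ x)
    (hzx : z ≤ x) : ∀ y, y ⋖ x → y ∈ Set.Icc a b := by
  obtain ⟨hab, ⟨hk, hw, hz, hwz, hzw, hclass, hchT, hchN, hT⟩, hN⟩ := h
  set j := {e : P | (e ∈ Set.Icc a b ∧ w ≤ e ∧ z ≤ e) ∧ e ≤ x}.ncard with hj
  have hj1 : 1 ≤ j :=
    (Set.ncard_pos (Set.toFinite _)).2 ⟨x, ⟨hx, hwx, hzx⟩, le_rfl⟩
  have hjk : j ≤ k - 2 := by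
    rw [← hN]
    exact Set.ncard_le_ncard (fun e he => he.1) (Set.toFinite _)
  obtain ⟨c, hc, hcc⟩ := chain_count (k - 2) _ hchT hT j hj1 hjk
  obtain ⟨hcab, hcw, hcz⟩ := hc
  have hac : a ≤ c := hcab.1
  have hcx : c ≤ x := hcw.trans hwx
  have tail_eq : {e ∈ Set.Icc c x | e ≤ w ∧ e ≤ z} =
      {e ∈ {e : P | e ∈ Set.Icc a b ∧ e ≤ w ∧ e ≤ z} | c ≤ e} := by
    ext e
    simp only [Set.mem_setOf_eq, Set.mem_Icc]
    constructor
    · rintro ⟨⟨hce, hex⟩, hew, hez⟩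
      exact ⟨⟨⟨hac.trans hce, hex.trans hx.2⟩, hew, hez⟩, hce⟩
    · rintro ⟨⟨heab, hew, hez⟩, hce⟩
      exact ⟨⟨hce, hew.trans hwx⟩, hew, hez⟩
  have neck_eq : {e ∈ Set.Icc c x | w ≤ e ∧ z ≤ e} =
      {e : P | (e ∈ Set.Icc a b ∧ w ≤ e ∧ z ≤ e) ∧ e ≤ x} := by
    ext e
    simp only [Set.mem_setOf_eq, Set.mem_Icc]
    constructor
    · rintro ⟨⟨hce, hex⟩, hwe, hze⟩
      exact ⟨⟨⟨hac.trans hce, hex.trans hx.2⟩, hwe, hze⟩, hex⟩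
    · rintro ⟨⟨heab, hwe, hze⟩, hex⟩
      exact ⟨⟨hcw.trans hwe, hex⟩, hwe, hze⟩
  have hDk : IsDkIntervalWith (j + 2) c x w z := by
    refine ⟨hcx, ⟨by omega, ⟨hcw, hwx⟩, ⟨hcz, hzx⟩, hwz, hzw, ?_, ?_, ?_, ?_⟩, ?_⟩
    · intro e he
      exact hclass e ⟨hac.trans he.1, he.2.trans hx.2⟩
    · rw [tail_eq]
      exact hchT.mono (fun e he => he.1)
    · rw [neck_eq]
      exact hchN.mono (fun e he => he.1)
    · rw [tail_eq, hcc]; omega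
    · rw [neck_eq, ← hj]; omega
  intro y hy
  have hmem := hP.2.1 c x ⟨j + 2, w, z, hDk⟩ y hy
  exact ⟨hac.trans hmem.1, hmem.2.trans hx.2⟩

lemma tail_climb [Fintype P] (hP : IsDComplete P) :
    ∀ (n k : ℕ) (a b w z p y : P), IsDkIntervalWith k a b w z →
      p ∈ Set.Icc a b → p ≤ w → p ≤ z → p ⋖ y → y ∉ Set.Icc a b →
      {e : P | y ≤ e}.ncard ≤ n → False := by
  intro n
  induction n with
  | zero =>
    intro k a b w z p y _ _ _ _ _ _ hcard
    have hpos : 0 < {e : P | y ≤ e}.ncard :=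
      (Set.ncard_pos (Set.toFinite _)).2 ⟨y, le_rfl⟩
    omega
  | succ n ih =>
    intro k a b w z p y h hpmem hpw hpz hpy hyout hcard
    obtain ⟨hab, ⟨hk, hw, hz, hwz, hzw, hclass, hchT, hchN, hT⟩, hN⟩ := h
    have hya : a ≤ y := hpmem.1.trans hpy.le
    by_cases htop : ∀ t, t ∈ Set.Icc a b → t ≤ w → t ≤ z → t ≤ p
    · -- p is the top of the tail; build the base diamond and the configuration
      have hNne : ({e : P | e ∈ Set.Icc a b ∧ w ≤ e ∧ z ≤ e}).Nonempty :=
        ⟨b, ⟨hab, le_rfl⟩, hw.2, hz.2⟩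
      obtain ⟨n1, hn1, hn1min⟩ := exists_least hchN hNne
      obtain ⟨hn1ab, hwn1, hzn1⟩ := hn1
      have hpn1 : p ≤ n1 := hpw.trans hwn1
      have hdia : Dia p w z n1 := by
        refine ⟨hwz, hzw, ?_⟩
        ext e
        simp only [Set.mem_Icc, Set.mem_insert_iff, Set.mem_singleton_iff]
        constructor
        · rintro ⟨hpe, hen⟩
          have heab : e ∈ Set.Icc a b := ⟨hpmem.1.trans hpe, hen.trans hn1ab.2⟩
          rcases hclass e heab with rfl | rfl | ⟨h1, h2⟩ | ⟨h1, h2⟩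
          · exact Or.inr (Or.inl rfl)
          · exact Or.inr (Or.inr (Or.inl rfl))
          · exact Or.inl (le_antisymm (htop e heab h1 h2) hpe)
          · exact Or.inr (Or.inr (Or.inr (le_antisymm hen
              (hn1min e ⟨heab, h1, h2⟩))))
        · rintro (rfl | rfl | rfl | rfl)
          · exact ⟨le_rfl, hpn1⟩
          · exact ⟨hpw, hwn1⟩
          · exact ⟨hpz, hzn1⟩
          · exact ⟨hpn1, le_rfl⟩
      have hyw : ¬ y ≤ w := fun hl => hyout ⟨hya, hl.trans hw.2⟩
      have hwy : ¬ w ≤ y := by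
        intro hl
        rcases hpy.eq_or_eq hpw hl with heq | heq
        · exact hwz (heq ▸ hpz)
        · exact hyout (heq ▸ hw)
      have hyz : ¬ y ≤ z := fun hl => hyout ⟨hya, hl.trans hz.2⟩
      have hzy : ¬ z ≤ y := by
        intro hl
        rcases hpy.eq_or_eq hpz hl with heq | heq
        · exact hzw (heq ▸ hpw)
        · exact hyout (heq ▸ hz)
      obtain ⟨m12, _, dm12⟩ := complete hP hpy hdia.cov_c1 hyw hwy
      obtain ⟨m13, _, dm13⟩ := complete hP hpy hdia.symm.cov_c1 hyz hzy
      exact config_false hP ({e : P | y ≤ e}.ncard) y w z p p p m12 m13 n1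
        hyw hwy hyz hzy hwz hzw dm12 dm13 hdia le_rfl
    · push_neg at htop
      obtain ⟨t0, ht0mem, ht0w, ht0z, ht0p⟩ := htop
      have hS0chain : IsChain (· ≤ ·)
          {t : P | (t ∈ Set.Icc a b ∧ t ≤ w ∧ t ≤ z) ∧ ¬ t ≤ p} :=
        hchT.mono (fun t ht => ht.1)
      have hS0ne : ({t : P | (t ∈ Set.Icc a b ∧ t ≤ w ∧ t ≤ z) ∧ ¬ t ≤ p}).Nonempty :=
        ⟨t0, ⟨ht0mem, ht0w, ht0z⟩, ht0p⟩
      obtain ⟨p', hp'S0, hp'min⟩ := exists_least hS0chain hS0ne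
      obtain ⟨⟨hp'ab, hp'w, hp'z⟩, hp'np⟩ := hp'S0
      have hpp' : p ≤ p' := by
        rcases hchT ⟨hpmem, hpw, hpz⟩ ⟨hp'ab, hp'w, hp'z⟩
          (by rintro rfl; exact hp'np le_rfl) with h' | h'
        · exact h'
        · exact absurd h' hp'np
      have hcov : p ⋖ p' := by
        refine ⟨lt_of_le_of_ne hpp' (by rintro rfl; exact hp'np le_rfl), ?_⟩
        intro e hpe hep'
        have heab : e ∈ Set.Icc a b := ⟨hpmem.1.trans hpe.le, hep'.le.trans hp'ab.2⟩
        rcases hclass e heab with rfl | rfl | ⟨h1, h2⟩ | ⟨h1, h2⟩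
        · exact absurd (hep'.trans_le hp'w) (lt_irrefl _)
        · exact absurd (hep'.trans_le hp'z) (lt_irrefl _)
        · by_cases hep : e ≤ p
          · exact absurd (hpe.trans_le hep) (lt_irrefl _)
          · exact absurd (hep'.trans_le (hp'min e ⟨⟨heab, h1, h2⟩, hep⟩))
              (lt_irrefl _)
        · exact absurd ((h1.trans_lt hep').trans_le hp'w) (lt_irrefl _)
      have hyp' : ¬ y ≤ p' := fun hl => hyout ⟨hya, hl.trans hp'ab.2⟩
      have hp'y : ¬ p' ≤ y := by
        intro hl
        rcases hpy.eq_or_eq hpp' hl with heq | heq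
        · exact hp'np (heq ▸ le_rfl)
        · exact hyout (heq ▸ hp'ab)
      obtain ⟨v, hvS, dv⟩ := complete hP hpy hcov hyp' hp'y
      have hvout : v ∉ Set.Icc a b := fun hvm => hyout ⟨hya, dv.le_1m.trans hvm.2⟩
      have hss : {e : P | v ≤ e} ⊂ {e : P | y ≤ e} := by
        rw [Set.ssubset_def]
        constructor
        · intro e he
          exact dv.le_1m.trans he
        · intro hsup
          exact dv.lt_1m.not_ge
            (hsup (show y ∈ {e : P | y ≤ e} from le_rfl))
      have hlt := Set.ncard_lt_ncard hss (Set.toFinite _)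
      exact ih k a b w z p' v ⟨hab, ⟨hk, hw, hz, hwz, hzw, hclass, hchT, hchN, hT⟩, hN⟩
        hp'ab hp'w hp'z dv.symm.cov_1m hvout (by omega)

end NeckTailAux

/-- In a d-complete poset, a neck element of a `d`-interval covers no element
outside the interval, and a tail element is covered by no element outside the
interval. -/
theorem neck_tail_closure {P : Type*} [PartialOrder P] [Fintype P]
    (hP : IsDComplete P) (a b x : P) :
    (IsNeckOf x a b → ∀ y, y ⋖ x → y ∈ Set.Icc a b) ∧
    (IsTailOf x a b → ∀ y, x ⋖ y → y ∈ Set.Icc a b) := by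
  constructor
  · rintro ⟨k, w, z, h, hx, hwx, hzx⟩ y hy
    exact NeckTailAux.neck_closed hP h hx hwx hzx y hy
  · rintro ⟨k, w, z, h, hx, hxw, hxz⟩ y hy
    by_contra hout
    exact NeckTailAux.tail_climb hP ({e : P | y ≤ e}.ncard) k a b w z x y h hx
      hxw hxz hy hout le_rfl
end

section
/- If an element p of a d-complete poset P is the maximal element of some d-interval, then p is the maximal element of a unique d-interval I, and any d-interval having p as a neck element contains I. -/
variable {P : Type*} [PartialOrder P]

section AuxiliaryLemmas

lemma isConvex_Icc (u v : P) : IsConvexSet (Set.Icc u v) :=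
  fun a ha b hb x hax hxb => ⟨ha.1.trans hax, hxb.trans hb.2⟩

lemma chain_exists_greatest {S : Set P} (hfin : S.Finite) (hne : S.Nonempty)
    (hch : IsChain (· ≤ ·) S) : ∃ m ∈ S, ∀ x ∈ S, x ≤ m := by
  obtain ⟨m, hm, hmax⟩ := Set.Finite.exists_maximalFor id S hfin hne
  refine ⟨m, hm, fun x hx => ?_⟩
  rcases eq_or_ne x m with rfl | hne'
  · exact le_rfl
  · rcases hch hx hm hne' with h | h
    · exact h
    · exact hmax hx h

lemma chain_exists_least {S : Set P} (hfin : S.Finite) (hne : S.Nonempty)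
    (hch : IsChain (· ≤ ·) S) : ∃ m ∈ S, ∀ x ∈ S, m ≤ x := by
  obtain ⟨m, hm, hmin⟩ := Set.Finite.exists_minimalFor id S hfin hne
  refine ⟨m, hm, fun x hx => ?_⟩
  rcases eq_or_ne x m with rfl | hne'
  · exact le_rfl
  · rcases hch hm hx (Ne.symm hne') with h | h
    · exact h
    · exact hmin hx h

lemma interval_anatomy {k : ℕ} {a b w z : P} (h : IsDkIntervalWith k a b w z) :
    a ≤ b ∧ a ≤ w ∧ a ≤ z ∧ w ≤ b ∧ z ≤ b ∧ w ≠ z ∧ a ≠ w ∧ a ≠ z ∧ w ≠ b ∧ z ≠ b := by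
  obtain ⟨hab, ⟨hk3, hwI, hzI, hwz, hzw, htri, htc, hnc, htcard⟩, hncard⟩ := h
  refine ⟨hab, hwI.1, hzI.1, hwI.2, hzI.2, ?_, ?_, ?_, ?_, ?_⟩
  · rintro rfl; exact hwz le_rfl
  · rintro rfl; exact hwz hzI.1
  · rintro rfl; exact hzw hwI.1
  · rintro rfl; exact hzw hzI.2
  · rintro rfl; exact hwz hwI.2

/-- For a `d₃`-interval, the two side elements are covered by the top. -/
lemma side_covby {k : ℕ} {a b w z : P} (h : IsDkIntervalWith k a b w z) (hk : k = 3) :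
    w ⋖ b ∧ z ⋖ b := by
  obtain ⟨hab, ⟨hk3, hwI, hzI, hwz, hzw, htri, htc, hnc, htcard⟩, hncard⟩ := h
  subst hk
  have h1 : {x ∈ Set.Icc a b | w ≤ x ∧ z ≤ x}.ncard = 1 := by rw [hncard]
  obtain ⟨c, hc⟩ := Set.ncard_eq_one.mp h1
  have hbc : b = c := by
    have hb : b ∈ {x ∈ Set.Icc a b | w ≤ x ∧ z ≤ x} := ⟨⟨hab, le_rfl⟩, hwI.2, hzI.2⟩
    rw [hc] at hb; exact Set.mem_singleton_iff.mp hb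
  subst hbc
  constructor
  · refine ⟨lt_of_le_of_ne hwI.2 (fun e => hzw (e ▸ hzI.2)), fun c' hc1 hc2 => ?_⟩
    have hcI : c' ∈ Set.Icc a b := ⟨hwI.1.trans hc1.le, hc2.le⟩
    rcases htri c' hcI with rfl | rfl | ⟨h1', h2'⟩ | ⟨h1', h2'⟩
    · exact lt_irrefl _ hc1
    · exact hwz hc1.le
    · exact hc1.not_ge h1'
    · have hmem : c' ∈ {x ∈ Set.Icc a b | w ≤ x ∧ z ≤ x} := ⟨hcI, h1', h2'⟩
      rw [hc] at hmem
      exact hc2.ne (Set.mem_singleton_iff.mp hmem)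
  · refine ⟨lt_of_le_of_ne hzI.2 (fun e => hwz (e ▸ hwI.2)), fun c' hc1 hc2 => ?_⟩
    have hcI : c' ∈ Set.Icc a b := ⟨hzI.1.trans hc1.le, hc2.le⟩
    rcases htri c' hcI with rfl | rfl | ⟨h1', h2'⟩ | ⟨h1', h2'⟩
    · exact hzw hc1.le
    · exact lt_irrefl _ hc1
    · exact hc1.not_ge h2'
    · have hmem : c' ∈ {x ∈ Set.Icc a b | w ≤ x ∧ z ≤ x} := ⟨hcI, h1', h2'⟩
      rw [hc] at hmem
      exact hc2.ne (Set.mem_singleton_iff.mp hmem)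

/-- For a `d₃`-interval, an element of the interval covered by the top is a side element. -/
lemma cover_eq_side {k : ℕ} {a b w z : P} (h : IsDkIntervalWith k a b w z) (hk : k = 3)
    {x : P} (hx : x ⋖ b) (hmem : x ∈ Set.Icc a b) : x = w ∨ x = z := by
  obtain ⟨hab, ⟨hk3, hwI, hzI, hwz, hzw, htri, htc, hnc, htcard⟩, hncard⟩ := h
  subst hk
  have h1 : {x ∈ Set.Icc a b | w ≤ x ∧ z ≤ x}.ncard = 1 := by rw [hncard]
  obtain ⟨c, hc⟩ := Set.ncard_eq_one.mp h1
  have hbc : b = c := by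
    have hb : b ∈ {x ∈ Set.Icc a b | w ≤ x ∧ z ≤ x} := ⟨⟨hab, le_rfl⟩, hwI.2, hzI.2⟩
    rw [hc] at hb; exact Set.mem_singleton_iff.mp hb
  subst hbc
  rcases htri x hmem with rfl | rfl | ⟨h1', h2'⟩ | ⟨h1', h2'⟩
  · exact Or.inl rfl
  · exact Or.inr rfl
  · exfalso
    have hxw : x < w := lt_of_le_of_ne h1' (fun e => hwz (e ▸ h2'))
    have hwb : w < b := lt_of_le_of_ne hwI.2 (fun e => hzw (e ▸ hzI.2))
    exact hx.2 hxw hwb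
  · exfalso
    have hmem' : x ∈ {x ∈ Set.Icc a b | w ≤ x ∧ z ≤ x} := ⟨hmem, h1', h2'⟩
    rw [hc] at hmem'
    exact hx.1.ne (Set.mem_singleton_iff.mp hmem')

/-- For a `d_k`-interval with `k ≥ 4`, there is a greatest element strictly below the top,
and it is covered by the top. -/
lemma exists_neck_max [Fintype P] {k : ℕ} {a b w z : P}
    (h : IsDkIntervalWith k a b w z) (hk : 4 ≤ k) :
    ∃ q, q ∈ Set.Icc a b ∧ w ≤ q ∧ z ≤ q ∧ q ≠ b ∧
      (∀ x ∈ Set.Icc a b, x ≠ b → x ≤ q) ∧ q ⋖ b := by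
  obtain ⟨hab, ⟨hk3, hwI, hzI, hwz, hzw, htri, htc, hnc, htcard⟩, hncard⟩ := h
  have hbN : b ∈ {x ∈ Set.Icc a b | w ≤ x ∧ z ≤ x} := ⟨⟨hab, le_rfl⟩, hwI.2, hzI.2⟩
  have hcard' : ({x ∈ Set.Icc a b | w ≤ x ∧ z ≤ x} \ {b}).ncard = k - 3 := by
    rw [Set.ncard_diff_singleton_of_mem hbN, hncard]
    omega
  have hne : ({x ∈ Set.Icc a b | w ≤ x ∧ z ≤ x} \ {b}).Nonempty :=
    Set.nonempty_of_ncard_ne_zero (by omega)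
  obtain ⟨q, hqmem, hqmax⟩ :=
    chain_exists_greatest (Set.toFinite _) hne (hnc.mono Set.diff_subset)
  obtain ⟨⟨hqI, hwq, hzq⟩, hqb'⟩ := hqmem
  have hqb : q ≠ b := fun e => hqb' (Set.mem_singleton_iff.mpr e)
  have hmax' : ∀ x ∈ Set.Icc a b, x ≠ b → x ≤ q := by
    intro x hx hxb
    rcases htri x hx with rfl | rfl | ⟨h1, h2⟩ | ⟨h1, h2⟩
    · exact hwq
    · exact hzq
    · exact h1.trans hwq
    · exact hqmax x ⟨⟨hx, h1, h2⟩, fun e => hxb (Set.mem_singleton_iff.mp e)⟩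
  have hqltb : q < b := lt_of_le_of_ne hqI.2 hqb
  refine ⟨q, hqI, hwq, hzq, hqb, hmax', hqltb, fun c hqc hcb => ?_⟩
  exact hqc.not_ge (hmax' c ⟨hqI.1.trans hqc.le, hcb.le⟩ hcb.ne)

/-- The top of a `d_k`-interval with `k ≥ 4` covers only the greatest element below it. -/
lemma cover_unique [Fintype P] {k : ℕ} {a b w z : P}
    (hD2 : ∀ a b : P, IsDInterval a b → ∀ x, x ⋖ b → x ∈ Set.Icc a b)
    (h : IsDkIntervalWith k a b w z) {q : P}
    (hqI : q ∈ Set.Icc a b) (hqb : q ≠ b)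
    (hqmax : ∀ x ∈ Set.Icc a b, x ≠ b → x ≤ q) :
    ∀ x, x ⋖ b → x = q := by
  intro x hx
  have hxI : x ∈ Set.Icc a b := hD2 a b ⟨k, w, z, h⟩ x hx
  have hxq := hqmax x hxI hx.1.ne
  rcases hxq.lt_or_eq with hlt | e
  · exact absurd (lt_of_le_of_ne hqI.2 hqb) (hx.2 hlt)
  · exact e

/-- Peeling the extreme elements off a `d_k`-interval with `k ≥ 4` yields a
`d_{k-1}`-interval with the same side elements. -/
lemma peel [Fintype P] {k : ℕ} {a b w z : P}
    (h : IsDkIntervalWith k a b w z) (hk : 4 ≤ k)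
    {q : P} (hqI : q ∈ Set.Icc a b) (hwq : w ≤ q) (hzq : z ≤ q) (hqb : q ≠ b)
    (hqmax : ∀ x ∈ Set.Icc a b, x ≠ b → x ≤ q) :
    ∃ t₂, t₂ ∈ Set.Icc a b ∧ a ≠ t₂ ∧ (∀ x ∈ Set.Icc a b, x ≠ a → t₂ ≤ x) ∧
      IsDkIntervalWith (k - 1) t₂ q w z := by
  obtain ⟨hab, ⟨hk3, hwI, hzI, hwz, hzw, htri, htc, hnc, htcard⟩, hncard⟩ := h
  have haT : a ∈ {x ∈ Set.Icc a b | x ≤ w ∧ x ≤ z} := ⟨⟨le_rfl, hab⟩, hwI.1, hzI.1⟩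
  have hTcard' : ({x ∈ Set.Icc a b | x ≤ w ∧ x ≤ z} \ {a}).ncard = k - 3 := by
    rw [Set.ncard_diff_singleton_of_mem haT, htcard]
    omega
  have hTne : ({x ∈ Set.Icc a b | x ≤ w ∧ x ≤ z} \ {a}).Nonempty :=
    Set.nonempty_of_ncard_ne_zero (by omega)
  obtain ⟨t₂, ht₂mem, ht₂min⟩ :=
    chain_exists_least (Set.toFinite _) hTne (htc.mono Set.diff_subset)
  obtain ⟨⟨ht₂I, ht₂w, ht₂z⟩, ht₂a'⟩ := ht₂mem
  have hat₂ : a ≠ t₂ := fun e => ht₂a' (Set.mem_singleton_iff.mpr e.symm)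
  have hmin' : ∀ x ∈ Set.Icc a b, x ≠ a → t₂ ≤ x := by
    intro x hx hxa
    rcases htri x hx with rfl | rfl | ⟨h1, h2⟩ | ⟨h1, h2⟩
    · exact ht₂w
    · exact ht₂z
    · exact ht₂min x ⟨⟨hx, h1, h2⟩, fun e => hxa (Set.mem_singleton_iff.mp e)⟩
    · exact ht₂w.trans h1
  have hwneb : w ≠ b := fun e => hzw (e ▸ hzI.2)
  have hanew : a ≠ w := fun e => hwz (e ▸ hzI.1)
  have hanez : a ≠ z := fun e => hzw (e ▸ hwI.1)
  have ht₂q : t₂ ≤ q := ht₂w.trans hwq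
  have hIcc : ∀ x, x ∈ Set.Icc t₂ q ↔ x ∈ Set.Icc a b ∧ x ≠ a ∧ x ≠ b := by
    intro x
    constructor
    · rintro ⟨h1, h2⟩
      refine ⟨⟨ht₂I.1.trans h1, h2.trans hqI.2⟩, ?_, ?_⟩
      · rintro rfl; exact hat₂ (le_antisymm ht₂I.1 h1)
      · rintro rfl; exact hqb (le_antisymm hqI.2 h2)
    · rintro ⟨hx, hxa, hxb⟩
      exact ⟨hmin' x hx hxa, hqmax x hx hxb⟩
  have hTail : {x ∈ Set.Icc t₂ q | x ≤ w ∧ x ≤ z} =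
      {x ∈ Set.Icc a b | x ≤ w ∧ x ≤ z} \ {a} := by
    ext x
    simp only [Set.mem_setOf_eq, Set.mem_diff, Set.mem_singleton_iff, hIcc]
    constructor
    · rintro ⟨⟨hx, hxa, hxb⟩, h1, h2⟩
      exact ⟨⟨hx, h1, h2⟩, hxa⟩
    · rintro ⟨⟨hx, h1, h2⟩, hxa⟩
      refine ⟨⟨hx, hxa, ?_⟩, h1, h2⟩
      rintro rfl; exact hwneb (le_antisymm hwI.2 h1)
  have hNeck : {x ∈ Set.Icc t₂ q | w ≤ x ∧ z ≤ x} =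
      {x ∈ Set.Icc a b | w ≤ x ∧ z ≤ x} \ {b} := by
    ext x
    simp only [Set.mem_setOf_eq, Set.mem_diff, Set.mem_singleton_iff, hIcc]
    constructor
    · rintro ⟨⟨hx, hxa, hxb⟩, h1, h2⟩
      exact ⟨⟨hx, h1, h2⟩, hxb⟩
    · rintro ⟨⟨hx, h1, h2⟩, hxb⟩
      refine ⟨⟨hx, ?_, hxb⟩, h1, h2⟩
      rintro rfl; exact hanew (le_antisymm hwI.1 h1)
  have hbN : b ∈ {x ∈ Set.Icc a b | w ≤ x ∧ z ≤ x} := ⟨⟨hab, le_rfl⟩, hwI.2, hzI.2⟩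
  refine ⟨t₂, ht₂I, hat₂, hmin', ht₂q,
    ⟨by omega, ⟨ht₂w, hwq⟩, ⟨ht₂z, hzq⟩, hwz, hzw, ?_, ?_, ?_, ?_⟩, ?_⟩
  · intro x hx
    exact htri x ((hIcc x).mp hx).1
  · rw [hTail]; exact htc.mono Set.diff_subset
  · rw [hNeck]; exact hnc.mono Set.diff_subset
  · rw [hTail, hTcard']; omega
  · rw [hNeck, Set.ncard_diff_singleton_of_mem hbN, hncard]; omega

/-- Removing the top of a `d_k`-interval (`k ≥ 4`) yields a `d_k^-`-convex set. -/
lemma icc_dminus [Fintype P] {k : ℕ} {a b w z : P}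
    (h : IsDkIntervalWith k a b w z) (hk : 4 ≤ k)
    {q : P} (hqI : q ∈ Set.Icc a b) (hwq : w ≤ q) (hzq : z ≤ q) (hqb : q ≠ b)
    (hqmax : ∀ x ∈ Set.Icc a b, x ≠ b → x ≤ q) :
    IsDkMinusConvex k (Set.Icc a q) := by
  obtain ⟨hab, ⟨hk3, hwI, hzI, hwz, hzw, htri, htc, hnc, htcard⟩, hncard⟩ := h
  have hwneb : w ≠ b := fun e => hzw (e ▸ hzI.2)
  have hanew : a ≠ w := fun e => hwz (e ▸ hzI.1)
  have hIcc : ∀ x, x ∈ Set.Icc a q ↔ x ∈ Set.Icc a b ∧ x ≠ b := by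
    intro x
    constructor
    · rintro ⟨h1, h2⟩
      refine ⟨⟨h1, h2.trans hqI.2⟩, ?_⟩
      rintro rfl; exact hqb (le_antisymm hqI.2 h2)
    · rintro ⟨hx, hxb⟩
      exact ⟨hx.1, hqmax x hx hxb⟩
  have hTail : {x ∈ Set.Icc a q | x ≤ w ∧ x ≤ z} = {x ∈ Set.Icc a b | x ≤ w ∧ x ≤ z} := by
    ext x
    simp only [Set.mem_setOf_eq, hIcc]
    constructor
    · rintro ⟨⟨hx, hxb⟩, h1, h2⟩
      exact ⟨hx, h1, h2⟩
    · rintro ⟨hx, h1, h2⟩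
      refine ⟨⟨hx, ?_⟩, h1, h2⟩
      rintro rfl; exact hwneb (le_antisymm hwI.2 h1)
  have hNeck : {x ∈ Set.Icc a q | w ≤ x ∧ z ≤ x} =
      {x ∈ Set.Icc a b | w ≤ x ∧ z ≤ x} \ {b} := by
    ext x
    simp only [Set.mem_setOf_eq, Set.mem_diff, Set.mem_singleton_iff, hIcc]
    constructor
    · rintro ⟨⟨hx, hxb⟩, h1, h2⟩
      exact ⟨⟨hx, h1, h2⟩, hxb⟩
    · rintro ⟨⟨hx, h1, h2⟩, hxb⟩
      exact ⟨⟨hx, hxb⟩, h1, h2⟩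
  have hbN : b ∈ {x ∈ Set.Icc a b | w ≤ x ∧ z ≤ x} := ⟨⟨hab, le_rfl⟩, hwI.2, hzI.2⟩
  refine ⟨isConvex_Icc a q, w, z,
    ⟨hk3, ⟨hwI.1, hwq⟩, ⟨hzI.1, hzq⟩, hwz, hzw, ?_, ?_, ?_, ?_⟩, ?_⟩
  · intro x hx
    exact htri x ((hIcc x).mp hx).1
  · rw [hTail]; exact htc
  · rw [hNeck]; exact hnc.mono Set.diff_subset
  · rw [hTail]; exact htcard
  · rw [hNeck, Set.ncard_diff_singleton_of_mem hbN, hncard]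
    omega

/-- Removing the top of a `d₃`-interval yields a `d₃^-`-convex set. -/
lemma d3_minus [Fintype P] {k : ℕ} {a b w z : P}
    (h : IsDkIntervalWith k a b w z) (hk : k = 3) :
    IsDkMinusConvex 3 ({a, w, z} : Set P) := by
  obtain ⟨hab, ⟨hk3, hwI, hzI, hwz, hzw, htri, htc, hnc, htcard⟩, hncard⟩ := h
  subst hk
  have hanew : a ≠ w := fun e => hwz (e ▸ hzI.1)
  have hanez : a ≠ z := fun e => hzw (e ▸ hwI.1)
  have hwneb : w ≠ b := fun e => hzw (e ▸ hzI.2)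
  have hzneb : z ≠ b := fun e => hwz (e ▸ hwI.2)
  have h1 : {x ∈ Set.Icc a b | w ≤ x ∧ z ≤ x}.ncard = 1 := by rw [hncard]
  obtain ⟨c, hc⟩ := Set.ncard_eq_one.mp h1
  have hbc : b = c := by
    have hb : b ∈ {x ∈ Set.Icc a b | w ≤ x ∧ z ≤ x} := ⟨⟨hab, le_rfl⟩, hwI.2, hzI.2⟩
    rw [hc] at hb; exact Set.mem_singleton_iff.mp hb
  subst hbc
  have h2 : {x ∈ Set.Icc a b | x ≤ w ∧ x ≤ z}.ncard = 1 := by rw [htcard]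
  obtain ⟨c', hc'⟩ := Set.ncard_eq_one.mp h2
  have hac : a = c' := by
    have ha : a ∈ {x ∈ Set.Icc a b | x ≤ w ∧ x ≤ z} := ⟨⟨le_rfl, hab⟩, hwI.1, hzI.1⟩
    rw [hc'] at ha; exact Set.mem_singleton_iff.mp ha
  subst hac
  have hmemS : ∀ x, x ∈ ({a, w, z} : Set P) ↔ x = a ∨ x = w ∨ x = z := by
    intro x
    simp [Set.mem_insert_iff, Set.mem_singleton_iff]
  have hTail : {x ∈ ({a, w, z} : Set P) | x ≤ w ∧ x ≤ z} = {a} := by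
    ext x
    simp only [Set.mem_setOf_eq, Set.mem_singleton_iff, hmemS]
    constructor
    · rintro ⟨rfl | rfl | rfl, h1', h2'⟩
      · rfl
      · exact absurd h2' hwz
      · exact absurd h1' hzw
    · rintro rfl
      exact ⟨Or.inl rfl, hwI.1, hzI.1⟩
  have hNeck : {x ∈ ({a, w, z} : Set P) | w ≤ x ∧ z ≤ x} = ∅ := by
    ext x
    simp only [Set.mem_setOf_eq, Set.mem_empty_iff_false, iff_false, not_and, hmemS]
    rintro (rfl | rfl | rfl)
    · intro h1' h2'; exact hanew (le_antisymm h1' hwI.1).symm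
    · intro h1' h2'; exact hzw h2'
    · intro h1' h2'; exact hwz h1'
  refine ⟨?_, w, z, ⟨le_rfl, ?_, ?_, hwz, hzw, ?_, ?_, ?_, ?_⟩, ?_⟩
  · -- convexity
    intro u hu v hv x hux hxv
    have halow : ∀ y, y ∈ ({a, w, z} : Set P) → a ≤ y := by
      intro y hy
      rcases (hmemS y).mp hy with rfl | rfl | rfl
      · exact le_rfl
      · exact hwI.1
      · exact hzI.1
    have hup : ∀ y, y ∈ ({a, w, z} : Set P) → y ≤ b := by
      intro y hy
      rcases (hmemS y).mp hy with rfl | rfl | rfl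
      · exact hab
      · exact hwI.2
      · exact hzI.2
    have hxI : x ∈ Set.Icc a b := ⟨(halow u hu).trans hux, hxv.trans (hup v hv)⟩
    rcases htri x hxI with rfl | rfl | ⟨h1', h2'⟩ | ⟨h1', h2'⟩
    · exact (hmemS x).mpr (Or.inr (Or.inl rfl))
    · exact (hmemS x).mpr (Or.inr (Or.inr rfl))
    · have : x ∈ {y ∈ Set.Icc a b | y ≤ w ∧ y ≤ z} := ⟨hxI, h1', h2'⟩
      rw [hc'] at this
      exact (hmemS x).mpr (Or.inl (Set.mem_singleton_iff.mp this))
    · exfalso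
      have : x ∈ {y ∈ Set.Icc a b | w ≤ y ∧ z ≤ y} := ⟨hxI, h1', h2'⟩
      rw [hc] at this
      have hxb : x = b := Set.mem_singleton_iff.mp this
      have hbv : b ≤ v := hxb ▸ hxv
      rcases (hmemS v).mp hv with hva | hvw | hvz
      · have hwa : w ≤ a := hwI.2.trans (hbv.trans_eq hva)
        exact hanew (le_antisymm hwI.1 hwa)
      · exact hwneb (le_antisymm hwI.2 (hbv.trans_eq hvw))
      · exact hzneb (le_antisymm hzI.2 (hbv.trans_eq hvz))
  · exact (hmemS w).mpr (Or.inr (Or.inl rfl))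
  · exact (hmemS z).mpr (Or.inr (Or.inr rfl))
  · intro x hx
    rcases (hmemS x).mp hx with rfl | rfl | rfl
    · exact Or.inr (Or.inr (Or.inl ⟨hwI.1, hzI.1⟩))
    · exact Or.inl rfl
    · exact Or.inr (Or.inl rfl)
  · rw [hTail]; exact IsChain.singleton
  · rw [hNeck]; exact Set.subsingleton_empty.isChain
  · rw [hTail]; simp
  · rw [hNeck]; simp

/-- Two `d`-intervals with the same maximal element coincide. -/
lemma unique_bottom [Fintype P]
    (hD2 : ∀ a b : P, IsDInterval a b → ∀ x, x ⋖ b → x ∈ Set.Icc a b)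
    (hD3 : ∀ (k k' : ℕ) (S T : Set P), IsDkMinusConvex k S → IsDkMinusConvex k' T →
      ∀ s ∈ S, ∀ t ∈ T, (∀ x ∈ S, s ≤ x) → (∀ x ∈ T, t ≤ x) → S \ {s} = T \ {t} → S = T) :
    ∀ k k' : ℕ, ∀ a a' b w z w' z' : P,
      IsDkIntervalWith k a b w z → IsDkIntervalWith k' a' b w' z' → a = a' := by
  intro k
  induction k using Nat.strong_induction_on with
  | _ k IH =>
  intro k' a a' b w z w' z' h h'
  obtain ⟨hab, haw, haz, hwb, hzb, hwnz, hanw, hanz, hwnb, hznb⟩ := interval_anatomy h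
  obtain ⟨hab', haw', haz', hwb', hzb', hwnz', hanw', hanz', hwnb', hznb'⟩ :=
    interval_anatomy h'
  have hk3 : 3 ≤ k := h.2.1.1
  have hk3' : 3 ≤ k' := h'.2.1.1
  by_cases hk : k = 3 <;> by_cases hk' : k' = 3
  · -- both are d₃-intervals
    have hwc := (side_covby h hk).1
    have hzc := (side_covby h hk).2
    have hwc' := (side_covby h' hk').1
    have hzc' := (side_covby h' hk').2
    have classify : ∀ x, x ⋖ b → x = w ∨ x = z := fun x hx =>
      cover_eq_side h hk hx (hD2 a b ⟨k, w, z, h⟩ x hx)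
    have classify' : ∀ x, x ⋖ b → x = w' ∨ x = z' := fun x hx =>
      cover_eq_side h' hk' hx (hD2 a' b ⟨k', w', z', h'⟩ x hx)
    have e2 : ({w, z} : Set P) = {w', z'} := by
      ext x
      simp only [Set.mem_insert_iff, Set.mem_singleton_iff]
      constructor
      · rintro (rfl | rfl)
        · exact classify' x hwc
        · exact classify' x hzc
      · rintro (rfl | rfl)
        · exact classify x hwc'
        · exact classify x hzc'
    have e1 : ({a, w, z} : Set P) \ {a} = {w, z} := by
      ext x
      simp only [Set.mem_diff, Set.mem_insert_iff, Set.mem_singleton_iff]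
      constructor
      · rintro ⟨rfl | rfl | rfl, hxa⟩
        · exact absurd rfl hxa
        · exact Or.inl rfl
        · exact Or.inr rfl
      · rintro (rfl | rfl)
        · exact ⟨Or.inr (Or.inl rfl), fun e => hanw e.symm⟩
        · exact ⟨Or.inr (Or.inr rfl), fun e => hanz e.symm⟩
    have e1' : ({a', w', z'} : Set P) \ {a'} = {w', z'} := by
      ext x
      simp only [Set.mem_diff, Set.mem_insert_iff, Set.mem_singleton_iff]
      constructor
      · rintro ⟨rfl | rfl | rfl, hxa⟩
        · exact absurd rfl hxa
        · exact Or.inl rfl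
        · exact Or.inr rfl
      · rintro (rfl | rfl)
        · exact ⟨Or.inr (Or.inl rfl), fun e => hanw' e.symm⟩
        · exact ⟨Or.inr (Or.inr rfl), fun e => hanz' e.symm⟩
    have hS := d3_minus h hk
    have hT := d3_minus h' hk'
    have hmins : ∀ x ∈ ({a, w, z} : Set P), a ≤ x := by
      rintro x (rfl | rfl | rfl)
      · exact le_rfl
      · exact haw
      · exact haz
    have hmins' : ∀ x ∈ ({a', w', z'} : Set P), a' ≤ x := by
      rintro x (rfl | rfl | rfl)
      · exact le_rfl
      · exact haw'
      · exact haz'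
    have hST : ({a, w, z} : Set P) = {a', w', z'} :=
      hD3 3 3 _ _ hS hT a (Set.mem_insert _ _) a' (Set.mem_insert _ _) hmins hmins'
        (by rw [e1, e1', e2])
    have haT : a ∈ ({a', w', z'} : Set P) := hST ▸ Set.mem_insert _ _
    rcases haT with rfl | h1 | h1
    · rfl
    · exfalso
      rcases classify a (h1 ▸ hwc') with e | e
      · exact hanw e
      · exact hanz e
    · exfalso
      have h1' : a = z' := h1
      rcases classify a (h1' ▸ hzc') with e | e
      · exact hanw e
      · exact hanz e
  · -- k = 3, k' ≥ 4 : impossible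
    exfalso
    obtain ⟨q', hq'I, hwq', hzq', hq'b, hq'max, hq'cov⟩ := exists_neck_max h' (by omega)
    have cu : ∀ x, x ⋖ b → x = q' := cover_unique hD2 h' hq'I hq'b hq'max
    have hw := (side_covby h hk).1
    have hz := (side_covby h hk).2
    exact hwnz ((cu w hw).trans (cu z hz).symm)
  · -- k ≥ 4, k' = 3 : impossible
    exfalso
    obtain ⟨q, hqI, hwq, hzq, hqb, hqmax, hqcov⟩ := exists_neck_max h (by omega)
    have cu : ∀ x, x ⋖ b → x = q := cover_unique hD2 h hqI hqb hqmax
    have hw := (side_covby h' hk').1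
    have hz := (side_covby h' hk').2
    exact hwnz' ((cu w' hw).trans (cu z' hz).symm)
  · -- both k, k' ≥ 4
    have hk4 : 4 ≤ k := by omega
    have hk4' : 4 ≤ k' := by omega
    obtain ⟨q, hqI, hwq, hzq, hqb, hqmax, hqcov⟩ := exists_neck_max h hk4
    obtain ⟨q', hq'I, hwq', hzq', hq'b, hq'max, hq'cov⟩ := exists_neck_max h' hk4'
    have hqq : q' = q := cover_unique hD2 h hqI hqb hqmax q' hq'cov
    subst hqq
    obtain ⟨t₂, ht₂I, hat₂, hmin, hpk⟩ := peel h hk4 hqI hwq hzq hqb hqmax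
    obtain ⟨t₂', ht₂I', hat₂', hmin', hpk'⟩ := peel h' hk4' hq'I hwq' hzq' hq'b hq'max
    have ht₂eq : t₂ = t₂' :=
      IH (k - 1) (by omega) (k' - 1) t₂ t₂' q' w z w' z' hpk hpk'
    have hS := icc_dminus h hk4 hqI hwq hzq hqb hqmax
    have hT := icc_dminus h' hk4' hq'I hwq' hzq' hq'b hq'max
    have haq : a ≤ q' := hqI.1
    have haq' : a' ≤ q' := hq'I.1
    have e : Set.Icc a q' \ {a} = Set.Icc t₂ q' := by
      ext x
      simp only [Set.mem_diff, Set.mem_singleton_iff, Set.mem_Icc]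
      constructor
      · rintro ⟨⟨h1, h2⟩, hxa⟩
        exact ⟨hmin x ⟨h1, h2.trans hqI.2⟩ hxa, h2⟩
      · rintro ⟨h1, h2⟩
        refine ⟨⟨ht₂I.1.trans h1, h2⟩, ?_⟩
        rintro rfl
        exact hat₂ (le_antisymm ht₂I.1 h1)
    have e' : Set.Icc a' q' \ {a'} = Set.Icc t₂' q' := by
      ext x
      simp only [Set.mem_diff, Set.mem_singleton_iff, Set.mem_Icc]
      constructor
      · rintro ⟨⟨h1, h2⟩, hxa⟩
        exact ⟨hmin' x ⟨h1, h2.trans hq'I.2⟩ hxa, h2⟩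
      · rintro ⟨h1, h2⟩
        refine ⟨⟨ht₂I'.1.trans h1, h2⟩, ?_⟩
        rintro rfl
        exact hat₂' (le_antisymm ht₂I'.1 h1)
    have hST : Set.Icc a q' = Set.Icc a' q' :=
      hD3 k k' _ _ hS hT a ⟨le_rfl, haq⟩ a' ⟨le_rfl, haq'⟩
        (fun x hx => hx.1) (fun x hx => hx.1) (by rw [e, e', ht₂eq])
    have h1 : a' ≤ a := by
      have : a ∈ Set.Icc a' q' := by rw [← hST]; exact ⟨le_rfl, haq⟩
      exact this.1
    have h2 : a ≤ a' := by
      have : a' ∈ Set.Icc a q' := by rw [hST]; exact ⟨le_rfl, haq'⟩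
      exact this.1
    exact le_antisymm h2 h1

/-- Any neck element of a `d`-interval is itself the top of a `d`-interval, with the
same side elements, contained in the original one. -/
lemma neck_contains [Fintype P]
    (hD2 : ∀ a b : P, IsDInterval a b → ∀ x, x ⋖ b → x ∈ Set.Icc a b)
    (hD3 : ∀ (k k' : ℕ) (S T : Set P), IsDkMinusConvex k S → IsDkMinusConvex k' T →
      ∀ s ∈ S, ∀ t ∈ T, (∀ x ∈ S, s ≤ x) → (∀ x ∈ T, t ≤ x) → S \ {s} = T \ {t} → S = T) :
    ∀ (n k : ℕ) (a b w z p : P),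
      {u ∈ Set.Icc a b | w ≤ u ∧ z ≤ u ∧ p < u}.ncard = n →
      IsDkIntervalWith k a b w z → p ∈ Set.Icc a b → w ≤ p → z ≤ p →
      ∃ j t, a ≤ t ∧ IsDkIntervalWith j t p w z := by
  intro n
  induction n using Nat.strong_induction_on with
  | _ n IH =>
  intro k a b w z p hcard h hpI hwp hzp
  rcases eq_or_ne p b with rfl | hpb
  · exact ⟨k, a, le_rfl, h⟩
  · have hdup := h
    obtain ⟨hab, ⟨hk3, hwI, hzI, hwz, hzw, htri, htc, hnc, htcard⟩, hncard⟩ := hdup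
    have hbU : b ∈ {u ∈ Set.Icc a b | w ≤ u ∧ z ≤ u ∧ p < u} :=
      ⟨⟨hab, le_rfl⟩, hwI.2, hzI.2, lt_of_le_of_ne hpI.2 hpb⟩
    have hsubU : {u ∈ Set.Icc a b | w ≤ u ∧ z ≤ u ∧ p < u} ⊆
        {u ∈ Set.Icc a b | w ≤ u ∧ z ≤ u} := fun u hu => ⟨hu.1, hu.2.1, hu.2.2.1⟩
    have hUchain : IsChain (· ≤ ·) {u ∈ Set.Icc a b | w ≤ u ∧ z ≤ u ∧ p < u} :=
      hnc.mono hsubU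
    obtain ⟨n₀, hn₀U, hn₀min⟩ := chain_exists_least (Set.toFinite _) ⟨b, hbU⟩ hUchain
    obtain ⟨hn₀I, hwn₀, hzn₀, hpn₀⟩ := hn₀U
    have hsub : {u ∈ Set.Icc a b | w ≤ u ∧ z ≤ u ∧ n₀ < u} ⊆
        {u ∈ Set.Icc a b | w ≤ u ∧ z ≤ u ∧ p < u} :=
      fun u hu => ⟨hu.1, hu.2.1, hu.2.2.1, hpn₀.trans hu.2.2.2⟩
    have hlt : {u ∈ Set.Icc a b | w ≤ u ∧ z ≤ u ∧ n₀ < u}.ncard < n := by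
      rw [← hcard]
      refine Set.ncard_lt_ncard ?_ (Set.toFinite _)
      refine (Set.ssubset_iff_of_subset hsub).mpr
        ⟨n₀, ⟨hn₀I, hwn₀, hzn₀, hpn₀⟩, fun hmem => lt_irrefl _ hmem.2.2.2⟩
    obtain ⟨j, t', hat', h'⟩ := IH _ hlt k a b w z n₀ rfl h hn₀I hwn₀ hzn₀
    have h'dup := h'
    obtain ⟨ht'n₀, ⟨hj3, hwI', hzI', hwz', hzw', htri', htc', hnc', htcard'⟩, hncard'⟩ := h'dup
    have ht'p : t' ≤ p := hwI'.1.trans hwp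
    have hpI' : p ∈ Set.Icc t' n₀ := ⟨ht'p, hpn₀.le⟩
    have hpneck' : p ∈ {x ∈ Set.Icc t' n₀ | w ≤ x ∧ z ≤ x} := ⟨hpI', hwp, hzp⟩
    have hn₀neck' : n₀ ∈ {x ∈ Set.Icc t' n₀ | w ≤ x ∧ z ≤ x} :=
      ⟨⟨ht'n₀, le_rfl⟩, hwn₀, hzn₀⟩
    have hj4 : 4 ≤ j := by
      have h2 : 1 < {x ∈ Set.Icc t' n₀ | w ≤ x ∧ z ≤ x}.ncard :=
        (Set.one_lt_ncard (Set.toFinite _)).mpr ⟨p, hpneck', n₀, hn₀neck', hpn₀.ne⟩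
      rw [hncard'] at h2
      omega
    have hqmax' : ∀ x ∈ Set.Icc t' n₀, x ≠ n₀ → x ≤ p := by
      intro x hx hxn₀
      rcases htri' x hx with rfl | rfl | ⟨h1, h2⟩ | ⟨h1, h2⟩
      · exact hwp
      · exact hzp
      · exact h1.trans hwp
      · have hxI : x ∈ Set.Icc a b := ⟨hat'.trans hx.1, hx.2.trans hn₀I.2⟩
        by_contra hxp
        have hxnep : x ≠ p := fun e => hxp (e ▸ le_rfl)
        rcases hnc ⟨hxI, h1, h2⟩ ⟨hpI, hwp, hzp⟩ hxnep with hle | hle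
        · exact hxp hle
        · have hplt : p < x := lt_of_le_of_ne hle (Ne.symm hxnep)
          have : n₀ ≤ x := hn₀min x ⟨hxI, h1, h2, hplt⟩
          exact hxn₀ (le_antisymm hx.2 this)
    obtain ⟨t₂, ht₂I', hne₂, hmin₂, hpk⟩ :=
      peel h' hj4 hpI' hwp hzp hpn₀.ne hqmax'
    exact ⟨j - 1, t₂, hat'.trans ht₂I'.1, hpk⟩

end AuxiliaryLemmas

/-- If `p` is the maximal element of some `d`-interval of a d-complete poset,
then it is the maximal element of a unique `d`-interval `[p', p]`, and any
`d`-interval having `p` as a neck element contains `[p', p]`. -/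
theorem unique_d_interval_with_max {P : Type*} [PartialOrder P] [Fintype P]
    (hP : IsDComplete P) (p : P) (hp : ∃ p', IsDInterval p' p) :
    ∃ p', IsDInterval p' p ∧ (∀ p'', IsDInterval p'' p → p'' = p') ∧
      ∀ a b : P, IsNeckOf p a b → Set.Icc p' p ⊆ Set.Icc a b := by
  obtain ⟨hD1, hD2, hD3⟩ := hP
  obtain ⟨p', k₀, w₀, z₀, h₀⟩ := hp
  refine ⟨p', ⟨k₀, w₀, z₀, h₀⟩, ?_, ?_⟩
  · rintro p'' ⟨k'', w'', z'', h''⟩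
    exact unique_bottom hD2 hD3 k'' k₀ p'' p' p w'' z'' w₀ z₀ h'' h₀
  · rintro a b ⟨k, w, z, hI, hmem, hwp, hzp⟩
    obtain ⟨j, t, hat, ht⟩ := neck_contains hD2 hD3 _ k a b w z p rfl hI hmem hwp hzp
    have htp' : t = p' := unique_bottom hD2 hD3 j k₀ t p' p w z w₀ z₀ ht h₀
    intro x hx
    rw [← htp'] at hx
    exact ⟨hat.trans hx.1, hx.2.trans hmem.2⟩
end

section
/- Every upper set of a d-complete poset is itself a d-complete poset. -/
variable {P : Type*} [PartialOrder P]

section Helpers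

variable {S : Set P}

/-- image of a lower sep set -/
lemma sep_le_image (T : Set S) (w z : S) :
    {x ∈ (Subtype.val '' T : Set P) | x ≤ ↑w ∧ x ≤ ↑z} =
      Subtype.val '' {x ∈ T | x ≤ w ∧ x ≤ z} := by
  ext x
  constructor
  · rintro ⟨⟨y, hy, rfl⟩, h1, h2⟩
    exact ⟨y, ⟨hy, h1, h2⟩, rfl⟩
  · rintro ⟨y, ⟨hy, h1, h2⟩, rfl⟩
    exact ⟨⟨y, hy, rfl⟩, h1, h2⟩

lemma sep_ge_image (T : Set S) (w z : S) :
    {x ∈ (Subtype.val '' T : Set P) | ↑w ≤ x ∧ ↑z ≤ x} =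
      Subtype.val '' {x ∈ T | w ≤ x ∧ z ≤ x} := by
  ext x
  constructor
  · rintro ⟨⟨y, hy, rfl⟩, h1, h2⟩
    exact ⟨y, ⟨hy, h1, h2⟩, rfl⟩
  · rintro ⟨y, ⟨hy, h1, h2⟩, rfl⟩
    exact ⟨⟨y, hy, rfl⟩, h1, h2⟩

lemma isChain_image_iff (A : Set S) :
    IsChain (· ≤ ·) (Subtype.val '' A : Set P) ↔ IsChain (· ≤ ·) A := by
  constructor
  · intro h x hx y hy hne
    have := h (Set.mem_image_of_mem _ hx) (Set.mem_image_of_mem _ hy)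
      (fun hc => hne (Subtype.coe_injective hc))
    simpa using this
  · rintro h x ⟨x', hx', rfl⟩ y ⟨y', hy', rfl⟩ hne
    have := h hx' hy' (fun hc => hne (by rw [hc]))
    simpa using this

lemma image_Icc (hS : IsUpperSet S) (a b : S) :
    (Subtype.val '' (Set.Icc a b) : Set P) = Set.Icc (a : P) (b : P) := by
  ext x
  constructor
  · rintro ⟨y, ⟨h1, h2⟩, rfl⟩
    exact ⟨h1, h2⟩
  · rintro ⟨h1, h2⟩
    have hx : x ∈ S := hS h1 a.2
    exact ⟨⟨x, hx⟩, ⟨h1, h2⟩, rfl⟩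

lemma dkStruct_image_iff (k : ℕ) (T : Set S) (w z : S) :
    DkStruct k (Subtype.val '' T : Set P) ↑w ↑z ↔ DkStruct k T w z := by
  unfold DkStruct
  rw [sep_le_image, sep_ge_image, isChain_image_iff, isChain_image_iff,
    Set.ncard_image_of_injective _ Subtype.coe_injective]
  constructor
  · rintro ⟨h3, hw, hz, hwz, hzw, hall, hc1, hc2, hn⟩
    refine ⟨h3, ?_, ?_, ?_, ?_, ?_, hc1, hc2, hn⟩
    · obtain ⟨y, hy, hyw⟩ := hw; rwa [Subtype.coe_injective hyw] at hy
    · obtain ⟨y, hy, hyz⟩ := hz; rwa [Subtype.coe_injective hyz] at hy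
    · exact fun h => hwz h
    · exact fun h => hzw h
    · intro x hx
      have := hall ↑x (Set.mem_image_of_mem _ hx)
      rcases this with h | h | h | h
      · exact Or.inl (Subtype.coe_injective h)
      · exact Or.inr (Or.inl (Subtype.coe_injective h))
      · exact Or.inr (Or.inr (Or.inl h))
      · exact Or.inr (Or.inr (Or.inr h))
  · rintro ⟨h3, hw, hz, hwz, hzw, hall, hc1, hc2, hn⟩
    refine ⟨h3, Set.mem_image_of_mem _ hw, Set.mem_image_of_mem _ hz,
      hwz, hzw, ?_, hc1, hc2, hn⟩
    rintro x ⟨y, hy, rfl⟩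
    rcases hall y hy with h | h | h | h
    · exact Or.inl (by rw [h])
    · exact Or.inr (Or.inl (by rw [h]))
    · exact Or.inr (Or.inr (Or.inl ⟨h.1, h.2⟩))
    · exact Or.inr (Or.inr (Or.inr ⟨h.1, h.2⟩))

lemma isDkIntervalWith_image_iff (hS : IsUpperSet S) (k : ℕ) (a b w z : S) :
    IsDkIntervalWith k (a : P) (b : P) ↑w ↑z ↔ IsDkIntervalWith k a b w z := by
  unfold IsDkIntervalWith
  rw [← image_Icc hS, dkStruct_image_iff, sep_ge_image,
    Set.ncard_image_of_injective _ Subtype.coe_injective, Subtype.coe_le_coe]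

lemma isConvexSet_image (hS : IsUpperSet S) {T : Set S} (h : IsConvexSet T) :
    IsConvexSet (Subtype.val '' T : Set P) := by
  rintro a ⟨a', ha', rfl⟩ b ⟨b', hb', rfl⟩ x h1 h2
  have hx : x ∈ S := hS h1 a'.2
  exact ⟨⟨x, hx⟩, h a' ha' b' hb' ⟨x, hx⟩ h1 h2, rfl⟩

lemma isDkMinusConvex_image (hS : IsUpperSet S) {k : ℕ} {T : Set S}
    (h : IsDkMinusConvex k T) : IsDkMinusConvex k (Subtype.val '' T : Set P) := by
  obtain ⟨hconv, w, z, hstr, hn⟩ := h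
  refine ⟨isConvexSet_image hS hconv, ↑w, ↑z, (dkStruct_image_iff k T w z).2 hstr, ?_⟩
  rw [sep_ge_image, Set.ncard_image_of_injective _ Subtype.coe_injective, hn]

end Helpers

/-- Every upper set of a d-complete poset is itself d-complete. -/
theorem upperSet_dComplete {P : Type*} [PartialOrder P] [Fintype P]
    (hP : IsDComplete P) (S : Set P) (hS : IsUpperSet S) :
    IsDComplete S := by
  obtain ⟨hP1, hP2, hP3⟩ := hP
  refine ⟨?_, ?_, ?_⟩
  · -- axiom 1
    intro k T hT
    obtain ⟨z, hzT, a, ⟨w', z', hdk⟩, hIcc⟩ := hP1 k (Subtype.val '' T)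
      (isDkMinusConvex_image hS hT)
    -- T contains w (side element), hence is nonempty
    obtain ⟨_, w0, z0, hstr, -⟩ := hT
    have hw0 : (w0 : P) ∈ Subtype.val '' T := Set.mem_image_of_mem _ hstr.2.1
    have hw0z : (w0 : P) ∈ Set.Icc a z := by rw [hIcc]; exact Set.mem_insert_of_mem _ hw0
    have hzS : z ∈ S := hS hw0z.2 w0.2
    have haz : a ≤ z := hdk.1
    have haS : a ∈ S := by
      have haIcc : a ∈ Set.Icc a z := ⟨le_refl a, haz⟩
      rw [hIcc] at haIcc
      rcases haIcc with h | h
      · -- a = z; then Icc a z = {z}, but ↑w0 ∈ Icc with ↑w0 ≠ z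
        exfalso
        have : (w0 : P) = z := le_antisymm hw0z.2 (h ▸ hw0z.1)
        exact hzT (this ▸ hw0)
      · obtain ⟨y, -, rfl⟩ := h; exact y.2
    -- side elements are in S
    have hw'Icc : w' ∈ Set.Icc a z := hdk.2.1.2.1
    have hz'Icc : z' ∈ Set.Icc a z := hdk.2.1.2.2.1
    have hw'S : w' ∈ S := hS hw'Icc.1 haS
    have hz'S : z' ∈ S := hS hz'Icc.1 haS
    refine ⟨⟨z, hzS⟩, ?_, ⟨a, haS⟩, ?_, ?_⟩
    · intro hmem
      exact hzT ⟨⟨z, hzS⟩, hmem, rfl⟩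
    · exact ⟨⟨w', hw'S⟩, ⟨z', hz'S⟩,
        (isDkIntervalWith_image_iff hS k ⟨a, haS⟩ ⟨z, hzS⟩ ⟨w', hw'S⟩ ⟨z', hz'S⟩).1 hdk⟩
    · apply Set.image_injective.2 (Subtype.coe_injective (p := (· ∈ S)))
      rw [image_Icc hS, hIcc, Set.image_insert_eq]
  · -- axiom 2
    rintro a b ⟨k, w, z, hdk⟩ x hxb
    have hdk' : IsDkIntervalWith k (a : P) (b : P) ↑w ↑z :=
      (isDkIntervalWith_image_iff hS k a b w z).2 hdk
    have hlt : (x : P) < (b : P) := by exact_mod_cast hxb.1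
    have hmid : ∀ ⦃c : P⦄, (x : P) < c → ¬ c < (b : P) := by
      intro c hc1 hc2
      have hcS : c ∈ S := hS hc1.le x.2
      exact hxb.2 (show x < (⟨c, hcS⟩ : S) by exact_mod_cast hc1)
        (show (⟨c, hcS⟩ : S) < b by exact_mod_cast hc2)
    have hcov : (x : P) ⋖ (b : P) := ⟨hlt, hmid⟩
    have := hP2 a b ⟨k, w, z, hdk'⟩ x hcov
    exact ⟨by exact_mod_cast this.1, by exact_mod_cast this.2⟩
  · -- axiom 3
    intro k k' T₁ T₂ h₁ h₂ s hs t ht hsmin htmin hdiff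
    have him : (Subtype.val '' T₁ : Set P) = Subtype.val '' T₂ := by
      apply hP3 k k' _ _ (isDkMinusConvex_image hS h₁) (isDkMinusConvex_image hS h₂)
        ↑s (Set.mem_image_of_mem _ hs) ↑t (Set.mem_image_of_mem _ ht)
      · rintro x ⟨y, hy, rfl⟩; exact_mod_cast hsmin y hy
      · rintro x ⟨y, hy, rfl⟩; exact_mod_cast htmin y hy
      · rw [← Set.image_singleton, ← Set.image_singleton,
          ← Set.image_diff Subtype.coe_injective, ← Set.image_diff Subtype.coe_injective,
          hdiff]
    exact Set.image_injective.2 Subtype.coe_injective him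
end

section
/- In a d-complete poset P, the elements of any diagonal form a chain under the order of P, with all covering relations in this chain of the form p ⋖ p↑, where [p, p↑] is a d-interval. -/
variable {P : Type*} [PartialOrder P]

/-- Two elements are in the same diagonal: the equivalence relation generated by
`p ∼ q` whenever `[p, q]` is a `d`-interval. -/
def DiagRel {P : Type*} [PartialOrder P] (a b : P) : Prop :=
  Relation.EqvGen (fun x y => IsDInterval x y) a b

/-- The setoid on `P` whose classes are the diagonals. -/
def diagSetoid (P : Type*) [PartialOrder P] : Setoid P :=
  ⟨DiagRel, Relation.EqvGen.is_equivalence _⟩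

/-- `h` is the hook-vector function of the d-complete poset `P`, indexed by
diagonals (the quotient of `P` by `DiagRel`): if `p` is not a neck element of any
`d`-interval then `h p D` counts the elements of the diagonal `D` weakly below `p`;
and if `[p', p]` is a `d`-interval with side elements `w`, `z`, then
`h p = h w + h z - h p'`. -/
def IsHookVector {P : Type*} [PartialOrder P]
    (h : P → Quotient (diagSetoid P) → ℤ) : Prop :=
  (∀ p : P, (¬ ∃ a b : P, IsNeckOf p a b) → ∀ D,
      h p D = ({r : P | Quotient.mk (diagSetoid P) r = D ∧ r ≤ p}).ncard) ∧
  (∀ p' p w z : P, IsDIntervalWith p' p w z → ∀ D,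
      h p D = h w D + h z D - h p' D)

/-- A linear extension of `P`, as an enumeration `e 0 > e 1 > ⋯` refining the
partial order: each initial segment is an upper set. -/
def IsLinExt {P : Type*} [PartialOrder P] [Fintype P]
    (e : Fin (Fintype.card P) ≃ P) : Prop :=
  ∀ i j, e i < e j → j < i
section DCPHelpers
variable {P : Type*} [PartialOrder P]

lemma dcp_not_le_of_covBy {u p q : P} (hp : u ⋖ p) (hq : u ⋖ q) (hne : p ≠ q) :
    ¬ p ≤ q := fun h => hq.2 hp.lt (h.lt_of_ne hne)

lemma dcp_chain_greatest {S : Set P} [Finite P] (hne : S.Nonempty)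
    (hch : IsChain (· ≤ ·) S) : ∃ g ∈ S, ∀ x ∈ S, x ≤ g := by
  obtain ⟨g, hgS, hg⟩ := Set.Finite.exists_maximalFor id S (Set.toFinite S) hne
  refine ⟨g, hgS, fun x hx => ?_⟩
  rcases eq_or_ne x g with rfl | hxg
  · exact le_rfl
  · rcases hch hx hgS hxg with h | h
    · exact h
    · exact hg hx h

lemma dcp_chain_least {S : Set P} [Finite P] (hne : S.Nonempty)
    (hch : IsChain (· ≤ ·) S) : ∃ g ∈ S, ∀ x ∈ S, g ≤ x := by
  obtain ⟨g, hgS, hg⟩ := Set.Finite.exists_minimalFor id S (Set.toFinite S) hne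
  refine ⟨g, hgS, fun x hx => ?_⟩
  rcases eq_or_ne x g with rfl | hxg
  · exact le_rfl
  · rcases hch hx hgS hxg with h | h
    · exact hg hx h
    · exact h

end DCPHelpers

namespace IsDkIntervalWith
variable {P : Type*} [PartialOrder P]

variable {k : ℕ} {a b w z : P}

protected lemma symm (h : IsDkIntervalWith k a b w z) : IsDkIntervalWith k a b z w := by
  obtain ⟨hab, ⟨hk, hwS, hzS, hwz, hzw, htri, hTc, hNc, hTcard⟩, hNcard⟩ := h
  have e1 : {x ∈ Set.Icc a b | x ≤ z ∧ x ≤ w} = {x ∈ Set.Icc a b | x ≤ w ∧ x ≤ z} := by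
    ext x; exact ⟨fun ⟨h1, h2, h3⟩ => ⟨h1, h3, h2⟩, fun ⟨h1, h2, h3⟩ => ⟨h1, h3, h2⟩⟩
  have e2 : {x ∈ Set.Icc a b | z ≤ x ∧ w ≤ x} = {x ∈ Set.Icc a b | w ≤ x ∧ z ≤ x} := by
    ext x; exact ⟨fun ⟨h1, h2, h3⟩ => ⟨h1, h3, h2⟩, fun ⟨h1, h2, h3⟩ => ⟨h1, h3, h2⟩⟩
  refine ⟨hab, ⟨hk, hzS, hwS, hzw, hwz, fun x hx => ?_, ?_, ?_, ?_⟩, ?_⟩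
  · rcases htri x hx with h | h | ⟨h1, h2⟩ | ⟨h1, h2⟩
    · exact Or.inr (Or.inl h)
    · exact Or.inl h
    · exact Or.inr (Or.inr (Or.inl ⟨h2, h1⟩))
    · exact Or.inr (Or.inr (Or.inr ⟨h2, h1⟩))
  · rw [e1]; exact hTc
  · rw [e2]; exact hNc
  · rw [e1]; exact hTcard
  · rw [e2]; exact hNcard

variable (h : IsDkIntervalWith k a b w z)
include h

protected lemma w_mem : w ∈ Set.Icc a b := h.2.1.2.1
protected lemma z_mem : z ∈ Set.Icc a b := h.2.1.2.2.1
protected lemma not_wz : ¬ w ≤ z := h.2.1.2.2.2.1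
protected lemma not_zw : ¬ z ≤ w := h.2.1.2.2.2.2.1
protected lemma tri (x : P) (hx : x ∈ Set.Icc a b) :
    x = w ∨ x = z ∨ (x ≤ w ∧ x ≤ z) ∨ (w ≤ x ∧ z ≤ x) :=
  h.2.1.2.2.2.2.2.1 x hx

protected lemma w_ne_z : w ≠ z := fun e => h.not_wz (e ▸ le_rfl)

protected lemma a_lt_w : a < w := by
  refine lt_of_le_of_ne h.w_mem.1 fun e => h.not_wz ?_
  exact e ▸ h.z_mem.1

protected lemma a_lt_z : a < z := h.symm.a_lt_w

protected lemma w_lt_b : w < b := by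
  refine lt_of_le_of_ne h.w_mem.2 fun e => h.not_zw ?_
  exact e ▸ h.z_mem.2

protected lemma z_lt_b : z < b := h.symm.w_lt_b

protected lemma a_lt_b : a < b := h.a_lt_w.trans h.w_lt_b

protected lemma a_ne_w : a ≠ w := h.a_lt_w.ne
protected lemma b_ne_w : b ≠ w := h.w_lt_b.ne'

/-- trichotomy into the four pieces -/
protected lemma tri4 (x : P) (hx : x ∈ Set.Icc a b) :
    x ∈ {x ∈ Set.Icc a b | x ≤ w ∧ x ≤ z} ∨ x = w ∨ x = z ∨
      x ∈ {x ∈ Set.Icc a b | w ≤ x ∧ z ≤ x} := by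
  rcases h.tri x hx with e | e | ⟨h1, h2⟩ | ⟨h1, h2⟩
  · exact Or.inr (Or.inl e)
  · exact Or.inr (Or.inr (Or.inl e))
  · exact Or.inl ⟨hx, h1, h2⟩
  · exact Or.inr (Or.inr (Or.inr ⟨hx, h1, h2⟩))

protected lemma le_w_cases (x : P) (hx : x ∈ Set.Icc a b) (hxw : x ≤ w) :
    x ∈ {x ∈ Set.Icc a b | x ≤ w ∧ x ≤ z} ∨ x = w := by
  rcases h.tri x hx with e | e | ⟨h1, h2⟩ | ⟨h1, h2⟩
  · exact Or.inr e
  · exact absurd (e ▸ hxw) h.not_zw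
  · exact Or.inl ⟨hx, h1, h2⟩
  · exact Or.inr (le_antisymm hxw h1)

protected lemma ge_w_cases (x : P) (hx : x ∈ Set.Icc a b) (hxw : w ≤ x) :
    x ∈ {x ∈ Set.Icc a b | w ≤ x ∧ z ≤ x} ∨ x = w := by
  rcases h.tri x hx with e | e | ⟨h1, h2⟩ | ⟨h1, h2⟩
  · exact Or.inr e
  · exact absurd (e ▸ hxw) h.not_wz
  · exact Or.inr (le_antisymm h1 hxw)
  · exact Or.inl ⟨hx, h1, h2⟩
  
protected lemma a_mem_tail : a ∈ {x ∈ Set.Icc a b | x ≤ w ∧ x ≤ z} :=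
  ⟨⟨le_rfl, h.1⟩, h.w_mem.1, h.z_mem.1⟩

protected lemma b_mem_neck : b ∈ {x ∈ Set.Icc a b | w ≤ x ∧ z ≤ x} :=
  ⟨⟨h.1, le_rfl⟩, h.w_mem.2, h.z_mem.2⟩

end IsDkIntervalWith

namespace IsDkIntervalWith
variable {P : Type*} [PartialOrder P] {k : ℕ} {a b w z : P}

protected lemma k_le (h : IsDkIntervalWith k a b w z) : 3 ≤ k := h.2.1.1

protected lemma tail_card (h : IsDkIntervalWith k a b w z) :
    {x ∈ Set.Icc a b | x ≤ w ∧ x ≤ z}.ncard = k - 2 := h.2.1.2.2.2.2.2.2.2.2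

protected lemma neck_card (h : IsDkIntervalWith k a b w z) :
    {x ∈ Set.Icc a b | w ≤ x ∧ z ≤ x}.ncard = k - 2 := h.2.2

protected lemma tail_chain (h : IsDkIntervalWith k a b w z) :
    IsChain (· ≤ ·) {x ∈ Set.Icc a b | x ≤ w ∧ x ≤ z} := h.2.1.2.2.2.2.2.2.1

protected lemma neck_chain (h : IsDkIntervalWith k a b w z) :
    IsChain (· ≤ ·) {x ∈ Set.Icc a b | w ≤ x ∧ z ≤ x} := h.2.1.2.2.2.2.2.2.2.1

end IsDkIntervalWith
section DCPShape
variable {P : Type*} [PartialOrder P] {k : ℕ} {a b w z : P}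

lemma dcp_icc_convex : IsConvexSet (Set.Icc a b) := by
  rintro x ⟨hx1, _⟩ y ⟨_, hy2⟩ t hxt hty
  exact ⟨hx1.trans hxt, hty.trans hy2⟩

namespace IsDkIntervalWith

protected lemma tail_eq_k3 (h : IsDkIntervalWith k a b w z) (hk : k = 3) :
    {x ∈ Set.Icc a b | x ≤ w ∧ x ≤ z} = {a} := by
  have hc : {x ∈ Set.Icc a b | x ≤ w ∧ x ≤ z}.ncard = 1 := by
    rw [h.2.1.2.2.2.2.2.2.2.2, hk]
  obtain ⟨x, hx⟩ := Set.ncard_eq_one.mp hc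
  have := h.a_mem_tail
  rw [hx] at this ⊢
  rw [Set.mem_singleton_iff.mp this]

protected lemma neck_eq_k3 (h : IsDkIntervalWith k a b w z) (hk : k = 3) :
    {x ∈ Set.Icc a b | w ≤ x ∧ z ≤ x} = {b} := by
  have hc : {x ∈ Set.Icc a b | w ≤ x ∧ z ≤ x}.ncard = 1 := by rw [h.2.2, hk]
  obtain ⟨x, hx⟩ := Set.ncard_eq_one.mp hc
  have := h.b_mem_neck
  rw [hx] at this ⊢
  rw [Set.mem_singleton_iff.mp this]

protected lemma icc_eq_k3 (h : IsDkIntervalWith k a b w z) (hk : k = 3) :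
    Set.Icc a b = {a, w, z, b} := by
  ext x
  constructor
  · intro hx
    rcases h.tri4 x hx with ht | e | e | hn
    · rw [h.tail_eq_k3 hk] at ht; exact Or.inl ht
    · exact Or.inr (Or.inl e)
    · exact Or.inr (Or.inr (Or.inl e))
    · rw [h.neck_eq_k3 hk] at hn
      exact Or.inr (Or.inr (Or.inr hn))
  · rintro (rfl | rfl | rfl | rfl)
    · exact ⟨le_rfl, h.1⟩
    · exact h.w_mem
    · exact h.z_mem
    · exact ⟨h.1, le_rfl⟩

protected lemma a_covby_w (h : IsDkIntervalWith k a b w z) (hk : k = 3) : a ⋖ w := by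
  refine ⟨h.a_lt_w, fun c hac hcw => ?_⟩
  have hc : c ∈ Set.Icc a b := ⟨hac.le, hcw.le.trans h.w_mem.2⟩
  rcases h.le_w_cases c hc hcw.le with ht | e
  · rw [h.tail_eq_k3 hk] at ht
    exact hac.ne' ht
  · exact hcw.ne e

protected lemma a_covby_z (h : IsDkIntervalWith k a b w z) (hk : k = 3) : a ⋖ z :=
  h.symm.a_covby_w hk

protected lemma w_covby_b (h : IsDkIntervalWith k a b w z) (hk : k = 3) : w ⋖ b := by
  refine ⟨h.w_lt_b, fun c hwc hcb => ?_⟩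
  have hc : c ∈ Set.Icc a b := ⟨h.w_mem.1.trans hwc.le, hcb.le⟩
  rcases h.ge_w_cases c hc hwc.le with hn | e
  · rw [h.neck_eq_k3 hk] at hn
    exact hcb.ne hn
  · exact hwc.ne' e

protected lemma z_covby_b (h : IsDkIntervalWith k a b w z) (hk : k = 3) : z ⋖ b :=
  h.symm.w_covby_b hk

/-- elements covered by `b` in a `d_3`-interval, given axiom (2) -/
protected lemma covby_b_k3 (h : IsDkIntervalWith k a b w z) (hk : k = 3)
    (ax2 : ∀ a b : P, IsDInterval a b → ∀ x, x ⋖ b → x ∈ Set.Icc a b)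
    {y : P} (hy : y ⋖ b) : y = w ∨ y = z := by
  have hyI : y ∈ Set.Icc a b := ax2 a b ⟨k, w, z, h⟩ y hy
  rw [h.icc_eq_k3 hk] at hyI
  rcases hyI with rfl | rfl | rfl | rfl
  · exact absurd h.w_lt_b (hy.2 h.a_lt_w)
  · exact Or.inl rfl
  · exact Or.inr rfl
  · exact absurd rfl hy.lt.ne

/-- the full structural bundle for a `d_k`-interval with `k ≥ 4` -/
protected lemma big4 [Finite P] (h : IsDkIntervalWith k a b w z) (hk4 : 4 ≤ k) :
    ∃ t m : P,
      t ∈ {x ∈ Set.Icc a b | x ≤ w ∧ x ≤ z} ∧ t ≠ a ∧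
      (∀ y ∈ {x ∈ Set.Icc a b | x ≤ w ∧ x ≤ z}, y ≠ a → t ≤ y) ∧ a ⋖ t ∧
      (Set.Icc a b \ {a} = Set.Icc t b) ∧
      m ∈ {x ∈ Set.Icc a b | w ≤ x ∧ z ≤ x} ∧ m ≠ b ∧
      (∀ y ∈ {x ∈ Set.Icc a b | w ≤ x ∧ z ≤ x}, y ≠ b → y ≤ m) ∧ m ⋖ b ∧
      (Set.Icc a m = Set.Icc a b \ {b}) ∧
      IsDkIntervalWith (k-1) t m w z ∧
      (Set.Icc a m \ {a} = Set.Icc t m) ∧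
      DkStruct k (Set.Icc a m) w z ∧
      {x ∈ Set.Icc a m | w ≤ x ∧ z ≤ x}.ncard = k - 3 := by
  have hk3 : 3 ≤ k := h.2.1.1
  have hTcard : {x ∈ Set.Icc a b | x ≤ w ∧ x ≤ z}.ncard = k - 2 :=
    h.2.1.2.2.2.2.2.2.2.2
  have hNcard : {x ∈ Set.Icc a b | w ≤ x ∧ z ≤ x}.ncard = k - 2 := h.2.2
  have hTc : IsChain (· ≤ ·) {x ∈ Set.Icc a b | x ≤ w ∧ x ≤ z} :=
    h.2.1.2.2.2.2.2.2.1
  have hNc : IsChain (· ≤ ·) {x ∈ Set.Icc a b | w ≤ x ∧ z ≤ x} :=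
    h.2.1.2.2.2.2.2.2.2.1
  have hwz := h.not_wz
  have hzw := h.not_zw
  -- the element m : the second largest neck element
  have hbN := h.b_mem_neck
  have hN'ne : ({x ∈ Set.Icc a b | w ≤ x ∧ z ≤ x} \ {b}).Nonempty := by
    apply Set.nonempty_of_ncard_ne_zero
    rw [Set.ncard_diff_singleton_of_mem hbN, hNcard]
    omega
  obtain ⟨m, hmN', hmmax'⟩ := dcp_chain_greatest hN'ne (hNc.mono Set.diff_subset)
  have hmN : m ∈ {x ∈ Set.Icc a b | w ≤ x ∧ z ≤ x} := hmN'.1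
  have hmb : m ≠ b := hmN'.2
  have hmmax : ∀ y ∈ {x ∈ Set.Icc a b | w ≤ x ∧ z ≤ x}, y ≠ b → y ≤ m :=
    fun y hy hyb => hmmax' y ⟨hy, hyb⟩
  have hwm : w ≤ m := hmN.2.1
  have hzm : z ≤ m := hmN.2.2
  have hmle : m ≤ b := hmN.1.2
  have hIccam : Set.Icc a m = Set.Icc a b \ {b} := by
    ext x
    constructor
    · rintro ⟨hax, hxm⟩
      refine ⟨⟨hax, hxm.trans hmle⟩, ?_⟩
      rintro rfl
      exact hmb (le_antisymm hmle hxm)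
    · rintro ⟨hx, hxb⟩
      refine ⟨hx.1, ?_⟩
      rcases h.tri x hx with rfl | rfl | ⟨h1, _⟩ | ⟨h1, h2⟩
      · exact hwm
      · exact hzm
      · exact h1.trans hwm
      · exact hmmax x ⟨hx, h1, h2⟩ hxb
  have hmcov : m ⋖ b := by
    refine ⟨lt_of_le_of_ne hmle hmb, fun c hmc hcb => ?_⟩
    have hc : c ∈ Set.Icc a m := by
      rw [hIccam]
      exact ⟨⟨hmN.1.1.trans hmc.le, hcb.le⟩, hcb.ne⟩
    exact hmc.not_ge hc.2
  -- the element t : the second smallest tail element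
  have haT := h.a_mem_tail
  have hT'ne : ({x ∈ Set.Icc a b | x ≤ w ∧ x ≤ z} \ {a}).Nonempty := by
    apply Set.nonempty_of_ncard_ne_zero
    rw [Set.ncard_diff_singleton_of_mem haT, hTcard]
    omega
  obtain ⟨t, htT', htmin'⟩ := dcp_chain_least hT'ne (hTc.mono Set.diff_subset)
  have htT : t ∈ {x ∈ Set.Icc a b | x ≤ w ∧ x ≤ z} := htT'.1
  have hta : t ≠ a := htT'.2
  have htmin : ∀ y ∈ {x ∈ Set.Icc a b | x ≤ w ∧ x ≤ z}, y ≠ a → t ≤ y :=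
    fun y hy hya => htmin' y ⟨hy, hya⟩
  have htw : t ≤ w := htT.2.1
  have htz : t ≤ z := htT.2.2
  have hat : a ≤ t := htT.1.1
  have halt : a < t := lt_of_le_of_ne hat (Ne.symm hta)
  have hcovat : a ⋖ t := by
    refine ⟨halt, fun c hac hct => ?_⟩
    have hc : c ∈ Set.Icc a b := ⟨hac.le, (hct.le.trans htw).trans h.w_mem.2⟩
    rcases h.le_w_cases c hc (hct.le.trans htw) with htl | rfl
    · exact (htmin c htl hac.ne').not_gt hct
    · exact hct.not_ge htw
  have hIcctb : Set.Icc a b \ {a} = Set.Icc t b := by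
    ext x
    constructor
    · rintro ⟨hx, hxa⟩
      refine ⟨?_, hx.2⟩
      rcases h.tri x hx with rfl | rfl | ⟨h1, h2⟩ | ⟨h1, _⟩
      · exact htw
      · exact htz
      · exact htmin x ⟨hx, h1, h2⟩ hxa
      · exact htw.trans h1
    · rintro ⟨htx, hxb⟩
      exact ⟨⟨hat.trans htx, hxb⟩, fun e => halt.not_ge (e ▸ htx)⟩
  -- the shrunken interval
  have htm : t ≤ m := htw.trans hwm
  have hTtm : {x ∈ Set.Icc t m | x ≤ w ∧ x ≤ z}
      = {x ∈ Set.Icc a b | x ≤ w ∧ x ≤ z} \ {a} := by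
    ext x
    constructor
    · rintro ⟨⟨htx, hxm⟩, hxw, hxz⟩
      exact ⟨⟨⟨hat.trans htx, hxw.trans h.w_mem.2⟩, hxw, hxz⟩,
        fun e => halt.not_ge (e ▸ htx)⟩
    · rintro ⟨⟨hxI, hxw, hxz⟩, hxa⟩
      exact ⟨⟨htmin x ⟨hxI, hxw, hxz⟩ hxa, hxw.trans hwm⟩, hxw, hxz⟩
  have hNtm : {x ∈ Set.Icc t m | w ≤ x ∧ z ≤ x}
      = {x ∈ Set.Icc a b | w ≤ x ∧ z ≤ x} \ {b} := by
    ext x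
    constructor
    · rintro ⟨⟨htx, hxm⟩, hwx, hzx⟩
      refine ⟨⟨⟨hat.trans htx, hxm.trans hmle⟩, hwx, hzx⟩, ?_⟩
      rintro rfl
      exact hmb (le_antisymm hmle hxm)
    · rintro ⟨⟨hxI, hwx, hzx⟩, hxb⟩
      exact ⟨⟨htw.trans hwx, hmmax x ⟨hxI, hwx, hzx⟩ hxb⟩, hwx, hzx⟩
  have hshrink : IsDkIntervalWith (k-1) t m w z := by
    refine ⟨htm, ⟨by omega, ⟨htw, hwm⟩, ⟨htz, hzm⟩, hwz, hzw,
      fun x hx => h.tri x ⟨hat.trans hx.1, hx.2.trans hmle⟩, ?_, ?_, ?_⟩, ?_⟩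
    · rw [hTtm]; exact hTc.mono Set.diff_subset
    · rw [hNtm]; exact hNc.mono Set.diff_subset
    · rw [hTtm, Set.ncard_diff_singleton_of_mem haT, hTcard]
      omega
    · rw [hNtm, Set.ncard_diff_singleton_of_mem hbN, hNcard]
      omega
  have hdiffa : Set.Icc a m \ {a} = Set.Icc t m := by
    ext x
    constructor
    · rintro ⟨⟨hax, hxm⟩, hxa⟩
      have : x ∈ Set.Icc t b := by
        rw [← hIcctb]
        exact ⟨⟨hax, hxm.trans hmle⟩, hxa⟩
      exact ⟨this.1, hxm⟩
    · rintro ⟨htx, hxm⟩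
      exact ⟨⟨hat.trans htx, hxm⟩, fun e => halt.not_ge (e ▸ htx)⟩
  -- S = Icc a m as a d_k^- structure
  have hTam : {x ∈ Set.Icc a m | x ≤ w ∧ x ≤ z}
      = {x ∈ Set.Icc a b | x ≤ w ∧ x ≤ z} := by
    ext x
    constructor
    · rintro ⟨⟨hax, hxm⟩, hxw, hxz⟩
      exact ⟨⟨hax, hxw.trans h.w_mem.2⟩, hxw, hxz⟩
    · rintro ⟨hxI, hxw, hxz⟩
      exact ⟨⟨hxI.1, hxw.trans hwm⟩, hxw, hxz⟩
  have hNam : {x ∈ Set.Icc a m | w ≤ x ∧ z ≤ x}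
      = {x ∈ Set.Icc a b | w ≤ x ∧ z ≤ x} \ {b} := by
    ext x
    constructor
    · rintro ⟨⟨hax, hxm⟩, hwx, hzx⟩
      refine ⟨⟨⟨hax, hxm.trans hmle⟩, hwx, hzx⟩, ?_⟩
      rintro rfl
      exact hmb (le_antisymm hmle hxm)
    · rintro ⟨⟨hxI, hwx, hzx⟩, hxb⟩
      exact ⟨⟨hxI.1, hmmax x ⟨hxI, hwx, hzx⟩ hxb⟩, hwx, hzx⟩
  have hstruct : DkStruct k (Set.Icc a m) w z := by
    refine ⟨hk3, ⟨h.w_mem.1, hwm⟩, ⟨h.z_mem.1, hzm⟩, hwz, hzw,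
      fun x hx => h.tri x ⟨hx.1, hx.2.trans hmle⟩, ?_, ?_, ?_⟩
    · rw [hTam]; exact hTc
    · rw [hNam]; exact hNc.mono Set.diff_subset
    · rw [hTam]; exact hTcard
  have hNamcard : {x ∈ Set.Icc a m | w ≤ x ∧ z ≤ x}.ncard = k - 3 := by
    rw [hNam, Set.ncard_diff_singleton_of_mem hbN, hNcard]
    omega
  exact ⟨t, m, htT, hta, htmin, hcovat, hIcctb, hmN, hmb, hmmax, hmcov,
    hIccam, hshrink, hdiffa, hstruct, hNamcard⟩

end IsDkIntervalWith
end DCPShape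
section DCPComplete
variable {P : Type*} [PartialOrder P]

lemma dcp_covby_mem {u p : P} (h : u ⋖ p) {v : P} (h1 : u ≤ v) (h2 : v ≤ p) :
    v = u ∨ v = p := by
  rcases eq_or_lt_of_le h1 with e | hlt
  · exact Or.inl e.symm
  · rcases eq_or_lt_of_le h2 with e | hlt2
    · exact Or.inr e
    · exact absurd hlt2 (h.2 hlt)

lemma dcp_dint_lt {a b : P} (h : IsDInterval a b) : a < b := by
  obtain ⟨k, w, z, hI⟩ := h
  exact hI.a_lt_b

lemma IsDkIntervalWith.covby_b_k4 {k : ℕ} {a b w z m : P}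
    (h : IsDkIntervalWith k a b w z)
    (ax2 : ∀ a b : P, IsDInterval a b → ∀ x, x ⋖ b → x ∈ Set.Icc a b)
    (hmlt : m < b) (hIccam : Set.Icc a m = Set.Icc a b \ {b})
    {y : P} (hy : y ⋖ b) : y = m := by
  have hyI : y ∈ Set.Icc a b := ax2 a b ⟨k, w, z, h⟩ y hy
  have hym : y ∈ Set.Icc a m := by
    rw [hIccam]; exact ⟨hyI, hy.lt.ne⟩
  rcases eq_or_lt_of_le hym.2 with e | hlt
  · exact e
  · exact absurd hmlt (hy.2 hlt)

/-- a "vee" configuration is a `d_3^-`-convex set -/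
lemma dcp_vee_minus {u p q : P} (hup : u ⋖ p) (huq : u ⋖ q)
    (hpq : ¬ p ≤ q) (hqp : ¬ q ≤ p) : IsDkMinusConvex 3 ({u, p, q} : Set P) := by
  have hpu : ¬ p ≤ u := fun h => hup.lt.not_ge h
  have hqu : ¬ q ≤ u := fun h => huq.lt.not_ge h
  have hconv : IsConvexSet ({u, p, q} : Set P) := by
    rintro x (rfl | rfl | rfl) y (rfl | rfl | rfl) v hxv hvy
    · exact Or.inl (le_antisymm hvy hxv)
    · rcases dcp_covby_mem hup hxv hvy with rfl | rfl
      · exact Or.inl rfl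
      · exact Or.inr (Or.inl rfl)
    · rcases dcp_covby_mem huq hxv hvy with rfl | rfl
      · exact Or.inl rfl
      · exact Or.inr (Or.inr rfl)
    · exact absurd (hxv.trans hvy) hpu
    · exact Or.inr (Or.inl (le_antisymm hvy hxv))
    · exact absurd (hxv.trans hvy) hpq
    · exact absurd (hxv.trans hvy) hqu
    · exact absurd (hxv.trans hvy) hqp
    · exact Or.inr (Or.inr (le_antisymm hvy hxv))
  have htail : {x ∈ ({u, p, q} : Set P) | x ≤ p ∧ x ≤ q} = {u} := by
    ext x
    constructor
    · rintro ⟨(rfl | rfl | rfl), hxp, hxq⟩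
      · rfl
      · exact absurd hxq hpq
      · exact absurd hxp hqp
    · rintro rfl
      exact ⟨Or.inl rfl, hup.le, huq.le⟩
  have hneck : {x ∈ ({u, p, q} : Set P) | p ≤ x ∧ q ≤ x} = ∅ := by
    ext x
    simp only [Set.mem_empty_iff_false, iff_false]
    rintro ⟨(rfl | rfl | rfl), hpx, hqx⟩
    · exact hpu hpx
    · exact hqp hqx
    · exact hpq hpx
  have hminus : IsDkMinusConvex 3 ({u, p, q} : Set P) := by
    refine ⟨hconv, p, q, ⟨le_rfl, Or.inr (Or.inl rfl), Or.inr (Or.inr rfl),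
      hpq, hqp, ?_, ?_, ?_, ?_⟩, ?_⟩
    · rintro x (rfl | rfl | rfl)
      · exact Or.inr (Or.inr (Or.inl ⟨hup.le, huq.le⟩))
      · exact Or.inl rfl
      · exact Or.inr (Or.inl rfl)
    · rw [htail]; exact Set.Subsingleton.isChain Set.subsingleton_singleton
    · rw [hneck]; exact Set.Subsingleton.isChain Set.subsingleton_empty
    · rw [htail]; exact Set.ncard_singleton u
    · rw [hneck]; simp
  exact hminus

/-- completing a "diamond minus top" configuration -/
lemma dcp_d3_complete [Finite P] (hP : IsDComplete P) {u p q : P}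
    (hup : u ⋖ p) (huq : u ⋖ q) (hpq : ¬ p ≤ q) (hqp : ¬ q ≤ p) :
    ∃ c, IsDkIntervalWith 3 u c p q ∧ Set.Icc u c = {u, p, q, c} ∧
      c ∉ ({u, p, q} : Set P) ∧ p ⋖ c ∧ q ⋖ c ∧ (∀ y, y ⋖ c → y = p ∨ y = q) := by
  have hpu : ¬ p ≤ u := fun h => hup.lt.not_ge h
  have hqu : ¬ q ≤ u := fun h => huq.lt.not_ge h
  have hne : p ≠ q := fun e => hpq (e ▸ le_rfl)
  have hminus := dcp_vee_minus hup huq hpq hqp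
  obtain ⟨c, hcS, a0, _, hIcc⟩ := hP.1 3 ({u, p, q} : Set P) hminus
  have humem : u ∈ Set.Icc a0 c := by rw [hIcc]; exact Or.inr (Or.inl rfl)
  have hpmem : p ∈ Set.Icc a0 c := by rw [hIcc]; exact Or.inr (Or.inr (Or.inl rfl))
  have hqmem : q ∈ Set.Icc a0 c := by
    rw [hIcc]; exact Or.inr (Or.inr (Or.inr rfl))
  have ha0 : a0 = u := by
    have : a0 ∈ Set.Icc a0 c := ⟨le_rfl, humem.1.trans humem.2⟩
    rw [hIcc] at this
    rcases this with rfl | rfl | rfl | rfl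
    · exact absurd (le_antisymm humem.1 humem.2) (fun e => hcS (e ▸ Or.inl rfl))
    · rfl
    · exact absurd humem.1 hpu
    · exact absurd humem.1 hqu
  rw [ha0] at hIcc humem hpmem hqmem
  have hIccu : Set.Icc u c = ({u, p, q, c} : Set P) := by
    rw [hIcc]
    ext x
    simp only [Set.mem_insert_iff, Set.mem_singleton_iff]
    tauto
  have hpc : p ≤ c := hpmem.2
  have hqc : q ≤ c := hqmem.2
  have hpnec : p ≠ c := fun e => hcS (e ▸ Or.inr (Or.inl rfl))
  have hqnec : q ≠ c := fun e => hcS (e ▸ Or.inr (Or.inr rfl))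
  have huc : u ≤ c := humem.1.trans humem.2
  have htail2 : {x ∈ Set.Icc u c | x ≤ p ∧ x ≤ q} = {u} := by
    ext x
    constructor
    · rintro ⟨hx, hxp, hxq⟩
      rw [hIccu] at hx
      rcases hx with rfl | rfl | rfl | rfl
      · rfl
      · exact absurd hxq hpq
      · exact absurd hxp hqp
      · exact absurd (le_antisymm hxp hpc).symm hpnec
    · rintro rfl
      exact ⟨⟨le_rfl, huc⟩, hup.le, huq.le⟩
  have hneck2 : {x ∈ Set.Icc u c | p ≤ x ∧ q ≤ x} = {c} := by
    ext x
    constructor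
    · rintro ⟨hx, hpx, hqx⟩
      rw [hIccu] at hx
      rcases hx with rfl | rfl | rfl | rfl
      · exact absurd hpx hpu
      · exact absurd hqx hqp
      · exact absurd hpx hpq
      · rfl
    · rintro rfl
      exact ⟨⟨huc, le_rfl⟩, hpc, hqc⟩
  have hint : IsDkIntervalWith 3 u c p q := by
    refine ⟨huc, ⟨le_rfl, ⟨hup.le, hpc⟩, ⟨huq.le, hqc⟩, hpq, hqp, ?_, ?_, ?_, ?_⟩, ?_⟩
    · intro x hx
      rw [hIccu] at hx
      rcases hx with rfl | rfl | rfl | rfl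
      · exact Or.inr (Or.inr (Or.inl ⟨hup.le, huq.le⟩))
      · exact Or.inl rfl
      · exact Or.inr (Or.inl rfl)
      · exact Or.inr (Or.inr (Or.inr ⟨hpc, hqc⟩))
    · rw [htail2]; exact Set.Subsingleton.isChain Set.subsingleton_singleton
    · rw [hneck2]; exact Set.Subsingleton.isChain Set.subsingleton_singleton
    · rw [htail2]; exact Set.ncard_singleton u
    · rw [hneck2]; exact Set.ncard_singleton c
  have hpcov : p ⋖ c := by
    refine ⟨lt_of_le_of_ne hpc hpnec, fun v hpv hvc => ?_⟩
    have hv : v ∈ Set.Icc u c := ⟨hup.le.trans hpv.le, hvc.le⟩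
    rw [hIccu] at hv
    rcases hv with rfl | rfl | rfl | rfl
    · exact hpu hpv.le
    · exact hpv.ne rfl
    · exact hpq hpv.le
    · exact hvc.ne rfl
  have hqcov : q ⋖ c := by
    refine ⟨lt_of_le_of_ne hqc hqnec, fun v hqv hvc => ?_⟩
    have hv : v ∈ Set.Icc u c := ⟨huq.le.trans hqv.le, hvc.le⟩
    rw [hIccu] at hv
    rcases hv with rfl | rfl | rfl | rfl
    · exact hqu hqv.le
    · exact hqp hqv.le
    · exact hqv.ne rfl
    · exact hvc.ne rfl
  refine ⟨c, hint, hIccu, hcS, hpcov, hqcov, fun y hy => ?_⟩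
  have hyI : y ∈ Set.Icc u c := hP.2.1 u c ⟨3, p, q, hint⟩ y hy
  rw [hIccu] at hyI
  rcases hyI with rfl | rfl | rfl | rfl
  · exact absurd (lt_of_le_of_ne hpc hpnec) (hy.2 hup.lt)
  · exact Or.inl rfl
  · exact Or.inr rfl
  · exact absurd rfl hy.lt.ne
end DCPComplete
section DCPConfig

/-- A configuration of three pairwise incomparable elements, each pair of which
has a common lower cover. In a finite d-complete poset this is impossible. -/
structure DcpConfig (P : Type*) [PartialOrder P] where
  x : P
  y : P
  u : P
  p : P
  q : P
  r : P
  hxy : ¬ x ≤ y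
  hyx : ¬ y ≤ x
  hxu : ¬ x ≤ u
  hux : ¬ u ≤ x
  hyu : ¬ y ≤ u
  huy : ¬ u ≤ y
  hpx : p ⋖ x
  hpy : p ⋖ y
  hqx : q ⋖ x
  hqu : q ⋖ u
  hry : r ⋖ y
  hru : r ⋖ u

variable {P : Type*} [PartialOrder P]

lemma dcp_config_step [Finite P] (hP : IsDComplete P) (c : DcpConfig P) :
    ∃ c' : DcpConfig P, c.x < c'.x := by
  obtain ⟨x, y, u, p, q, r, hxy, hyx, hxu, hux, hyu, huy,
    hpx, hpy, hqx, hqu, hry, hru⟩ := c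
  have hxney : x ≠ y := fun e => hxy (e ▸ le_rfl)
  have hxneu : x ≠ u := fun e => hxu (e ▸ le_rfl)
  have hyneu : y ≠ u := fun e => hyu (e ▸ le_rfl)
  obtain ⟨X, hXint, hXicc, _, hxX, hyX, hXcov⟩ := dcp_d3_complete hP hpx hpy hxy hyx
  obtain ⟨Y, hYint, hYicc, _, hxY, huY, hYcov⟩ := dcp_d3_complete hP hqx hqu hxu hux
  obtain ⟨Z, hZint, hZicc, _, hyZ, huZ, hZcov⟩ := dcp_d3_complete hP hry hru hyu huy
  have hXY : ¬ X ≤ Y := by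
    intro hle
    have : X ∈ Set.Icc q Y := ⟨hqx.le.trans hxX.le, hle⟩
    rw [hYicc] at this
    rcases this with rfl | rfl | rfl | rfl
    · exact (hqx.lt.trans hxX.lt).ne' rfl
    · exact hxX.lt.ne rfl
    · exact hxu hxX.le
    · rcases hYcov y hyX with rfl | rfl
      · exact hxney rfl
      · exact hyneu rfl
  have hYX : ¬ Y ≤ X := by
    intro hle
    have : Y ∈ Set.Icc p X := ⟨hpx.le.trans hxY.le, hle⟩
    rw [hXicc] at this
    rcases this with rfl | rfl | rfl | rfl
    · exact (hpx.lt.trans hxY.lt).ne' rfl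
    · exact hxY.lt.ne rfl
    · exact hxy hxY.le
    · rcases hXcov u huY with rfl | rfl
      · exact hxneu rfl
      · exact hyneu rfl
  have hXZ : ¬ X ≤ Z := by
    intro hle
    have : X ∈ Set.Icc r Z := ⟨hry.le.trans hyX.le, hle⟩
    rw [hZicc] at this
    rcases this with rfl | rfl | rfl | rfl
    · exact (hry.lt.trans hyX.lt).ne' rfl
    · exact hyX.lt.ne rfl
    · exact hyu hyX.le
    · rcases hZcov x hxX with rfl | rfl
      · exact hxney rfl
      · exact hxneu rfl
  have hZX : ¬ Z ≤ X := by
    intro hle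
    have : Z ∈ Set.Icc p X := ⟨hpy.le.trans hyZ.le, hle⟩
    rw [hXicc] at this
    rcases this with rfl | rfl | rfl | rfl
    · exact (hpy.lt.trans hyZ.lt).ne' rfl
    · exact hyx hyZ.le
    · exact hyZ.lt.ne rfl
    · rcases hXcov u huZ with rfl | rfl
      · exact hxneu rfl
      · exact hyneu rfl
  have hYZ : ¬ Y ≤ Z := by
    intro hle
    have : Y ∈ Set.Icc r Z := ⟨hru.le.trans huY.le, hle⟩
    rw [hZicc] at this
    rcases this with rfl | rfl | rfl | rfl
    · exact (hru.lt.trans huY.lt).ne' rfl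
    · exact huy huY.le
    · exact huY.lt.ne rfl
    · rcases hZcov x hxY with rfl | rfl
      · exact hxney rfl
      · exact hxneu rfl
  have hZY : ¬ Z ≤ Y := by
    intro hle
    have : Z ∈ Set.Icc q Y := ⟨hqu.le.trans huZ.le, hle⟩
    rw [hYicc] at this
    rcases this with rfl | rfl | rfl | rfl
    · exact (hqu.lt.trans huZ.lt).ne' rfl
    · exact hux huZ.le
    · exact huZ.lt.ne rfl
    · rcases hYcov y hyZ with rfl | rfl
      · exact hxney rfl
      · exact hyneu rfl
  exact ⟨⟨X, Y, Z, x, y, u, hXY, hYX, hXZ, hZX, hYZ, hZY,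
    hxX, hxY, hyX, hyZ, huY, huZ⟩, hxX.lt⟩

lemma dcp_no_config [Finite P] (hP : IsDComplete P) (c : DcpConfig P) : False := by
  have step : ∀ c : DcpConfig P, ∃ c' : DcpConfig P, c.x < c'.x :=
    fun c => dcp_config_step hP c
  choose f hf using step
  set g : ℕ → DcpConfig P := fun n => f^[n] c with hg
  have hmono : StrictMono (fun n => (g n).x) := by
    apply strictMono_nat_of_lt_succ
    intro n
    have : g (n + 1) = f (g n) := Function.iterate_succ_apply' f n c
    rw [this]
    exact hf (g n)
  obtain ⟨i, j, hne, heq⟩ :=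
    Finite.exists_ne_map_eq_of_infinite (fun n => (g n).x)
  exact hne (hmono.injective heq)

end DCPConfig
section DCPExt
variable {P : Type*} [PartialOrder P]

lemma dcp_ext [Finite P] {r : ℕ} {v t s b b' : P} {T : Set P}
    (hr : IsDkIntervalWith r v t b b')
    (htail : {x ∈ Set.Icc v t | x ≤ b ∧ x ≤ b'} = T)
    (hncov : ∀ c ∈ Set.Icc v t, (b ≤ c ∨ b' ≤ c) → ∀ y, y ⋖ c → y ∈ Set.Icc v t)
    (hdown : ∀ e y, y ∈ T → e ≤ y → s ≤ e → e = s ∨ e ∈ T)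
    (hsv : s ≤ v) :
    Set.Icc s t = insert s (Set.Icc v t) := by
  have hTsub : T ⊆ Set.Icc v t := fun x hx => by
    rw [← htail] at hx; exact hx.1
  ext el
  constructor
  · rintro ⟨hsel, helt⟩
    rw [Set.mem_insert_iff]
    have hDne : ({c ∈ Set.Icc v t | el ≤ c ∧ (b ≤ c ∨ b' ≤ c)}).Nonempty :=
      ⟨t, ⟨hr.1, le_rfl⟩, helt, Or.inl hr.w_mem.2⟩
    obtain ⟨c, hcD, hcmin⟩ := Set.Finite.exists_minimalFor id
      {c ∈ Set.Icc v t | el ≤ c ∧ (b ≤ c ∨ b' ≤ c)} (Set.toFinite _) hDne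
    rcases eq_or_lt_of_le hcD.2.1 with e | hlt
    · exact Or.inr (e ▸ hcD.1)
    · obtain ⟨y, hely, hyc⟩ := exists_le_covBy_of_lt hlt
      have hyI : y ∈ Set.Icc v t := hncov c hcD.1 hcD.2.2 y hyc
      rcases hr.tri4 y hyI with hyT | rfl | rfl | hyN
      · rw [htail] at hyT
        rcases hdown el y hyT hely hsel with rfl | helT
        · exact Or.inl rfl
        · exact Or.inr (hTsub helT)
      · have : c = y := le_antisymm (hcmin ⟨hyI, hely, Or.inl le_rfl⟩ hyc.lt.le) hyc.lt.le
        exact absurd this hyc.lt.ne'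
      · have : c = y := le_antisymm (hcmin ⟨hyI, hely, Or.inr le_rfl⟩ hyc.lt.le) hyc.lt.le
        exact absurd this hyc.lt.ne'
      · have : c = y := le_antisymm (hcmin ⟨hyI, hely, Or.inl hyN.2.1⟩ hyc.lt.le) hyc.lt.le
        exact absurd this hyc.lt.ne'
  · rintro hel
    rw [Set.mem_insert_iff] at hel
    rcases hel with rfl | hel
    · exact ⟨le_rfl, hsv.trans hr.1⟩
    · exact ⟨hsv.trans hel.1, hel.2⟩

end DCPExt

section DCPCompletionMin
variable {P : Type*} [PartialOrder P]

lemma dcp_completion_min {S : Set P} {c a0 s : P} (hcS : c ∉ S)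
    (hIcc : Set.Icc a0 c = insert c S) (hs : s ∈ S) (hmin : ∀ x ∈ S, s ≤ x) :
    Set.Icc s c = insert c S := by
  have hsmem : s ∈ Set.Icc a0 c := by
    rw [hIcc]; exact Set.mem_insert_of_mem _ hs
  have ha0mem : a0 ∈ Set.Icc a0 c := ⟨le_rfl, hsmem.1.trans hsmem.2⟩
  rw [hIcc] at ha0mem
  have ha0 : a0 = s := by
    rcases ha0mem with h | ha0S
    · subst h
      have : s = a0 := le_antisymm hsmem.2 hsmem.1
      exact absurd (this ▸ hs) hcS
    · exact le_antisymm hsmem.1 (hmin a0 ha0S)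
  rw [← ha0]; exact hIcc

end DCPCompletionMin

section DCPSide
variable {P : Type*} [PartialOrder P]

set_option maxHeartbeats 1000000 in
/-- adjoining a new minimum to the tower interval `[v, t]` gives a
`d_{r+1}^-`-convex set -/
lemma dcp_side [Finite P] {r : ℕ} {v t s m b b' : P} {NS : Set P}
    (hr : IsDkIntervalWith r v t b b')
    (htail : {x ∈ Set.Icc v t | x ≤ b ∧ x ≤ b'} = {y ∈ NS | v ≤ y})
    (hncov : ∀ c ∈ Set.Icc v t, (b ≤ c ∨ b' ≤ c) → ∀ y, y ⋖ c → y ∈ Set.Icc v t)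
    (hNSchain : IsChain (· ≤ ·) NS)
    (hNSub : ∀ y ∈ NS, y ≤ m)
    (hmb : m < b) (hmb' : m < b')
    (hbb' : ¬ b ≤ b') (hb'b : ¬ b' ≤ b)
    (hsv : s ≤ v) (hnvs : ¬ v ≤ s) (hsmle : s ≤ m)
    (hdown : ∀ e y, y ∈ {y ∈ NS | v ≤ y} → e ≤ y → s ≤ e →
      e = s ∨ e ∈ {y ∈ NS | v ≤ y}) :
    IsDkMinusConvex (r + 1) (insert s (Set.Icc v t)) ∧
    Set.Icc s t = insert s (Set.Icc v t) ∧
    (∀ x ∈ insert s (Set.Icc v t), s ≤ x) ∧ s ∉ Set.Icc v t ∧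
    ({x ∈ insert s (Set.Icc v t) | x ≤ b ∧ x ≤ b'}
        = insert s {y ∈ NS | v ≤ y}) := by
  have hTsubI : {y ∈ NS | v ≤ y} ⊆ Set.Icc v t := fun x hx => by
    rw [← htail] at hx; exact hx.1
  have hsb : s ≤ b := hsmle.trans hmb.le
  have hsb' : s ≤ b' := hsmle.trans hmb'.le
  have hsnotI : s ∉ Set.Icc v t := fun h => hnvs h.1
  have hsnotT : s ∉ {y ∈ NS | v ≤ y} := fun h => hnvs h.2
  have hext : Set.Icc s t = insert s (Set.Icc v t) :=
    dcp_ext hr htail hncov hdown hsv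
  have hmin : ∀ x ∈ insert s (Set.Icc v t), s ≤ x := by
    rintro x hx
    rcases Set.mem_insert_iff.mp hx with rfl | hxI
    · exact le_rfl
    · exact hsv.trans hxI.1
  have htailX : {x ∈ insert s (Set.Icc v t) | x ≤ b ∧ x ≤ b'}
      = insert s {y ∈ NS | v ≤ y} := by
    ext x
    constructor
    · rintro ⟨hx, h1x, h2x⟩
      rcases Set.mem_insert_iff.mp hx with rfl | hxI
      · exact Set.mem_insert _ _
      · refine Set.mem_insert_of_mem _ ?_
        rw [← htail]; exact ⟨hxI, h1x, h2x⟩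
    · intro hx
      rcases Set.mem_insert_iff.mp hx with rfl | hxT
      · exact ⟨Set.mem_insert _ _, hsb, hsb'⟩
      · exact ⟨Set.mem_insert_of_mem _ (hTsubI hxT),
          (hNSub x hxT.1).trans hmb.le, (hNSub x hxT.1).trans hmb'.le⟩
  have hneckX : {x ∈ insert s (Set.Icc v t) | b ≤ x ∧ b' ≤ x}
      = {x ∈ Set.Icc v t | b ≤ x ∧ b' ≤ x} := by
    ext x
    constructor
    · rintro ⟨hx, h1x, h2x⟩
      rcases Set.mem_insert_iff.mp hx with rfl | hxI
      · exact absurd (h1x.trans hsmle) hmb.not_ge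
      · exact ⟨hxI, h1x, h2x⟩
    · rintro ⟨hx, h1x, h2x⟩
      exact ⟨Set.mem_insert_of_mem _ hx, h1x, h2x⟩
  have hrk := hr.k_le
  have hTcard : {y ∈ NS | v ≤ y}.ncard = r - 2 := by
    rw [← htail]; exact hr.tail_card
  have hconv : IsConvexSet (insert s (Set.Icc v t)) := by
    have h0 : IsConvexSet (Set.Icc s t) := dcp_icc_convex
    rwa [hext] at h0
  refine ⟨⟨hconv, b, b', ⟨by omega, Set.mem_insert_of_mem _ hr.w_mem,
    Set.mem_insert_of_mem _ hr.z_mem, hbb', hb'b, ?_, ?_, ?_, ?_⟩, ?_⟩,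
    hext, hmin, hsnotI, htailX⟩
  · intro x hx
    rcases Set.mem_insert_iff.mp hx with rfl | hxI
    · exact Or.inr (Or.inr (Or.inl ⟨hsb, hsb'⟩))
    · exact hr.tri x hxI
  · rw [htailX]
    refine IsChain.insert (hNSchain.mono (fun y hy => hy.1)) ?_
    intro y hy _
    exact Or.inl (hsv.trans hy.2)
  · rw [hneckX]; exact hr.neck_chain
  · rw [htailX, Set.ncard_insert_of_notMem hsnotT (Set.toFinite _), hTcard]
    omega
  · rw [hneckX]
    have := hr.neck_card
    omega

end DCPSide

section DCPStep
variable {P : Type*} [PartialOrder P]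

set_option maxHeartbeats 1000000 in
/-- one step of the downward walk: extend the tower interval `[v, t]` to
`[v', t']` where `v'` is the next neck element down -/
lemma dcp_step [Finite P] (hP : IsDComplete P) {r : ℕ} {v t v' m b b' : P}
    {NS : Set P}
    (hr : IsDkIntervalWith r v t b b')
    (htail : {x ∈ Set.Icc v t | x ≤ b ∧ x ≤ b'} = {y ∈ NS | v ≤ y})
    (hncov : ∀ c ∈ Set.Icc v t, (b ≤ c ∨ b' ≤ c) → ∀ y, y ⋖ c → y ∈ Set.Icc v t)
    (hNSchain : IsChain (· ≤ ·) NS)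
    (hNSub : ∀ y ∈ NS, y ≤ m)
    (hmb : m < b) (hmb' : m < b')
    (hbb' : ¬ b ≤ b') (hb'b : ¬ b' ≤ b)
    (hv' : v' ∈ NS) (hv'v : v' < v)
    (hdown : ∀ e y, y ∈ {y ∈ NS | v ≤ y} → e ≤ y → v' ≤ e →
      e = v' ∨ e ∈ {y ∈ NS | v ≤ y})
    (hT' : insert v' {y ∈ NS | v ≤ y} = {y ∈ NS | v' ≤ y}) :
    ∃ t', IsDkIntervalWith (r+1) v' t' b b' ∧
      ({x ∈ Set.Icc v' t' | x ≤ b ∧ x ≤ b'} = {y ∈ NS | v' ≤ y}) ∧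
      (∀ c ∈ Set.Icc v' t', (b ≤ c ∨ b' ≤ c) → ∀ y, y ⋖ c →
        y ∈ Set.Icc v' t') := by
  have hTsubI : {y ∈ NS | v ≤ y} ⊆ Set.Icc v t := fun x hx => by
    rw [← htail] at hx; exact hx.1
  have hv'm : v' ≤ m := hNSub v' hv'
  obtain ⟨hX, hext, hminX, hv'notI, htailX⟩ := dcp_side hr htail hncov hNSchain
    hNSub hmb hmb' hbb' hb'b hv'v.le hv'v.not_ge hv'm hdown
  obtain ⟨t', ht'X, a0, _, hIcc0⟩ := hP.1 (r+1) _ hX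
  have hIccT : Set.Icc v' t' = insert t' (insert v' (Set.Icc v t)) :=
    dcp_completion_min ht'X hIcc0 (Set.mem_insert _ _) hminX
  have hv'mem : v' ∈ Set.Icc v' t' := by
    rw [hIccT]; exact Set.mem_insert_of_mem _ (Set.mem_insert _ _)
  have hv't' : v' ≤ t' := hv'mem.2
  have hbX : b ∈ insert v' (Set.Icc v t) := Set.mem_insert_of_mem _ hr.w_mem
  have hb'X : b' ∈ insert v' (Set.Icc v t) := Set.mem_insert_of_mem _ hr.z_mem
  have hbmem : b ∈ Set.Icc v' t' := by
    rw [hIccT]; exact Set.mem_insert_of_mem _ hbX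
  have hb'mem : b' ∈ Set.Icc v' t' := by
    rw [hIccT]; exact Set.mem_insert_of_mem _ hb'X
  have hbt' : b ≤ t' := hbmem.2
  have hb't' : b' ≤ t' := hb'mem.2
  have htmem : t ∈ Set.Icc v' t' := by
    rw [hIccT]
    exact Set.mem_insert_of_mem _ (Set.mem_insert_of_mem _ ⟨hr.1, le_rfl⟩)
  have htt' : t ≤ t' := htmem.2
  have ht'nI : t' ∉ Set.Icc v t := fun h => ht'X (Set.mem_insert_of_mem _ h)
  have ht'ne_b : t' ≠ b := fun e => ht'X (e ▸ hbX)
  have hrk := hr.k_le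
  have hTcard : {y ∈ NS | v ≤ y}.ncard = r - 2 := by
    rw [← htail]; exact hr.tail_card
  have hv'notT : v' ∉ {y ∈ NS | v ≤ y} := fun h => hv'v.not_ge h.2
  have hTt' : {x ∈ Set.Icc v' t' | x ≤ b ∧ x ≤ b'} = {y ∈ NS | v' ≤ y} := by
    ext x
    constructor
    · rintro ⟨hx, h1x, h2x⟩
      rw [hIccT] at hx
      rcases Set.mem_insert_iff.mp hx with rfl | hxX
      · exact absurd (le_antisymm h1x hbt') ht'ne_b
      · have : x ∈ insert v' {y ∈ NS | v ≤ y} := by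
          rw [← htailX]; exact ⟨hxX, h1x, h2x⟩
        rw [hT'] at this; exact this
    · intro hy
      rw [← hT'] at hy
      rcases Set.mem_insert_iff.mp hy with rfl | hyT
      · exact ⟨hv'mem, hv'm.trans hmb.le, hv'm.trans hmb'.le⟩
      · have hyI := hTsubI hyT
        exact ⟨⟨hv'v.le.trans hyI.1, hyI.2.trans htt'⟩,
          (hNSub x hyT.1).trans hmb.le, (hNSub x hyT.1).trans hmb'.le⟩
  have hNt' : {x ∈ Set.Icc v' t' | b ≤ x ∧ b' ≤ x}
      = insert t' {x ∈ Set.Icc v t | b ≤ x ∧ b' ≤ x} := by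
    ext x
    constructor
    · rintro ⟨hx, h1x, h2x⟩
      rw [hIccT] at hx
      rcases Set.mem_insert_iff.mp hx with rfl | hxX
      · exact Set.mem_insert _ _
      · rcases Set.mem_insert_iff.mp hxX with rfl | hxI
        · exact absurd (h1x.trans hv'm) hmb.not_ge
        · exact Set.mem_insert_of_mem _ ⟨hxI, h1x, h2x⟩
    · intro hx
      rcases Set.mem_insert_iff.mp hx with rfl | hxN
      · exact ⟨⟨hv't', le_rfl⟩, hbt', hb't'⟩
      · exact ⟨⟨hv'v.le.trans hxN.1.1, hxN.1.2.trans htt'⟩, hxN.2⟩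
  have hr' : IsDkIntervalWith (r+1) v' t' b b' := by
    refine ⟨hv't', ⟨by omega, hbmem, hb'mem, hbb', hb'b, ?_, ?_, ?_, ?_⟩, ?_⟩
    · intro x hx
      rw [hIccT] at hx
      rcases Set.mem_insert_iff.mp hx with rfl | hxX
      · exact Or.inr (Or.inr (Or.inr ⟨hbt', hb't'⟩))
      · rcases Set.mem_insert_iff.mp hxX with rfl | hxI
        · exact Or.inr (Or.inr (Or.inl ⟨hv'm.trans hmb.le, hv'm.trans hmb'.le⟩))
        · exact hr.tri x hxI
    · rw [hTt']
      exact hNSchain.mono (fun y hy => hy.1)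
    · rw [hNt']
      exact IsChain.insert hr.neck_chain (fun y hy _ => Or.inr (hy.1.2.trans htt'))
    · rw [hTt', ← hT',
        Set.ncard_insert_of_notMem hv'notT (Set.toFinite _), hTcard]
      omega
    · rw [hNt',
        Set.ncard_insert_of_notMem (fun h => ht'nI h.1) (Set.toFinite _)]
      have := hr.neck_card
      omega
  refine ⟨t', hr', hTt', ?_⟩
  intro c hc hbc y hy
  rw [hIccT] at hc
  rcases Set.mem_insert_iff.mp hc with rfl | hcX
  · exact hP.2.1 v' c ⟨r+1, b, b', hr'⟩ y hy
  · rcases Set.mem_insert_iff.mp hcX with rfl | hcI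
    · rcases hbc with hbc | hbc
      · exact absurd (hbc.trans hv'm) hmb.not_ge
      · exact absurd (hbc.trans hv'm) hmb'.not_ge
    · have hyI := hncov c hcI hbc y hy
      exact ⟨hv'v.le.trans hyI.1, hyI.2.trans htt'⟩

end DCPStep
section DCPUniqueCompletion
variable {P : Type*} [PartialOrder P]

lemma dcp_unique_completion [Finite P] (hP : IsDComplete P)
    {k k' : ℕ} {a b b' w z w' z' : P}
    (h1 : IsDkIntervalWith k a b w z) (h2 : IsDkIntervalWith k' a b' w' z')
    (hS : Set.Icc a b \ {b} = Set.Icc a b' \ {b'}) : b = b' := by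
  by_contra hne
  -- b and b' are incomparable
  have hbb' : ¬ b ≤ b' := by
    intro hle
    have : b ∈ Set.Icc a b' \ {b'} := ⟨⟨h1.1, hle⟩, hne⟩
    rw [← hS] at this
    exact this.2 rfl
  have hb'b : ¬ b' ≤ b := by
    intro hle
    have : b' ∈ Set.Icc a b \ {b} := ⟨⟨h2.1, hle⟩, Ne.symm hne⟩
    rw [hS] at this
    exact this.2 rfl
  rcases eq_or_lt_of_le h1.k_le with hk3 | hk4
  · -- k = 3 : direct axiom (3) argument
    have hk3 : k = 3 := hk3.symm
    have hbody : Set.Icc a b \ {b} = {a, w, z} := by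
      rw [h1.icc_eq_k3 hk3]
      ext x
      constructor
      · rintro ⟨(rfl | rfl | rfl | rfl), hxb⟩
        · exact Or.inl rfl
        · exact Or.inr (Or.inl rfl)
        · exact Or.inr (Or.inr rfl)
        · exact absurd rfl hxb
      · rintro (rfl | rfl | rfl)
        · exact ⟨Or.inl rfl, h1.a_lt_b.ne⟩
        · exact ⟨Or.inr (Or.inl rfl), h1.w_lt_b.ne⟩
        · exact ⟨Or.inr (Or.inr (Or.inl rfl)), h1.z_lt_b.ne⟩
    -- w and z are covered by both b and b'
    have hwb : w ⋖ b := h1.w_covby_b hk3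
    have hzb : z ⋖ b := h1.z_covby_b hk3
    have hwb'mem : w ∈ Set.Icc a b' \ {b'} := by
      rw [← hS, hbody]; exact Or.inr (Or.inl rfl)
    have hzb'mem : z ∈ Set.Icc a b' \ {b'} := by
      rw [← hS, hbody]; exact Or.inr (Or.inr rfl)
    have hwb' : w ⋖ b' := by
      refine ⟨lt_of_le_of_ne hwb'mem.1.2 hwb'mem.2, fun c hwc hcb' => ?_⟩
      have hc : c ∈ Set.Icc a b' \ {b'} := ⟨⟨h1.w_mem.1.trans hwc.le, hcb'.le⟩, hcb'.ne⟩
      rw [← hS, hbody] at hc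
      rcases hc with rfl | rfl | rfl
      · exact (h1.a_lt_w.trans hwc).ne rfl
      · exact hwc.ne rfl
      · exact h1.not_wz hwc.le
    have hzb' : z ⋖ b' := by
      refine ⟨lt_of_le_of_ne hzb'mem.1.2 hzb'mem.2, fun c hzc hcb' => ?_⟩
      have hc : c ∈ Set.Icc a b' \ {b'} := ⟨⟨h1.z_mem.1.trans hzc.le, hcb'.le⟩, hcb'.ne⟩
      rw [← hS, hbody] at hc
      rcases hc with rfl | rfl | rfl
      · exact (h1.a_lt_z.trans hzc).ne rfl
      · exact h1.not_zw hzc.le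
      · exact hzc.ne rfl
    -- axiom (3) applied to {w,b,b'} and {z,b,b'}
    have hm1 := dcp_vee_minus hwb hwb' hbb' hb'b
    have hm2 := dcp_vee_minus hzb hzb' hbb' hb'b
    have hbody1 : ({w, b, b'} : Set P) \ {w} = {b, b'} :=
      Set.insert_diff_self_of_notMem (by
        rintro (rfl | rfl)
        · exact hwb.lt.ne rfl
        · exact hwb'.lt.ne rfl)
    have hbody2 : ({z, b, b'} : Set P) \ {z} = {b, b'} :=
      Set.insert_diff_self_of_notMem (by
        rintro (rfl | rfl)
        · exact hzb.lt.ne rfl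
        · exact hzb'.lt.ne rfl)
    have heq := hP.2.2 3 3 _ _ hm1 hm2 w (Or.inl rfl) z (Or.inl rfl)
      (by rintro x (rfl | rfl | rfl)
          · exact le_rfl
          · exact hwb.lt.le
          · exact hwb'.lt.le)
      (by rintro x (rfl | rfl | rfl)
          · exact le_rfl
          · exact hzb.lt.le
          · exact hzb'.lt.le)
      (hbody1.trans hbody2.symm)
    have : w ∈ ({z, b, b'} : Set P) := heq ▸ (Or.inl rfl)
    rcases this with rfl | rfl | rfl
    · exact h1.not_wz le_rfl
    · exact hwb.lt.ne rfl
    · exact hwb'.lt.ne rfl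
  · -- k ≥ 4 : tower construction
    have hk4 : 4 ≤ k := hk4
    obtain ⟨_, m, _, _, _, _, _, hmN, hmb, hmmax, hmcov, hIccam, _, _, hstruct, hNScard⟩ :=
      h1.big4 hk4
    have ham : a ≤ m := hmN.1.1
    have hwm : w ≤ m := hmN.2.1
    have hzm : z ≤ m := hmN.2.2
    have hmltb : m < b := hmcov.lt
    have hwz : ¬ w ≤ z := h1.not_wz
    have hzw : ¬ z ≤ w := h1.not_zw
    have hIccam' : Set.Icc a m = Set.Icc a b' \ {b'} := hIccam.trans hS
    have hmb'lt : m < b' := by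
      have hmm : m ∈ Set.Icc a b' \ {b'} := by
        rw [← hIccam']; exact ⟨ham, le_rfl⟩
      exact lt_of_le_of_ne hmm.1.2 hmm.2
    have hmcov' : m ⋖ b' := by
      refine ⟨hmb'lt, fun c hmc hcb' => ?_⟩
      have : c ∈ Set.Icc a m := by
        rw [hIccam']
        exact ⟨⟨ham.trans hmc.le, hcb'.le⟩, hcb'.ne⟩
      exact hmc.not_ge this.2
    have hcovb : ∀ y, y ⋖ b → y = m := fun y hy =>
      h1.covby_b_k4 hP.2.1 hmltb hIccam hy
    have hcovb' : ∀ y, y ⋖ b' → y = m := fun y hy =>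
      h2.covby_b_k4 hP.2.1 hmb'lt hIccam' hy
    obtain ⟨t1, hint1, hicc1, ht1n, hbt1, hb't1, hcovt1⟩ :=
      dcp_d3_complete hP hmcov hmcov' hbb' hb'b
    -- the neck of the d_k^- set `Icc a m`
    have hNSchain : IsChain (· ≤ ·) {x ∈ Set.Icc a m | w ≤ x ∧ z ≤ x} :=
      hstruct.2.2.2.2.2.2.2.1
    have hmNS : m ∈ {x ∈ Set.Icc a m | w ≤ x ∧ z ≤ x} := ⟨⟨ham, le_rfl⟩, hwm, hzm⟩
    have hNSm : {x ∈ Set.Icc a m | w ≤ x ∧ z ≤ x} ⊆ Set.Icc a m := fun y hy => hy.1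
    -- the downward walk
    have walk : ∀ n : ℕ, ∀ v t : P, v ∈ {x ∈ Set.Icc a m | w ≤ x ∧ z ≤ x} →
        ({y ∈ {x ∈ Set.Icc a m | w ≤ x ∧ z ≤ x} | y < v}).ncard = n →
        ∀ r : ℕ, ∀ hr : IsDkIntervalWith r v t b b',
        ({x ∈ Set.Icc v t | x ≤ b ∧ x ≤ b'} =
          {y ∈ {x ∈ Set.Icc a m | w ≤ x ∧ z ≤ x} | v ≤ y}) →
        (∀ c ∈ Set.Icc v t, (b ≤ c ∨ b' ≤ c) → ∀ y, y ⋖ c → y ∈ Set.Icc v t) →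
        False := by
      intro n
      induction n with
      | zero =>
        intro v t hv hcard r hr htail hncov
        have hwv : w ≤ v := hv.2.1
        have hzv : z ≤ v := hv.2.2
        have hempty : {y ∈ {x ∈ Set.Icc a m | w ≤ x ∧ z ≤ x} | y < v} = ∅ :=
          (Set.ncard_eq_zero (Set.toFinite _)).mp hcard
        have hvNS := hv
        have hge : ∀ e, e ∈ {x ∈ Set.Icc a m | w ≤ x ∧ z ≤ x} → v ≤ e := by
          intro e he
          rcases eq_or_ne e v with rfl | hne
          · exact le_rfl
          · rcases hNSchain he hvNS hne with h | h
            · exact absurd (hempty ▸ (⟨he, lt_of_le_of_ne h hne⟩ :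
                e ∈ {y ∈ {x ∈ Set.Icc a m | w ≤ x ∧ z ≤ x} | y < v}))
                (Set.notMem_empty e)
            · exact h
        have hdw : ∀ e y, y ∈ {y ∈ {x ∈ Set.Icc a m | w ≤ x ∧ z ≤ x} | v ≤ y} →
            e ≤ y → w ≤ e →
            e = w ∨ e ∈ {y ∈ {x ∈ Set.Icc a m | w ≤ x ∧ z ≤ x} | v ≤ y} := by
          intro e y hy hey hwe
          have heM : e ∈ Set.Icc a m := ⟨h1.w_mem.1.trans hwe, hey.trans hy.1.1.2⟩
          rcases hstruct.2.2.2.2.2.1 e heM with rfl | rfl | ⟨h1e, _⟩ | ⟨h1e, h2e⟩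
          · exact Or.inl rfl
          · exact absurd hwe hwz
          · exact Or.inl (le_antisymm h1e hwe)
          · exact Or.inr ⟨⟨heM, h1e, h2e⟩, hge e ⟨heM, h1e, h2e⟩⟩
        have hdz : ∀ e y, y ∈ {y ∈ {x ∈ Set.Icc a m | w ≤ x ∧ z ≤ x} | v ≤ y} →
            e ≤ y → z ≤ e →
            e = z ∨ e ∈ {y ∈ {x ∈ Set.Icc a m | w ≤ x ∧ z ≤ x} | v ≤ y} := by
          intro e y hy hey hze
          have heM : e ∈ Set.Icc a m := ⟨h1.z_mem.1.trans hze, hey.trans hy.1.1.2⟩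
          rcases hstruct.2.2.2.2.2.1 e heM with rfl | rfl | ⟨_, h2e⟩ | ⟨h1e, h2e⟩
          · exact absurd hze hzw
          · exact Or.inl rfl
          · exact Or.inl (le_antisymm h2e hze)
          · exact Or.inr ⟨⟨heM, h1e, h2e⟩, hge e ⟨heM, h1e, h2e⟩⟩
        obtain ⟨hXw, hextw, hminw, hwnotI, -⟩ := dcp_side hr htail hncov
          hNSchain (fun y hy => hy.1.2) hmltb hmb'lt hbb' hb'b hwv
          (fun h => hzw (hzv.trans h)) hwm hdw
        obtain ⟨hXz, hextz, hminz, hznotI, -⟩ := dcp_side hr htail hncov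
          hNSchain (fun y hy => hy.1.2) hmltb hmb'lt hbb' hb'b hzv
          (fun h => hwz (hwv.trans h)) hzm hdz
        have heq := hP.2.2 (r+1) (r+1) _ _ hXw hXz w (Set.mem_insert _ _)
          z (Set.mem_insert _ _) hminw hminz
          ((Set.insert_diff_self_of_notMem hwnotI).trans
            (Set.insert_diff_self_of_notMem hznotI).symm)
        have : w ∈ insert z (Set.Icc v t) := heq ▸ Set.mem_insert _ _
        rcases Set.mem_insert_iff.mp this with h | h
        · exact hwz (h ▸ le_rfl)
        · exact hzw (hzv.trans h.1)
      | succ n' IH =>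
        intro v t hv hcard r hr htail hncov
        have hne : ({y ∈ {x ∈ Set.Icc a m | w ≤ x ∧ z ≤ x} | y < v}).Nonempty := by
          apply Set.nonempty_of_ncard_ne_zero
          rw [hcard]; omega
        obtain ⟨v', hv'mem, hv'max'⟩ := dcp_chain_greatest hne
          (hNSchain.mono (fun y hy => hy.1))
        have hv'NS : v' ∈ {x ∈ Set.Icc a m | w ≤ x ∧ z ≤ x} := hv'mem.1
        have hv'v : v' < v := hv'mem.2
        have hv'max : ∀ y ∈ {x ∈ Set.Icc a m | w ≤ x ∧ z ≤ x}, y < v → y ≤ v' :=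
          fun y hy hyv => hv'max' y ⟨hy, hyv⟩
        have hdown : ∀ e y,
            y ∈ {y ∈ {x ∈ Set.Icc a m | w ≤ x ∧ z ≤ x} | v ≤ y} →
            e ≤ y → v' ≤ e →
            e = v' ∨ e ∈ {y ∈ {x ∈ Set.Icc a m | w ≤ x ∧ z ≤ x} | v ≤ y} := by
          intro e y hy hey hv'e
          have heM : e ∈ Set.Icc a m := ⟨hv'NS.1.1.trans hv'e, hey.trans hy.1.1.2⟩
          rcases hstruct.2.2.2.2.2.1 e heM with rfl | rfl | ⟨h1e, _⟩ | ⟨h1e, h2e⟩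
          · exact absurd (hv'NS.2.2.trans hv'e) hzw
          · exact absurd (hv'NS.2.1.trans hv'e) hwz
          · exact absurd ((hv'NS.2.2.trans hv'e).trans h1e) hzw
          · have heNS : e ∈ {x ∈ Set.Icc a m | w ≤ x ∧ z ≤ x} := ⟨heM, h1e, h2e⟩
            rcases eq_or_ne e v' with rfl | hnev'
            · exact Or.inl rfl
            · have hv'lte : v' < e := lt_of_le_of_ne hv'e (Ne.symm hnev')
              rcases eq_or_ne e v with rfl | hnev
              · exact Or.inr ⟨heNS, le_rfl⟩
              · rcases hNSchain heNS hv hnev with h | h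
                · exact absurd (hv'max e heNS (lt_of_le_of_ne h hnev))
                    hv'lte.not_ge
                · exact Or.inr ⟨heNS, h⟩
        have hT' : insert v' {y ∈ {x ∈ Set.Icc a m | w ≤ x ∧ z ≤ x} | v ≤ y}
            = {y ∈ {x ∈ Set.Icc a m | w ≤ x ∧ z ≤ x} | v' ≤ y} := by
          ext y
          constructor
          · intro hy
            rcases Set.mem_insert_iff.mp hy with rfl | hyT
            · exact ⟨hv'NS, le_rfl⟩
            · exact ⟨hyT.1, hv'v.le.trans hyT.2⟩
          · rintro ⟨hyNS, hv'y⟩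
            rcases eq_or_ne y v' with rfl | hnev'
            · exact Set.mem_insert _ _
            · rcases eq_or_ne y v with rfl | hnev
              · exact Set.mem_insert_of_mem _ ⟨hyNS, le_rfl⟩
              · rcases hNSchain hyNS hv hnev with h | h
                · exact absurd (hv'max y hyNS (lt_of_le_of_ne h hnev))
                    (lt_of_le_of_ne hv'y (Ne.symm hnev')).not_ge
                · exact Set.mem_insert_of_mem _ ⟨hyNS, h⟩
        obtain ⟨t', hr', htail', hncov'⟩ := dcp_step hP hr htail hncov hNSchain
          (fun y hy => hy.1.2) hmltb hmb'lt hbb' hb'b hv'NS hv'v hdown hT'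
        have hins : {y ∈ {x ∈ Set.Icc a m | w ≤ x ∧ z ≤ x} | y < v}
            = insert v' {y ∈ {x ∈ Set.Icc a m | w ≤ x ∧ z ≤ x} | y < v'} := by
          ext y
          constructor
          · rintro ⟨hyNS, hyv⟩
            rcases eq_or_ne y v' with rfl | hnev'
            · exact Set.mem_insert _ _
            · exact Set.mem_insert_of_mem _
                ⟨hyNS, lt_of_le_of_ne (hv'max y hyNS hyv) hnev'⟩
          · intro hy
            rcases Set.mem_insert_iff.mp hy with rfl | hyS
            · exact ⟨hv'NS, hv'v⟩
            · exact ⟨hyS.1, hyS.2.trans hv'v⟩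
        have hcard' : ({y ∈ {x ∈ Set.Icc a m | w ≤ x ∧ z ≤ x} | y < v'}).ncard
            = n' := by
          have h2 := hcard
          rw [hins, Set.ncard_insert_of_notMem
            (fun h => lt_irrefl v' h.2) (Set.toFinite _)] at h2
          omega
        exact IH v' t' hv'NS hcard' (r+1) hr' htail' hncov'
    -- base of the walk
    have hm_t1 : m ≤ t1 := hmltb.le.trans hbt1.lt.le
    have htail_base : {x ∈ Set.Icc m t1 | x ≤ b ∧ x ≤ b'}
        = {y ∈ {x ∈ Set.Icc a m | w ≤ x ∧ z ≤ x} | m ≤ y} := by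
      have hRHS : {y ∈ {x ∈ Set.Icc a m | w ≤ x ∧ z ≤ x} | m ≤ y} = {m} := by
        ext y
        constructor
        · rintro ⟨hyNS, hmy⟩
          exact le_antisymm hyNS.1.2 hmy
        · rintro rfl
          exact ⟨hmNS, le_rfl⟩
      rw [hRHS]
      ext x
      constructor
      · rintro ⟨hx, h1x, h2x⟩
        rw [hicc1] at hx
        rcases hx with rfl | rfl | rfl | rfl
        · rfl
        · exact absurd h2x hbb'
        · exact absurd h1x hb'b
        · exact absurd h1x (hbt1.lt.not_ge)
      · rintro rfl
        exact ⟨⟨le_rfl, hm_t1⟩, hmltb.le, hmb'lt.le⟩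
    have hncov_base : ∀ c ∈ Set.Icc m t1, (b ≤ c ∨ b' ≤ c) → ∀ y, y ⋖ c →
        y ∈ Set.Icc m t1 := by
      intro c hc hbc y hy
      rw [hicc1] at hc
      rcases hc with rfl | rfl | rfl | rfl
      · rcases hbc with h | h
        · exact absurd h hmltb.not_ge
        · exact absurd h hmb'lt.not_ge
      · rw [hcovb y hy]
        exact ⟨le_rfl, hm_t1⟩
      · rw [hcovb' y hy]
        exact ⟨le_rfl, hm_t1⟩
      · rcases hcovt1 y hy with rfl | rfl
        · exact ⟨hmltb.le, hbt1.lt.le⟩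
        · exact ⟨hmb'lt.le, hb't1.lt.le⟩
    exact walk _ m t1 hmNS rfl 3 hint1 htail_base hncov_base
end DCPUniqueCompletion
section DCPUniqMin
variable {P : Type*} [PartialOrder P]

protected lemma IsDkIntervalWith.body_k3 {k : ℕ} {a b w z : P}
    (h : IsDkIntervalWith k a b w z) (hk3 : k = 3) :
    Set.Icc a b \ {b} = {a, w, z} := by
  rw [h.icc_eq_k3 hk3]
  ext x
  constructor
  · rintro ⟨(rfl | rfl | rfl | rfl), hxb⟩
    · exact Or.inl rfl
    · exact Or.inr (Or.inl rfl)
    · exact Or.inr (Or.inr rfl)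
    · exact absurd rfl hxb
  · rintro (rfl | rfl | rfl)
    · exact ⟨Or.inl rfl, h.a_lt_b.ne⟩
    · exact ⟨Or.inr (Or.inl rfl), h.w_lt_b.ne⟩
    · exact ⟨Or.inr (Or.inr (Or.inl rfl)), h.z_lt_b.ne⟩

lemma dcp_mix_absurd [Finite P] (hP : IsDComplete P) {k k' : ℕ}
    {a a' b w z w' z' : P} (h1 : IsDkIntervalWith k a b w z) (hk3 : k = 3)
    (h2 : IsDkIntervalWith k' a' b w' z') (hk4 : 4 ≤ k') : False := by
  obtain ⟨_, m', _, _, _, _, _, _, _, _, hmcov', hIccam', _, _, _, _⟩ := h2.big4 hk4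
  have hw : w = m' := h2.covby_b_k4 hP.2.1 hmcov'.lt hIccam' (h1.w_covby_b hk3)
  have hz : z = m' := h2.covby_b_k4 hP.2.1 hmcov'.lt hIccam' (h1.z_covby_b hk3)
  exact h1.w_ne_z (hw.trans hz.symm)

lemma dcp_uniq_min_aux [Finite P] (hP : IsDComplete P) :
    ∀ N : ℕ, ∀ {k k' : ℕ} {a a' b w z w' z' : P}, k + k' ≤ N →
      IsDkIntervalWith k a b w z → IsDkIntervalWith k' a' b w' z' → a = a' := by
  intro N
  induction N using Nat.strong_induction_on with
  | _ N IH =>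
    intro k k' a a' b w z w' z' hN h1 h2
    rcases eq_or_lt_of_le h1.k_le with hk3 | hk4
    · rcases eq_or_lt_of_le h2.k_le with hk3' | hk4'
      · -- both are d_3
        have hk3 : k = 3 := hk3.symm
        have hk3' : k' = 3 := hk3'.symm
        have hw' : w' = w ∨ w' = z := h1.covby_b_k3 hk3 hP.2.1 (h2.w_covby_b hk3')
        have hz' : z' = w ∨ z' = z := h1.covby_b_k3 hk3 hP.2.1 (h2.z_covby_b hk3')
        have hm1 := dcp_vee_minus (h1.a_covby_w hk3) (h1.a_covby_z hk3)
          h1.not_wz h1.not_zw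
        have hm2 := dcp_vee_minus (h2.a_covby_w hk3') (h2.a_covby_z hk3')
          h2.not_wz h2.not_zw
        have hbody1 : ({a, w, z} : Set P) \ {a} = {w, z} :=
          Set.insert_diff_self_of_notMem (by
            rintro (rfl | rfl)
            · exact h1.a_lt_w.ne rfl
            · exact h1.a_lt_z.ne rfl)
        have hbody2 : ({a', w', z'} : Set P) \ {a'} = {w', z'} :=
          Set.insert_diff_self_of_notMem (by
            rintro (rfl | rfl)
            · exact h2.a_lt_w.ne rfl
            · exact h2.a_lt_z.ne rfl)
        have hpair : ({w', z'} : Set P) = {w, z} := by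
          rcases hw' with rfl | rfl
          · rcases hz' with rfl | rfl
            · exact absurd rfl h2.w_ne_z
            · rfl
          · rcases hz' with rfl | rfl
            · exact Set.pair_comm w' z'
            · exact absurd rfl h2.w_ne_z
        have heq := hP.2.2 3 3 _ _ hm1 hm2 a (Set.mem_insert _ _)
          a' (Set.mem_insert _ _)
          (by rintro x (rfl | rfl | rfl)
              · exact le_rfl
              · exact h1.a_lt_w.le
              · exact h1.a_lt_z.le)
          (by rintro x (rfl | rfl | rfl)
              · exact le_rfl
              · exact h2.a_lt_w.le
              · exact h2.a_lt_z.le)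
          (by rw [hbody1, hbody2, hpair])
        have : a ∈ ({a', w', z'} : Set P) := heq ▸ Set.mem_insert _ _
        rcases this with rfl | rfl | rfl
        · rfl
        · rcases hw' with rfl | rfl
          · exact absurd rfl h1.a_lt_w.ne'
          · exact absurd rfl h1.a_lt_z.ne'
        · rcases hz' with rfl | rfl
          · exact absurd rfl h1.a_lt_w.ne'
          · exact absurd rfl h1.a_lt_z.ne'
      · exact absurd (dcp_mix_absurd hP h1 hk3.symm h2 hk4') id
    · rcases eq_or_lt_of_le h2.k_le with hk3' | hk4'
      · exact absurd (dcp_mix_absurd hP h2 hk3'.symm h1 hk4) id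
      · -- both are d_k with k ≥ 4
        obtain ⟨t, m, _, _, _, _, _, _, _, _, hmcov, hIccam, hsh1, hdiffa,
          hstruct, hNcard⟩ := h1.big4 hk4
        obtain ⟨t', m', _, _, _, _, _, _, _, _, hmcov', hIccam', hsh2, hdiffa',
          hstruct', hNcard'⟩ := h2.big4 hk4'
        have hmm : m' = m := h1.covby_b_k4 hP.2.1 hmcov.lt hIccam hmcov'
        rw [hmm] at hsh2 hdiffa' hstruct' hNcard'
        have htt : t = t' := by
          refine IH (N-1) (by omega) (k := k-1) (k' := k'-1) (by omega) hsh1 hsh2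
        have hS1 : IsDkMinusConvex k (Set.Icc a m) :=
          ⟨dcp_icc_convex, w, z, hstruct, hNcard⟩
        have hS2 : IsDkMinusConvex k' (Set.Icc a' m) :=
          ⟨dcp_icc_convex, w', z', hstruct', hNcard'⟩
        have heq := hP.2.2 k k' _ _ hS1 hS2 a ⟨le_rfl, hstruct.2.1.1.trans
            hstruct.2.1.2⟩ a' ⟨le_rfl, hstruct'.2.1.1.trans hstruct'.2.1.2⟩
          (fun x hx => hx.1) (fun x hx => hx.1)
          (by rw [hdiffa, hdiffa', htt])
        have h1m : a ∈ Set.Icc a' m := by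
          rw [← heq]; exact ⟨le_rfl, hstruct.2.1.1.trans hstruct.2.1.2⟩
        have h2m : a' ∈ Set.Icc a m := by
          rw [heq]; exact ⟨le_rfl, hstruct'.2.1.1.trans hstruct'.2.1.2⟩
        exact le_antisymm h2m.1 h1m.1

lemma dcp_uniq_min [Finite P] (hP : IsDComplete P) {a a' b : P}
    (h1 : IsDInterval a b) (h2 : IsDInterval a' b) : a = a' := by
  obtain ⟨k, w, z, h1⟩ := h1
  obtain ⟨k', w', z', h2⟩ := h2
  exact dcp_uniq_min_aux hP (k + k') le_rfl h1 h2
end DCPUniqMin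
section DCPUniqMax
variable {P : Type*} [PartialOrder P]

lemma dcp_three_covers [Finite P] (hP : IsDComplete P) {a p1 p2 p3 : P}
    (h1 : a ⋖ p1) (h2 : a ⋖ p2) (h3 : a ⋖ p3)
    (h12 : p1 ≠ p2) (h13 : p1 ≠ p3) (h23 : p2 ≠ p3) : False :=
  dcp_no_config hP ⟨p1, p2, p3, a, a, a,
    dcp_not_le_of_covBy h1 h2 h12, dcp_not_le_of_covBy h2 h1 h12.symm,
    dcp_not_le_of_covBy h1 h3 h13, dcp_not_le_of_covBy h3 h1 h13.symm,
    dcp_not_le_of_covBy h2 h3 h23, dcp_not_le_of_covBy h3 h2 h23.symm,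
    h1, h2, h1, h3, h2, h3⟩

lemma dcp_case34 [Finite P] (hP : IsDComplete P) {k' : ℕ} {a b b' w z w' z' : P}
    (hmax : ∀ x, a < x → ∀ c c' : P, c ≠ c' →
      IsDInterval x c → IsDInterval x c' → False)
    (h1 : IsDkIntervalWith 3 a b w z) (h2 : IsDkIntervalWith k' a b' w' z')
    (hk4 : 4 ≤ k') : False := by
  obtain ⟨t, m', htT, hta, htmin, hcovat, hIcctb, hmN', hmb', hmmax', hmcov',
    hIccam', hshrink, hdiffa', hstruct', hNcard'⟩ := h2.big4 hk4
  have inner : ∀ s2 : P, IsDkIntervalWith 3 a b t s2 → False := by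
    intro s2 h1'
    have h1w : t ⋖ b := h1'.w_covby_b rfl
    have hbI' : b ∉ Set.Icc a b' := by
      intro hb
      have hs2 : s2 ∈ Set.Icc a b' := ⟨h1'.z_mem.1, h1'.z_mem.2.trans hb.2⟩
      have : s2 ∈ Set.Icc t b' := by
        rw [← hIcctb]; exact ⟨hs2, h1'.a_lt_z.ne'⟩
      exact h1'.not_wz this.1
    rcases eq_or_lt_of_le hk4 with hk4' | hk5
    · -- k' = 4 : t has three distinct covers b, w', z'
      have hk4' : k' = 4 := hk4'.symm
      have htpair : ({a, t} : Set P) = {x ∈ Set.Icc a b' | x ≤ w' ∧ x ≤ z'} := by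
        apply Set.eq_of_subset_of_ncard_le
        · rintro x (rfl | rfl)
          · exact h2.a_mem_tail
          · exact htT
        · rw [h2.tail_card, hk4', Set.ncard_pair (Ne.symm hta)]
        · exact Set.toFinite _
      have htw'ne : t ≠ w' := by
        rintro rfl
        exact h2.not_wz htT.2.2
      have htz'ne : t ≠ z' := by
        rintro rfl
        exact h2.not_zw htT.2.1
      have hcovtw' : t ⋖ w' := by
        refine ⟨lt_of_le_of_ne htT.2.1 htw'ne, fun x htx hxw' => ?_⟩
        have hx : x ∈ Set.Icc a b' := ⟨htT.1.1.trans htx.le, hxw'.le.trans h2.w_mem.2⟩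
        rcases h2.le_w_cases x hx hxw'.le with hxT | rfl
        · rw [← htpair] at hxT
          rcases hxT with rfl | rfl
          · exact hcovat.lt.asymm htx
          · exact htx.ne rfl
        · exact hxw'.ne rfl
      have hcovtz' : t ⋖ z' := by
        refine ⟨lt_of_le_of_ne htT.2.2 htz'ne, fun x htx hxz' => ?_⟩
        have hx : x ∈ Set.Icc a b' := ⟨htT.1.1.trans htx.le, hxz'.le.trans h2.z_mem.2⟩
        rcases h2.symm.le_w_cases x hx hxz'.le with hxT | rfl
        · have hxT' : x ∈ {x ∈ Set.Icc a b' | x ≤ w' ∧ x ≤ z'} :=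
            ⟨hxT.1, hxT.2.2, hxT.2.1⟩
          rw [← htpair] at hxT'
          rcases hxT' with rfl | rfl
          · exact hcovat.lt.asymm htx
          · exact htx.ne rfl
        · exact hxz'.ne rfl
      have hbw' : b ≠ w' := fun e => hbI' (e ▸ h2.w_mem)
      have hbz' : b ≠ z' := fun e => hbI' (e ▸ h2.z_mem)
      exact dcp_three_covers hP h1w hcovtw' hcovtz' hbw' hbz' h2.w_ne_z
    · -- k' ≥ 5 : two d-intervals with minimum t
      have hk5 : 4 ≤ k' - 1 := by omega
      obtain ⟨τ, _, hτT, _, _, hcovtτ, _, _, _, _, _, _, _, _, _, _⟩ :=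
        hshrink.big4 hk5
      have hτI' : τ ∈ Set.Icc a b' :=
        ⟨htT.1.1.trans hτT.1.1, hτT.1.2.trans (hmN'.1.2)⟩
      have hbτ : b ≠ τ := fun e => hbI' (e ▸ hτI')
      obtain ⟨c, hc, -, -, -, -, -⟩ := dcp_d3_complete hP h1w hcovtτ
        (dcp_not_le_of_covBy h1w hcovtτ hbτ)
        (dcp_not_le_of_covBy hcovtτ h1w hbτ.symm)
      have hcm' : c ≠ m' := by
        rintro rfl
        exact hbI' ⟨h1'.w_mem.1.trans h1w.le, hc.w_mem.2.trans hmN'.1.2⟩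
      exact hmax t hcovat.lt c m' hcm' ⟨3, b, τ, hc⟩ ⟨k' - 1, w', z', hshrink⟩
  rcases eq_or_ne t w with rfl | htw
  · exact inner z h1
  · rcases eq_or_ne t z with rfl | htz
    · exact inner w h1.symm
    · exact dcp_three_covers hP (h1.a_covby_w rfl) (h1.a_covby_z rfl) hcovat
        h1.w_ne_z (Ne.symm htw) (Ne.symm htz)

lemma dcp_uniq_max_case [Finite P] (hP : IsDComplete P) {k k' : ℕ}
    {a b b' w z w' z' : P}
    (hmax : ∀ x, a < x → ∀ c c' : P, c ≠ c' →
      IsDInterval x c → IsDInterval x c' → False)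
    (h1 : IsDkIntervalWith k a b w z) (h2 : IsDkIntervalWith k' a b' w' z')
    (hne : b ≠ b') : False := by
  rcases eq_or_lt_of_le h1.k_le with hk3 | hk4
  · rcases eq_or_lt_of_le h2.k_le with hk3' | hk4'
    · -- both d_3
      have hk3 : k = 3 := hk3.symm
      have hk3' : k' = 3 := hk3'.symm
      rcases eq_or_ne w' w with rfl | hw'w
      · rcases eq_or_ne z' z with rfl | hz'z
        · -- same sides : unique completion
          refine hne (dcp_unique_completion hP h1 h2 ?_)
          rw [h1.body_k3 hk3, h2.body_k3 hk3']
        · rcases eq_or_ne z' w' with hz'w | hz'w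
          · exact h2.w_ne_z hz'w.symm
          · exact dcp_three_covers hP (h1.a_covby_w hk3) (h1.a_covby_z hk3)
              (h2.a_covby_z hk3') (h1.w_ne_z) (Ne.symm hz'w) (Ne.symm hz'z)
      · rcases eq_or_ne w' z with rfl | hw'z
        · rcases eq_or_ne z' w with rfl | hz'w
          · -- sides swapped : unique completion
            refine hne (dcp_unique_completion hP h1 h2.symm ?_)
            rw [h1.body_k3 hk3, h2.symm.body_k3 hk3']
          · exact dcp_three_covers hP (h1.a_covby_w hk3) (h1.a_covby_z hk3)
              (h2.a_covby_z hk3') h1.w_ne_z (Ne.symm hz'w) h2.w_ne_z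
        · exact dcp_three_covers hP (h1.a_covby_w hk3) (h1.a_covby_z hk3)
            (h2.a_covby_w hk3') (h1.w_ne_z) (Ne.symm hw'w) (Ne.symm hw'z)
    · exact dcp_case34 hP hmax ⟨h1.1, hk3 ▸ h1.2.1, hk3 ▸ h1.2.2⟩ h2 hk4'
  · rcases eq_or_lt_of_le h2.k_le with hk3' | hk4'
    · exact dcp_case34 hP hmax ⟨h2.1, hk3' ▸ h2.2.1, hk3' ▸ h2.2.2⟩ h1 hk4
    · -- both at least d_4
      obtain ⟨t, m, htT, hta, htmin, hcovat, hIcctb, hmN, hmb, hmmax, hmcov,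
        hIccam, hshrink, hdiffa, hstruct, hNcard⟩ := h1.big4 hk4
      obtain ⟨t', m', htT', hta', htmin', hcovat', hIcctb', hmN', hmb', hmmax',
        hmcov', hIccam', hshrink', hdiffa', hstruct', hNcard'⟩ := h2.big4 hk4'
      rcases eq_or_ne t t' with rfl | htt'
      · rcases eq_or_ne m m' with rfl | hmm'
        · refine hne (dcp_unique_completion hP h1 h2 ?_)
          rw [← hIccam, ← hIccam']
        · exact hmax t hcovat.lt m m' hmm' ⟨k - 1, w, z, hshrink⟩
            ⟨k' - 1, w', z', hshrink'⟩
      · obtain ⟨c, hc, -, -, -, -, -⟩ := dcp_d3_complete hP hcovat hcovat'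
          (dcp_not_le_of_covBy hcovat hcovat' htt')
          (dcp_not_le_of_covBy hcovat' hcovat htt'.symm)
        exact dcp_case34 hP hmax hc h1 hk4
-- continued below

lemma dcp_uniq_max [Finite P] (hP : IsDComplete P) {a b b' : P}
    (h1 : IsDInterval a b) (h2 : IsDInterval a b') : b = b' := by
  by_contra hne
  have hBad : a ∈ {x : P | ∃ c c' : P, c ≠ c' ∧ IsDInterval x c ∧ IsDInterval x c'} :=
    ⟨b, b', hne, h1, h2⟩
  obtain ⟨a0, ha0, hmin⟩ := (wellFounded_gt (α := P)).has_min
    {x : P | ∃ c c' : P, c ≠ c' ∧ IsDInterval x c ∧ IsDInterval x c'} ⟨a, hBad⟩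
  obtain ⟨c, c', hcc', hc, hc'⟩ := ha0
  obtain ⟨k, w, z, hck⟩ := hc
  obtain ⟨k', w', z', hck'⟩ := hc'
  refine dcp_uniq_max_case hP ?_ hck hck' hcc'
  intro x hx d d' hdd' hd hd'
  exact hmin x ⟨d, d', hdd', hd, hd'⟩ hx

end DCPUniqMax
section DCPChain
variable {P : Type*} [PartialOrder P]

lemma dcp_T_le {a b : P}
    (h : Relation.ReflTransGen (fun x y : P => IsDInterval x y) a b) : a ≤ b := by
  induction h with
  | refl => exact le_rfl
  | tail _ hR ih => exact ih.trans (dcp_dint_lt hR).le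

lemma dcp_T_comp [Finite P] (hP : IsDComplete P) {a c : P}
    (hac : Relation.ReflTransGen (fun x y : P => IsDInterval x y) a c) :
    ∀ b, Relation.ReflTransGen (fun x y : P => IsDInterval x y) b c →
      a ≤ b ∨ b ≤ a := by
  induction hac with
  | refl => exact fun b hbc => Or.inr (dcp_T_le hbc)
  | @tail c' c hac' hR ih =>
    intro b hbc
    rcases Relation.ReflTransGen.cases_tail hbc with rfl | ⟨c0, hbc0, hR'⟩
    · exact Or.inl (dcp_T_le (hac'.tail hR))
    · have hc0 : c0 = c' := dcp_uniq_min hP hR' hR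
      exact ih b (hc0 ▸ hbc0)

lemma dcp_T_between [Finite P] (hP : IsDComplete P) {a c : P}
    (hac : Relation.ReflTransGen (fun x y : P => IsDInterval x y) a c) :
    ∀ b, Relation.ReflTransGen (fun x y : P => IsDInterval x y) b c → a < b →
      Relation.ReflTransGen (fun x y : P => IsDInterval x y) a b := by
  induction hac with
  | refl => exact fun b hbc hab => absurd (dcp_T_le hbc) hab.not_ge
  | @tail c' c hac' hR ih =>
    intro b hbc hab
    rcases Relation.ReflTransGen.cases_tail hbc with rfl | ⟨c0, hbc0, hR'⟩
    · exact hac'.tail hR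
    · have hc0 : c0 = c' := dcp_uniq_min hP hR' hR
      exact ih b (hc0 ▸ hbc0) hab

lemma dcp_diag_join [Finite P] (hP : IsDComplete P) {a b : P}
    (h : DiagRel a b) :
    ∃ c, Relation.ReflTransGen (fun x y : P => IsDInterval x y) a c ∧
      Relation.ReflTransGen (fun x y : P => IsDInterval x y) b c := by
  have hjoin : Equivalence (Relation.Join
      (Relation.ReflTransGen (fun x y : P => IsDInterval x y))) :=
    Relation.equivalence_join_reflTransGen (fun a b c hab hac => by
      have hbc : b = c := dcp_uniq_max hP hab hac
      exact ⟨b, Relation.ReflGen.refl, by rw [← hbc]⟩)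
  induction h with
  | rel x y hxy => exact ⟨y, Relation.ReflTransGen.single hxy,
      Relation.ReflTransGen.refl⟩
  | refl x => exact hjoin.refl x
  | symm x y _ ih => exact hjoin.symm ih
  | trans x y z _ _ ih1 ih2 => exact hjoin.trans ih1 ih2

end DCPChain

/-- In a d-complete poset, each diagonal is a chain, and every covering relation
within the diagonal (i.e. consecutive elements of the diagonal) comes from a
`d`-interval `[a, b]` (so `b = a↑`). -/
theorem diagonal_isChain {P : Type*} [PartialOrder P] [Fintype P]
    (hP : IsDComplete P) (p : P) :
    IsChain (· ≤ ·) {q : P | DiagRel p q} ∧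
    ∀ a b : P, DiagRel p a → DiagRel p b → a < b →
      (∀ x, DiagRel p x → ¬ (a < x ∧ x < b)) → IsDInterval a b := by
  constructor
  · intro q1 hq1 q2 hq2 hne
    have h12 : DiagRel q1 q2 :=
      Relation.EqvGen.trans _ _ _ (Relation.EqvGen.symm _ _ hq1) hq2
    obtain ⟨c, h1c, h2c⟩ := dcp_diag_join hP h12
    rcases dcp_T_comp hP h1c q2 h2c with h | h
    · exact Or.inl h
    · exact Or.inr h
  · intro a b hpa hpb hab hno
    have hrel : DiagRel a b :=
      Relation.EqvGen.trans _ _ _ (Relation.EqvGen.symm _ _ hpa) hpb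
    obtain ⟨c, hac, hbc⟩ := dcp_diag_join hP hrel
    have hT : Relation.ReflTransGen (fun x y : P => IsDInterval x y) a b :=
      dcp_T_between hP hac b hbc hab
    rcases Relation.ReflTransGen.cases_head hT with heq | ⟨x, haxR, hxbT⟩
    · exact absurd heq hab.ne
    · rcases eq_or_ne x b with rfl | hxb
      · exact haxR
      · have hax : a < x := dcp_dint_lt haxR
        have hxlb : x < b := lt_of_le_of_ne (dcp_T_le hxbT) hxb
        have hpx : DiagRel p x :=
          Relation.EqvGen.trans _ _ _ hpa (Relation.EqvGen.rel _ _ haxR)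
        exact absurd ⟨hax, hxlb⟩ (hno x hpx)
end
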